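/- arXiv:1602.08729 — 7 statements merged into one kernel-verified Lean document; each statement's English description precedes it below -/
import Mathlib

section
/- (Theorem 3.1(i), Fejér monotonicity of AFBA). Under the AFBA setup and stepsize condition, the sequence (z_n) is Fejér monotone with respect to zer T in the norm ‖·‖_S: for every z⋆ with 0 ∈ T z⋆ and every n ∈ ℕ, ‖z_{n+1} − z⋆‖_S ≤ ‖z_n − z⋆‖_S. -/
open scoped InnerProductSpace
open Filter Topology

lemma cs_pos {H : Type*} [NormedAddCommGroup H] [InnerProductSpace ℝ H]
    (P : H →L[ℝ] H) (hsym : ∀ x y, ⟪P x, y⟫_ℝ = ⟪x, P y⟫_ℝ)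
    (hpos : ∀ x, (0:ℝ) ≤ ⟪P x, x⟫_ℝ) (x y : H) :
    ⟪P x, y⟫_ℝ ^ 2 ≤ ⟪P x, x⟫_ℝ * ⟪P y, y⟫_ℝ := by
  have h : ∀ t : ℝ, 0 ≤ ⟪P x, x⟫_ℝ * (t * t) + (2 * ⟪P x, y⟫_ℝ) * t + ⟪P y, y⟫_ℝ := by
    intro t
    have h0 := hpos (t • x + y)
    have hexp : ⟪P (t • x + y), t • x + y⟫_ℝ
        = ⟪P x, x⟫_ℝ * (t * t) + (2 * ⟪P x, y⟫_ℝ) * t + ⟪P y, y⟫_ℝ := by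
      have h1 : ⟪P y, x⟫_ℝ = ⟪P x, y⟫_ℝ := by
        rw [hsym y x, real_inner_comm]
      simp only [map_add, map_smul, inner_add_left, inner_add_right,
        real_inner_smul_left, real_inner_smul_right, h1]
      ring
    linarith [hexp ▸ h0]
  have hd := discrim_le_zero h
  rw [discrim] at hd
  nlinarith [hd]



open scoped InnerProductSpace
open Filter Topology

/-- A set-valued operator is monotone. -/
def IsMonotoneSet {H : Type*} [NormedAddCommGroup H] [InnerProductSpace ℝ H]
    (A : H → Set H) : Prop :=
  ∀ x y u v, u ∈ A x → v ∈ A y → (0:ℝ) ≤ ⟪x - y, u - v⟫_ℝ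

/-- A set-valued operator is maximally monotone: it is monotone and its graph is not
properly contained in the graph of any monotone operator. -/
def IsMaxMonotone {H : Type*} [NormedAddCommGroup H] [InnerProductSpace ℝ H]
    (A : H → Set H) : Prop :=
  IsMonotoneSet A ∧ ∀ B : H → Set H, IsMonotoneSet B → (∀ x, A x ⊆ B x) → ∀ x, B x = A x

set_option maxHeartbeats 1000000 in
/-- Theorem 3.1(i): Fejér monotonicity of AFBA with respect to `zer T` in the `S`-norm. -/
theorem afba_fejer_monotone
    {H : Type*} [NormedAddCommGroup H] [InnerProductSpace ℝ H] [CompleteSpace H]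
    (A : H → Set H) (hA : IsMaxMonotone A)
    (M : H →L[ℝ] H) (hM : ∀ x, (0:ℝ) ≤ ⟪M x, x⟫_ℝ)
    (P : H →L[ℝ] H) (ρ : ℝ) (hρ : 0 < ρ)
    (hPsym : ∀ x y, ⟪P x, y⟫_ℝ = ⟪x, P y⟫_ℝ)
    (hPpos : ∀ x, ρ * ‖x‖ ^ 2 ≤ ⟪P x, x⟫_ℝ)
    (Pinv : H →L[ℝ] H) (hPinv₁ : ∀ x, P (Pinv x) = x) (hPinv₂ : ∀ x, Pinv (P x) = x)
    (C : H → H) (β : ℝ) (hβ : 1/4 < β)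
    (hC : ∀ z z', β * ⟪C z - C z', Pinv (C z - C z')⟫_ℝ ≤ ⟪C z - C z', z - z'⟫_ℝ)
    (K : H →L[ℝ] H) (hK : ∀ x y, ⟪K x, y⟫_ℝ = - ⟪x, K y⟫_ℝ)
    (S : H →L[ℝ] H) (σ : ℝ) (hσ : 0 < σ)
    (hSsym : ∀ x y, ⟪S x, y⟫_ℝ = ⟪x, S y⟫_ℝ)
    (hSpos : ∀ x, σ * ‖x‖ ^ 2 ≤ ⟪S x, x⟫_ℝ)
    (Sinv : H →L[ℝ] H) (hSinv₁ : ∀ x, S (Sinv x) = x) (hSinv₂ : ∀ x, Sinv (S x) = x)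
    (hzer : ∃ w, ∃ u ∈ A w, u + M w + C w = 0)
    (z zbar : ℕ → H) (lam α : ℕ → ℝ) (δ : ℝ)
    (hδdef : δ = 2 - 1/(2*β)) (hδ : 0 < δ)
    (hres : ∀ n, (P + K) (z n) - M (z n) - C (z n) - (P + K) (zbar n) ∈ A (zbar n))
    (hα : ∀ n, zbar n - z n ≠ 0 →
      α n = lam n * ⟪zbar n - z n, P (zbar n - z n)⟫_ℝ /
        ⟪((P + K) + ContinuousLinearMap.adjoint M) (zbar n - z n),
          Sinv (((P + K) + ContinuousLinearMap.adjoint M) (zbar n - z n))⟫_ℝ)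
    (hα0 : ∀ n, zbar n - z n = 0 → α n = 0)
    (hupd : ∀ n, z (n+1) = z n +
      α n • Sinv (((P + K) + ContinuousLinearMap.adjoint M) (zbar n - z n)))
    (hlam : ∀ n, lam n ∈ Set.Icc (0:ℝ) δ)
    (hliminf : 0 < Filter.liminf (fun n => lam n * (δ - lam n)) Filter.atTop) :
    ∀ zstar : H, (∃ u ∈ A zstar, u + M zstar + C zstar = 0) → ∀ n,
      ⟪z (n+1) - zstar, S (z (n+1) - zstar)⟫_ℝ ≤ ⟪z n - zstar, S (z n - zstar)⟫_ℝ := by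
  rintro zstar ⟨ustar, hustar, hustar0⟩ n
  have hβ0 : (0:ℝ) < β := lt_trans (by norm_num) hβ
  set zt : H := zbar n - z n with hzt
  set D : H := ((P + K) + ContinuousLinearMap.adjoint M) zt with hD
  set e : H := z n - zstar with he
  set c : H := C (z n) - C zstar with hc
  set a : ℝ := ⟪P zt, zt⟫_ℝ with ha
  set b : ℝ := ⟪zt, c⟫_ℝ with hb
  set d : ℝ := ⟪c, Pinv c⟫_ℝ with hd
  set q : ℝ := ⟪Sinv D, D⟫_ℝ with hq
  clear_value zt D e c a b d q
  have hPpos' : ∀ x, (0:ℝ) ≤ ⟪P x, x⟫_ℝ := fun x =>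
    le_trans (mul_nonneg hρ.le (sq_nonneg _)) (hPpos x)
  have ha0 : (0:ℝ) ≤ a := by rw [ha]; exact hPpos' zt
  have hd0 : (0:ℝ) ≤ d := by
    rw [hd]
    have h := hPpos' (Pinv c)
    rwa [hPinv₁] at h
  -- Cauchy-Schwarz in the P-metric : b ^ 2 ≤ a * d
  have hcs : b ^ 2 ≤ a * d := by
    have h := cs_pos P hPsym hPpos' zt (Pinv c)
    rw [hPinv₁] at h
    have h1 : ⟪P zt, Pinv c⟫_ℝ = b := by rw [hPsym, hPinv₁, ← hb]
    rw [h1, ← ha, ← hd] at h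
    exact h
  -- skew part vanishes on the diagonal
  have hKzt : ⟪zt, K zt⟫_ℝ = 0 := by
    have h := hK zt zt
    have h2 : ⟪K zt, zt⟫_ℝ = ⟪zt, K zt⟫_ℝ := real_inner_comm _ _
    linarith [h, h2]
  have hPKzt : ⟪zt, (P + K) zt⟫_ℝ = a := by
    rw [ContinuousLinearMap.add_apply, inner_add_right, hKzt, add_zero,
      real_inner_comm, ← ha]
  have hDe : ⟪D, e⟫_ℝ = ⟪e, (P + K) zt⟫_ℝ + ⟪zt, M e⟫_ℝ := by
    rw [hD, ContinuousLinearMap.add_apply, inner_add_left,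
      ContinuousLinearMap.adjoint_inner_left, real_inner_comm ((P + K) zt) e]
  -- monotonicity of A at (zbar n, zstar)
  have hustar' : ustar = 0 - M zstar - C zstar := by rw [← hustar0]; abel
  have hdiff : (P + K) (z n) - M (z n) - C (z n) - (P + K) (zbar n) - ustar
      = -((P + K) zt) - M e - c := by
    rw [hustar', hzt, he, hc, map_sub (P + K), map_sub M]
    abel
  have hmono := hA.1 (zbar n) zstar _ _ (hres n) hustar
  have hsplit : zbar n - zstar = zt + e := by rw [hzt, he]; abel
  rw [hdiff, hsplit] at hmono
  have hexp : ⟪zt + e, -((P + K) zt) - M e - c⟫_ℝ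
      = -(⟪zt, (P + K) zt⟫_ℝ) - ⟪e, (P + K) zt⟫_ℝ - ⟪zt, M e⟫_ℝ
        - ⟪e, M e⟫_ℝ - ⟪zt, c⟫_ℝ - ⟪e, c⟫_ℝ := by
    simp only [inner_add_left, inner_sub_right, inner_neg_right]
    ring
  rw [hexp, hPKzt, ← hb] at hmono
  have hMe : (0:ℝ) ≤ ⟪e, M e⟫_ℝ := by rw [real_inner_comm]; exact hM e
  have hCe : β * d ≤ ⟪c, e⟫_ℝ := by
    have h := hC (z n) zstar
    rw [← hc, ← he, ← hd] at h
    exact h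
  have hec : ⟪e, c⟫_ℝ = ⟪c, e⟫_ℝ := real_inner_comm _ _
  have hkey : ⟪D, e⟫_ℝ ≤ -a - b - β * d := by
    linarith [hmono, hDe, hMe, hCe, hec]
  -- Young-type bound : -a - b - β*d ≤ -(δ/2)*a
  have h4β : (0:ℝ) < 4 * β := by linarith
  have hgoal' : (0:ℝ) ≤ 4 * β * b + a + 4 * β ^ 2 * d := by
    rcases eq_or_lt_of_le ha0 with h | h
    · have hb2 : b ^ 2 = 0 := le_antisymm (by nlinarith [hcs]) (sq_nonneg b)
      have hb0 : b = 0 := by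
        have := pow_eq_zero_iff (n := 2) (by norm_num) |>.mp hb2
        exact this
      rw [hb0, ← h]
      have : (0:ℝ) ≤ 4 * β ^ 2 * d := mul_nonneg (by positivity) hd0
      linarith
    · nlinarith [sq_nonneg (a + 2 * β * b), hcs, h, hd0, hβ0]
  have hδ2 : δ / 2 = 1 - 1 / (4 * β) := by
    rw [hδdef]; field_simp; ring
  have hfrac : -b - β * d ≤ a / (4 * β) := by
    rw [le_div_iff₀ h4β]
    nlinarith [hgoal']
  have hDe2 : ⟪D, e⟫_ℝ ≤ -(δ / 2) * a := by
    have hval : -(δ / 2) * a = -a + a / (4 * β) := by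
      rw [hδ2]; field_simp; ring
    rw [hval]
    linarith [hkey, hfrac]
  -- expansion of the S-norm after the update
  have hznext : z (n + 1) - zstar = e + α n • Sinv D := by
    rw [hupd n, hD, hzt, he]; abel
  have hexpand : ⟪z (n + 1) - zstar, S (z (n + 1) - zstar)⟫_ℝ
      = ⟪e, S e⟫_ℝ + 2 * α n * ⟪D, e⟫_ℝ + (α n) ^ 2 * q := by
    rw [hznext]
    have hS : S (e + α n • Sinv D) = S e + α n • D := by
      rw [map_add, map_smul, hSinv₁]
    rw [hS]
    simp only [inner_add_left, inner_add_right, real_inner_smul_left,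
      real_inner_smul_right]
    have h1 : ⟪Sinv D, S e⟫_ℝ = ⟪D, e⟫_ℝ := by
      rw [← hSsym (Sinv D) e, hSinv₁]
    have h2 : ⟪e, D⟫_ℝ = ⟪D, e⟫_ℝ := real_inner_comm _ _
    rw [h1, h2, hq]
    ring
  -- the increment is nonpositive
  have hfinal : 2 * α n * ⟪D, e⟫_ℝ + (α n) ^ 2 * q ≤ 0 := by
    by_cases hz : zt = 0
    · rw [hα0 n (hzt.symm.trans hz)]
      norm_num
    · have hzne : zbar n - z n ≠ 0 := fun h0 => hz (by rw [hzt, h0])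
      have hn : 0 < ‖zt‖ := norm_pos_iff.mpr hz
      have hapos : 0 < a := by
        rw [ha]
        have h := hPpos zt
        have h2 := mul_pos hρ (pow_pos hn 2)
        linarith
      have hDzt : 0 < ⟪D, zt⟫_ℝ := by
        rw [hD, ContinuousLinearMap.add_apply, inner_add_left,
          ContinuousLinearMap.adjoint_inner_left]
        have hM' : (0:ℝ) ≤ ⟪zt, M zt⟫_ℝ := by rw [real_inner_comm]; exact hM zt
        have hPK : ⟪(P + K) zt, zt⟫_ℝ = a := by
          rw [real_inner_comm, hPKzt]
        linarith [hPK, hM', hapos]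
      have hDne : D ≠ 0 := by
        intro h0
        rw [h0] at hDzt
        simp at hDzt
      have hSinvDne : Sinv D ≠ 0 := by
        intro h0
        have h := hSinv₁ D
        rw [h0, map_zero] at h
        exact hDne h.symm
      have hqpos : 0 < q := by
        have h := hSpos (Sinv D)
        rw [hSinv₁] at h
        have hn2 : 0 < ‖Sinv D‖ := norm_pos_iff.mpr hSinvDne
        have h2 := mul_pos hσ (pow_pos hn2 2)
        rw [hq, real_inner_comm]
        linarith
      have hαval : α n = lam n * a / q := by
        have h := hα n hzne
        rw [← hzt, ← hD] at h
        have hip : ⟪zt, P zt⟫_ℝ = a := (real_inner_comm _ _).trans ha.symm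
        have hiq : ⟪D, Sinv D⟫_ℝ = q := (real_inner_comm _ _).trans hq.symm
        rw [h, hip, hiq]
      obtain ⟨hl0, hlδ⟩ := hlam n
      have hαnn : 0 ≤ α n := by
        rw [hαval]
        exact div_nonneg (mul_nonneg hl0 ha0) hqpos.le
      have hαq : α n * q = lam n * a := by
        rw [hαval, div_mul_cancel₀ _ (ne_of_gt hqpos)]
      have h1 : 2 * α n * ⟪D, e⟫_ℝ ≤ 2 * α n * (-(δ / 2) * a) :=
        mul_le_mul_of_nonneg_left hDe2 (by linarith)
      have h2 : (α n) ^ 2 * q = α n * (lam n * a) := by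
        rw [← hαq]; ring
      have h3 : α n * (lam n * a) ≤ α n * (δ * a) :=
        mul_le_mul_of_nonneg_left (by nlinarith [hlδ, ha0]) hαnn
      nlinarith [h1, h2, h3]
  rw [hexpand]
  linarith [hfinal]
end

section
/- (Theorem 3.1(ii)). Under the AFBA setup and stepsize condition, the sequence (z̃_n) converges strongly to zero, i.e. ‖z̃_n‖ → 0 as n → ∞. -/
open scoped InnerProductSpace
open Filter Topology

/-- Auxiliary real-sequence lemma: a nonnegative "Lyapunov" sequence with per-step decrease
`lamδ n / c * a n` forces `a n → 0` when `liminf lamδ > 0`. -/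
lemma afba_aux_seq (D a lamδ : ℕ → ℝ) (c : ℝ) (hc : 0 < c)
    (hD0 : ∀ n, 0 ≤ D n) (ha0 : ∀ n, 0 ≤ a n) (hl0 : ∀ n, 0 ≤ lamδ n)
    (hstep : ∀ n, D (n+1) + lamδ n / c * a n ≤ D n)
    (hlim : 0 < Filter.liminf lamδ Filter.atTop) :
    Tendsto a atTop (𝓝 0) := by
  have hanti : Antitone D := antitone_nat_of_succ_le fun n => by
    nlinarith [mul_nonneg (div_nonneg (hl0 n) hc.le) (ha0 n), hstep n]
  have hbdd : BddBelow (Set.range D) := ⟨0, by rintro x ⟨n, rfl⟩; exact hD0 n⟩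
  have hDlim := tendsto_atTop_ciInf hanti hbdd
  have hgap : Tendsto (fun n => D n - D (n+1)) atTop (𝓝 0) := by
    have h2 : Tendsto (fun n => D (n+1)) atTop (𝓝 (⨅ n, D n)) :=
      hDlim.comp (tendsto_add_atTop_nat 1)
    simpa using hDlim.sub h2
  set L := Filter.liminf lamδ Filter.atTop with hL
  have hev : ∀ᶠ n in atTop, L/2 < lamδ n :=
    Filter.eventually_lt_of_lt_liminf (by linarith)
      (Filter.isBoundedUnder_of ⟨0, fun n => hl0 n⟩)
  apply squeeze_zero' (g := fun n => 2*c/L * (D n - D (n+1)))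
    (Filter.Eventually.of_forall ha0) ?_ ?_
  · filter_upwards [hev] with n hn
    have h1 := hstep n
    rw [div_mul_eq_mul_div] at h1
    have h1'' : lamδ n * a n / c ≤ D n - D (n+1) := by linarith
    rw [div_le_iff₀ hc] at h1''
    have h1' : lamδ n * a n ≤ c * (D n - D (n+1)) := by linarith
    have hg0 : 0 ≤ D n - D (n+1) := by nlinarith [mul_nonneg (hl0 n) (ha0 n)]
    rw [div_mul_eq_mul_div, le_div_iff₀ hlim]
    nlinarith [mul_le_mul_of_nonneg_right (by linarith : L ≤ 2 * lamδ n) (ha0 n)]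
  · have := hgap.const_mul (2*c/L)
    simpa using this

/-- Young-type inequality with respect to the `P`-norm. -/
lemma afba_young {H : Type*} [NormedAddCommGroup H] [InnerProductSpace ℝ H]
    (P Pinv : H →L[ℝ] H)
    (hPsym : ∀ x y, ⟪P x, y⟫_ℝ = ⟪x, P y⟫_ℝ)
    (hPpos : ∀ x, (0:ℝ) ≤ ⟪P x, x⟫_ℝ)
    (hPinv₁ : ∀ x, P (Pinv x) = x)
    (β : ℝ) (hβ0 : 0 < β) (t c : H) :
    -⟪t, c⟫_ℝ ≤ 1/(4*β) * ⟪t, P t⟫_ℝ + β * ⟪c, Pinv c⟫_ℝ := by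
  have hv := hPpos (t + (2*β) • Pinv c)
  have h1 : ⟪P t, Pinv c⟫_ℝ = ⟪t, c⟫_ℝ := by rw [hPsym, hPinv₁]
  have hexp : ⟪P (t + (2*β) • Pinv c), t + (2*β) • Pinv c⟫_ℝ
      = ⟪t, P t⟫_ℝ + (4*β) * ⟪t, c⟫_ℝ + (4*β^2) * ⟪c, Pinv c⟫_ℝ := by
    rw [map_add, map_smul, hPinv₁]
    simp only [inner_add_left, inner_add_right, real_inner_smul_left, real_inner_smul_right]
    rw [h1, real_inner_comm (P t) t, real_inner_comm c t]
    ring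
  rw [hexp] at hv
  have h4β : (0:ℝ) < 4*β := by linarith
  have heq : 1/(4*β) * ⟪t, P t⟫_ℝ + β * ⟪c, Pinv c⟫_ℝ
      = (⟪t, P t⟫_ℝ + 4*β^2 * ⟪c, Pinv c⟫_ℝ) / (4*β) := by
    field_simp
  rw [heq, le_div_iff₀ h4β]
  nlinarith

/-- The key AFBA inequality: `⟪e, (H₀ + M*) t⟫ ≤ -(δ/2) ‖t‖_P²`. -/
lemma afba_key {H : Type*} [NormedAddCommGroup H] [InnerProductSpace ℝ H] [CompleteSpace H]
    (P K M Pinv : H →L[ℝ] H)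
    (hPsym : ∀ x y, ⟪P x, y⟫_ℝ = ⟪x, P y⟫_ℝ)
    (hPpos : ∀ x, (0:ℝ) ≤ ⟪P x, x⟫_ℝ)
    (hPinv₁ : ∀ x, P (Pinv x) = x)
    (hM : ∀ x, (0:ℝ) ≤ ⟪M x, x⟫_ℝ)
    (hK : ∀ x y, ⟪K x, y⟫_ℝ = - ⟪x, K y⟫_ℝ)
    (β δ : ℝ) (hβ0 : 0 < β) (hδ2 : δ/2 = 1 - 1/(4*β))
    (e t c : H)
    (hmono : (0:ℝ) ≤ ⟪e + t, -((P+K) t) - M e - c⟫_ℝ)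
    (hcoco : β * ⟪c, Pinv c⟫_ℝ ≤ ⟪c, e⟫_ℝ) :
    ⟪e, ((P + K) + ContinuousLinearMap.adjoint M) t⟫_ℝ ≤ -(δ/2) * ⟪t, P t⟫_ℝ := by
  have hexp : ⟪e + t, -((P+K) t) - M e - c⟫_ℝ
      = -⟪e, (P+K) t⟫_ℝ - ⟪t, (P+K) t⟫_ℝ - ⟪e, M e⟫_ℝ - ⟪t, M e⟫_ℝ
        - ⟪e, c⟫_ℝ - ⟪t, c⟫_ℝ := by
    simp only [inner_add_left, inner_sub_right, inner_neg_right]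
    ring
  rw [hexp] at hmono
  have hMe : (0:ℝ) ≤ ⟪e, M e⟫_ℝ := by rw [real_inner_comm]; exact hM e
  have hadj : ⟪t, M e⟫_ℝ = ⟪e, ContinuousLinearMap.adjoint M t⟫_ℝ := by
    rw [ContinuousLinearMap.adjoint_inner_right, real_inner_comm]
  have hKt : ⟪t, (P+K) t⟫_ℝ = ⟪t, P t⟫_ℝ := by
    have h1 := hK t t
    have h2 := real_inner_comm t (K t)
    simp only [ContinuousLinearMap.add_apply, inner_add_right]
    linarith
  have hT0 : ⟪e, ((P + K) + ContinuousLinearMap.adjoint M) t⟫_ℝ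
      = ⟪e, (P+K) t⟫_ℝ + ⟪e, ContinuousLinearMap.adjoint M t⟫_ℝ := by
    simp only [ContinuousLinearMap.add_apply, inner_add_right]
  have hyoung := afba_young P Pinv hPsym hPpos hPinv₁ β hβ0 t c
  have hce : ⟪e, c⟫_ℝ = ⟪c, e⟫_ℝ := real_inner_comm c e
  have hcoef : -(δ/2) * ⟪t, P t⟫_ℝ = (1/(4*β) - 1) * ⟪t, P t⟫_ℝ := by
    rw [hδ2]; ring
  rw [hT0, hcoef]
  linarith

set_option maxHeartbeats 2000000 in
/-- Theorem 3.1(ii): the residual sequence `z̃ₙ = z̄ₙ - zₙ` converges strongly to zero. -/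
theorem afba_residual_tendsto_zero
    {H : Type*} [NormedAddCommGroup H] [InnerProductSpace ℝ H] [CompleteSpace H]
    (A : H → Set H) (hA : IsMaxMonotone A)
    (M : H →L[ℝ] H) (hM : ∀ x, (0:ℝ) ≤ ⟪M x, x⟫_ℝ)
    (P : H →L[ℝ] H) (ρ : ℝ) (hρ : 0 < ρ)
    (hPsym : ∀ x y, ⟪P x, y⟫_ℝ = ⟪x, P y⟫_ℝ)
    (hPpos : ∀ x, ρ * ‖x‖ ^ 2 ≤ ⟪P x, x⟫_ℝ)
    (Pinv : H →L[ℝ] H) (hPinv₁ : ∀ x, P (Pinv x) = x) (hPinv₂ : ∀ x, Pinv (P x) = x)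
    (C : H → H) (β : ℝ) (hβ : 1/4 < β)
    (hC : ∀ z z', β * ⟪C z - C z', Pinv (C z - C z')⟫_ℝ ≤ ⟪C z - C z', z - z'⟫_ℝ)
    (K : H →L[ℝ] H) (hK : ∀ x y, ⟪K x, y⟫_ℝ = - ⟪x, K y⟫_ℝ)
    (S : H →L[ℝ] H) (σ : ℝ) (hσ : 0 < σ)
    (hSsym : ∀ x y, ⟪S x, y⟫_ℝ = ⟪x, S y⟫_ℝ)
    (hSpos : ∀ x, σ * ‖x‖ ^ 2 ≤ ⟪S x, x⟫_ℝ)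
    (Sinv : H →L[ℝ] H) (hSinv₁ : ∀ x, S (Sinv x) = x) (hSinv₂ : ∀ x, Sinv (S x) = x)
    (hzer : ∃ w, ∃ u ∈ A w, u + M w + C w = 0)
    (z zbar : ℕ → H) (lam α : ℕ → ℝ) (δ : ℝ)
    (hδdef : δ = 2 - 1/(2*β)) (hδ : 0 < δ)
    (hres : ∀ n, (P + K) (z n) - M (z n) - C (z n) - (P + K) (zbar n) ∈ A (zbar n))
    (hα : ∀ n, zbar n - z n ≠ 0 →
      α n = lam n * ⟪zbar n - z n, P (zbar n - z n)⟫_ℝ /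
        ⟪((P + K) + ContinuousLinearMap.adjoint M) (zbar n - z n),
          Sinv (((P + K) + ContinuousLinearMap.adjoint M) (zbar n - z n))⟫_ℝ)
    (hα0 : ∀ n, zbar n - z n = 0 → α n = 0)
    (hupd : ∀ n, z (n+1) = z n +
      α n • Sinv (((P + K) + ContinuousLinearMap.adjoint M) (zbar n - z n)))
    (hlam : ∀ n, lam n ∈ Set.Icc (0:ℝ) δ)
    (hliminf : 0 < Filter.liminf (fun n => lam n * (δ - lam n)) Filter.atTop) :
    Filter.Tendsto (fun n => zbar n - z n) Filter.atTop (nhds 0) := by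
  obtain ⟨zs, u, huA, hueq⟩ := hzer
  have hβ0 : (0:ℝ) < β := by linarith
  have hu : u = -(M zs) - C zs := by
    have h : u - (-(M zs) - C zs) = u + M zs + C zs := by abel
    rw [← sub_eq_zero, h, hueq]
  have hδ2 : δ/2 = 1 - 1/(4*β) := by rw [hδdef]; field_simp; ring
  set T0 : H →L[ℝ] H := (P + K) + ContinuousLinearMap.adjoint M with hT0def
  set a2 : ℕ → ℝ := fun n => ⟪zbar n - z n, P (zbar n - z n)⟫_ℝ with ha2def
  set Dse : ℕ → ℝ := fun n => ⟪z n - zs, S (z n - zs)⟫_ℝ with hDdef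
  set q : ℕ → ℝ := fun n => ⟪T0 (zbar n - z n), Sinv (T0 (zbar n - z n))⟫_ℝ with hqdef
  have hPpos' : ∀ x : H, (0:ℝ) ≤ ⟪P x, x⟫_ℝ := fun x =>
    le_trans (by positivity) (hPpos x)
  have ha2n : ∀ m, a2 m = ⟪zbar m - z m, P (zbar m - z m)⟫_ℝ := fun _ => rfl
  have hDn : ∀ m, Dse m = ⟪z m - zs, S (z m - zs)⟫_ℝ := fun _ => rfl
  have hqn : ∀ m, q m = ⟪T0 (zbar m - z m), Sinv (T0 (zbar m - z m))⟫_ℝ := fun _ => rfl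
  clear_value T0 a2 Dse q
  -- key inequality
  have hkey : ∀ n, ⟪z n - zs, T0 (zbar n - z n)⟫_ℝ ≤ -(δ/2) * a2 n := by
    intro n
    rw [ha2n n, hT0def]
    have mono := hA.1 (zbar n) zs _ u (hres n) huA
    have hvec : ((P + K) (z n) - M (z n) - C (z n) - (P + K) (zbar n)) - u
        = -((P+K) (zbar n - z n)) - M (z n - zs) - (C (z n) - C zs) := by
      rw [hu]; simp only [map_sub]; abel
    have hvec2 : zbar n - zs = (z n - zs) + (zbar n - z n) := by abel
    rw [hvec, hvec2] at mono
    have hcoco := hC (z n) zs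
    exact afba_key P K M Pinv hPsym hPpos' hPinv₁ hM hK β δ hβ0 hδ2
      (z n - zs) (zbar n - z n) (C (z n) - C zs) mono hcoco
  -- basic positivity facts
  have ha2ρ : ∀ n, ρ * ‖zbar n - z n‖^2 ≤ a2 n := by
    intro n
    rw [ha2n n]
    simpa [real_inner_comm] using hPpos (zbar n - z n)
  have ha20 : ∀ n, 0 ≤ a2 n := fun n => le_trans (by positivity) (ha2ρ n)
  have hD0 : ∀ n, 0 ≤ Dse n := by
    intro n
    rw [hDn n]
    have := hSpos (z n - zs)
    have h2 : ⟪z n - zs, S (z n - zs)⟫_ℝ = ⟪S (z n - zs), z n - zs⟫_ℝ := real_inner_comm _ _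
    rw [h2]
    exact le_trans (by positivity) this
  have hq0 : ∀ n, 0 ≤ q n := by
    intro n
    rw [hqn n]
    have h := hSpos (Sinv (T0 (zbar n - z n)))
    have h2 : ⟪T0 (zbar n - z n), Sinv (T0 (zbar n - z n))⟫_ℝ
        = ⟪S (Sinv (T0 (zbar n - z n))), Sinv (T0 (zbar n - z n))⟫_ℝ := by rw [hSinv₁]
    rw [h2]
    exact le_trans (by positivity) h
  -- q is positive when the residual is nonzero
  have hqpos : ∀ n, zbar n - z n ≠ 0 → 0 < q n := by
    intro n hn
    have htp : 0 < ‖zbar n - z n‖ := norm_pos_iff.mpr hn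
    have hw0 : T0 (zbar n - z n) ≠ 0 := by
      intro h0
      have h1 : ⟪zbar n - z n, T0 (zbar n - z n)⟫_ℝ = 0 := by rw [h0, inner_zero_right]
      have h2 : ⟪zbar n - z n, T0 (zbar n - z n)⟫_ℝ
          = ⟪zbar n - z n, (P+K) (zbar n - z n)⟫_ℝ
            + ⟪zbar n - z n, ContinuousLinearMap.adjoint M (zbar n - z n)⟫_ℝ := by
        rw [hT0def]
        simp only [ContinuousLinearMap.add_apply, inner_add_right]
      have h3 : ⟪zbar n - z n, (P+K) (zbar n - z n)⟫_ℝ = a2 n := by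
        have hk1 := hK (zbar n - z n) (zbar n - z n)
        have hk2 := real_inner_comm (zbar n - z n) (K (zbar n - z n))
        rw [ha2n n]
        simp only [ContinuousLinearMap.add_apply, inner_add_right]
        linarith
      have h4 : (0:ℝ) ≤ ⟪zbar n - z n, ContinuousLinearMap.adjoint M (zbar n - z n)⟫_ℝ := by
        rw [ContinuousLinearMap.adjoint_inner_right]
        exact hM _
      nlinarith [ha2ρ n, mul_pos hρ (mul_pos htp htp)]
    have hs0 : Sinv (T0 (zbar n - z n)) ≠ 0 := fun h =>
      hw0 (by rw [← hSinv₁ (T0 (zbar n - z n)), h, map_zero])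
    have h := hSpos (Sinv (T0 (zbar n - z n)))
    have h2 : q n = ⟪S (Sinv (T0 (zbar n - z n))), Sinv (T0 (zbar n - z n))⟫_ℝ := by
      rw [hqn n, hSinv₁]
    rw [h2]
    have hns : 0 < ‖Sinv (T0 (zbar n - z n))‖ := norm_pos_iff.mpr hs0
    calc (0:ℝ) < σ * ‖Sinv (T0 (zbar n - z n))‖^2 := by positivity
    _ ≤ _ := h
  -- bound q by a constant times a2
  obtain ⟨c, hc, hqle⟩ : ∃ c : ℝ, 0 < c ∧ ∀ n, q n ≤ c * a2 n := by
    refine ⟨‖Sinv‖ * ‖T0‖^2 / ρ + 1, ?_, ?_⟩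
    · have h0 : (0:ℝ) ≤ ‖Sinv‖ * ‖T0‖^2 / ρ := div_nonneg (by positivity) hρ.le
      linarith
    · intro n
      have ht2 : ‖zbar n - z n‖^2 ≤ a2 n / ρ := by
        rw [le_div_iff₀ hρ]; nlinarith [ha2ρ n]
      have h1 : q n ≤ ‖T0 (zbar n - z n)‖ * ‖Sinv (T0 (zbar n - z n))‖ := by
        rw [hqn n]; exact real_inner_le_norm _ _
      have h2 : ‖Sinv (T0 (zbar n - z n))‖ ≤ ‖Sinv‖ * ‖T0 (zbar n - z n)‖ :=
        Sinv.le_opNorm _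
      have h3 : ‖T0 (zbar n - z n)‖ ≤ ‖T0‖ * ‖zbar n - z n‖ := T0.le_opNorm _
      calc q n ≤ ‖T0 (zbar n - z n)‖ * ‖Sinv (T0 (zbar n - z n))‖ := h1
        _ ≤ ‖T0 (zbar n - z n)‖ * (‖Sinv‖ * ‖T0 (zbar n - z n)‖) :=
            mul_le_mul_of_nonneg_left h2 (norm_nonneg _)
        _ = ‖Sinv‖ * (‖T0 (zbar n - z n)‖ * ‖T0 (zbar n - z n)‖) := by ring
        _ ≤ ‖Sinv‖ * ((‖T0‖ * ‖zbar n - z n‖) * (‖T0‖ * ‖zbar n - z n‖)) :=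
            mul_le_mul_of_nonneg_left
              (mul_le_mul h3 h3 (norm_nonneg _) (by positivity)) (norm_nonneg _)
        _ = ‖Sinv‖ * ‖T0‖^2 * ‖zbar n - z n‖^2 := by ring
        _ ≤ ‖Sinv‖ * ‖T0‖^2 * (a2 n / ρ) :=
            mul_le_mul_of_nonneg_left ht2 (by positivity)
        _ = ‖Sinv‖ * ‖T0‖^2 / ρ * a2 n := by ring
        _ ≤ (‖Sinv‖ * ‖T0‖^2 / ρ + 1) * a2 n := by nlinarith [ha20 n]
  -- per-step descent
  have hstep : ∀ n, Dse (n+1) + lam n * (δ - lam n) / c * a2 n ≤ Dse n := by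
    intro n
    have hrec : Dse (n+1) = Dse n + 2 * α n * ⟪z n - zs, T0 (zbar n - z n)⟫_ℝ
        + (α n)^2 * q n := by
      rw [hDn (n+1), hDn n, hqn n]
      rw [hupd n]
      have hz : (z n + α n • Sinv (T0 (zbar n - z n))) - zs
          = (z n - zs) + α n • Sinv (T0 (zbar n - z n)) := by abel
      rw [hz, map_add, map_smul]
      have e1 : ⟪Sinv (T0 (zbar n - z n)), S (z n - zs)⟫_ℝ
          = ⟪z n - zs, T0 (zbar n - z n)⟫_ℝ := by
        rw [← hSsym, hSinv₁, real_inner_comm]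
      have e2 : ⟪Sinv (T0 (zbar n - z n)), T0 (zbar n - z n)⟫_ℝ
          = ⟪T0 (zbar n - z n), Sinv (T0 (zbar n - z n))⟫_ℝ := real_inner_comm _ _
      simp only [inner_add_left, inner_add_right, real_inner_smul_left, real_inner_smul_right,
        hSinv₁]
      rw [e1, e2]
      ring
    rcases eq_or_ne (zbar n - z n) 0 with h0 | h0
    · have hα' := hα0 n h0
      have ha2z : a2 n = 0 := by rw [ha2n n, h0]; simp
      rw [hrec, hα', ha2z]
      ring_nf
      exact le_refl _
    · have hα' := hα n h0
      have hα'' : α n = lam n * a2 n / q n := by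
        rw [ha2n n, hqn n]; exact hα n h0
      have hqpos' := hqpos n h0
      have hqne : q n ≠ 0 := ne_of_gt hqpos'
      have hcne : c ≠ 0 := ne_of_gt hc
      have hl := hlam n
      have hl0 : 0 ≤ lam n := hl.1
      have hlδ : lam n ≤ δ := hl.2
      have hip := hkey n
      have hmain : 2 * α n * ⟪z n - zs, T0 (zbar n - z n)⟫_ℝ + (α n)^2 * q n
          + lam n * (δ - lam n) / c * a2 n ≤ 0 := by
        rw [hα'']
        have expand : 2 * (lam n * a2 n / q n) * ⟪z n - zs, T0 (zbar n - z n)⟫_ℝ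
            + (lam n * a2 n / q n)^2 * q n + lam n * (δ - lam n) / c * a2 n
            = (2 * lam n * a2 n * ⟪z n - zs, T0 (zbar n - z n)⟫_ℝ * c
               + lam n^2 * a2 n^2 * c + (lam n * (δ - lam n)) * a2 n * q n) / (q n * c) := by
          field_simp
        rw [expand]
        apply div_nonpos_of_nonpos_of_nonneg
        · nlinarith [mul_le_mul_of_nonneg_left hip
              (mul_nonneg (mul_nonneg (by linarith : (0:ℝ) ≤ 2 * lam n) (ha20 n)) hc.le),
            mul_le_mul_of_nonneg_left (hqle n)
              (mul_nonneg (mul_nonneg hl0 (by linarith : (0:ℝ) ≤ δ - lam n)) (ha20 n)),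
            ha20 n]
        · positivity
      linarith [hrec, hmain]
  -- conclude
  have ha2to : Tendsto a2 atTop (𝓝 0) :=
    afba_aux_seq Dse a2 (fun n => lam n * (δ - lam n)) c hc hD0 ha20
      (fun n => mul_nonneg (hlam n).1 (by linarith [(hlam n).2])) hstep hliminf
  have hsq : Tendsto (fun n => ‖zbar n - z n‖^2) atTop (𝓝 0) := by
    have hb : ∀ n, ‖zbar n - z n‖^2 ≤ a2 n / ρ := by
      intro n
      rw [le_div_iff₀ hρ]
      nlinarith [ha2ρ n]
    have hg : Tendsto (fun n => a2 n / ρ) atTop (𝓝 0) := by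
      have h := ha2to.div_const ρ
      simpa using h
    exact squeeze_zero (fun n => sq_nonneg _) hb hg
  rw [tendsto_zero_iff_norm_tendsto_zero]
  have h := (Real.continuous_sqrt.tendsto 0).comp hsq
  simp only [Function.comp_def] at h
  rw [Real.sqrt_zero] at h
  have heq : (fun n => Real.sqrt (‖zbar n - z n‖^2)) = fun n => ‖zbar n - z n‖ :=
    funext fun n => Real.sqrt_sq (norm_nonneg _)
  rw [heq] at h
  exact h
end

section
/- (Theorem 3.1(iii)). Under the AFBA setup and stepsize condition, the sequence (z_n) converges weakly to a point z⋆ with 0 ∈ T z⋆, i.e. there exists z⋆ ∈ zer T such that ⟨z_n, w⟩ → ⟨z⋆, w⟩ for every w ∈ H. -/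
open scoped InnerProductSpace
open Filter Topology

section AFBAHelpers
variable {H : Type*} [NormedAddCommGroup H] [InnerProductSpace ℝ H]

lemma psd_cs' (P : H →L[ℝ] H) (hsym : ∀ x y, ⟪P x, y⟫_ℝ = ⟪x, P y⟫_ℝ)
    (hpos : ∀ x, (0:ℝ) ≤ ⟪P x, x⟫_ℝ) (x y : H) :
    ⟪P x, y⟫_ℝ ^ 2 ≤ ⟪P x, x⟫_ℝ * ⟪P y, y⟫_ℝ := by
  have key : ∀ t : ℝ, 0 ≤ ⟪P y, y⟫_ℝ * (t * t) + (2 * ⟪P x, y⟫_ℝ) * t + ⟪P x, x⟫_ℝ := by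
    intro t
    have h := hpos (x + t • y)
    have hyx : ⟪P y, x⟫_ℝ = ⟪P x, y⟫_ℝ := by
      rw [hsym y x, real_inner_comm]
    simp only [map_add, map_smul, inner_add_left, inner_add_right, inner_smul_left,
      inner_smul_right, RCLike.conj_to_real, real_inner_comm y (P x)] at h
    have hxy : ⟪y, P x⟫_ℝ = ⟪P x, y⟫_ℝ := real_inner_comm _ _
    rw [hyx, hxy] at h; nlinarith [h]
  have := discrim_le_zero key
  rw [discrim] at this
  nlinarith [this]


/-- `⟪x, Tinv x⟫ ≥ 0` when `T` is psd and `Tinv` a right inverse. -/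
lemma inv_psd (T : H →L[ℝ] H) (hpos : ∀ x, (0:ℝ) ≤ ⟪T x, x⟫_ℝ)
    (Tinv : H →L[ℝ] H) (hTinv : ∀ x, T (Tinv x) = x) (x : H) :
    (0:ℝ) ≤ ⟪x, Tinv x⟫_ℝ := by
  have := hpos (Tinv x)
  rwa [hTinv] at this

/-- Lower bound for the inverse quadratic form. -/
lemma inv_lower (T : H →L[ℝ] H) (hsym : ∀ x y, ⟪T x, y⟫_ℝ = ⟪x, T y⟫_ℝ)
    (hpos : ∀ x, (0:ℝ) ≤ ⟪T x, x⟫_ℝ)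
    (Tinv : H →L[ℝ] H) (hTinv : ∀ x, T (Tinv x) = x) (x : H) :
    ‖x‖ ^ 2 ≤ (‖T‖ + 1) * ⟪x, Tinv x⟫_ℝ := by
  set u := Tinv x with hu
  have hx : x = T u := (hTinv x).symm
  have h1 : ⟪T u, x⟫_ℝ ^ 2 ≤ ⟪T u, u⟫_ℝ * ⟪T x, x⟫_ℝ := psd_cs' T hsym hpos u x
  have h2 : ⟪T u, x⟫_ℝ = ‖x‖ ^ 2 := by rw [← hx, real_inner_self_eq_norm_sq]
  have h3 : ⟪T x, x⟫_ℝ ≤ ‖T‖ * ‖x‖ ^ 2 := by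
    calc ⟪T x, x⟫_ℝ ≤ ‖T x‖ * ‖x‖ := real_inner_le_norm _ _
    _ ≤ (‖T‖ * ‖x‖) * ‖x‖ := by
        gcongr; exact T.le_opNorm x
    _ = ‖T‖ * ‖x‖ ^ 2 := by ring
  have h4 : ⟪x, Tinv x⟫_ℝ = ⟪T u, u⟫_ℝ := by rw [← hu, hx]
  have h5 : (0:ℝ) ≤ ⟪T u, u⟫_ℝ := hpos u
  have h6 : (0:ℝ) ≤ ‖T‖ := norm_nonneg _
  have h7 : (0:ℝ) ≤ ‖x‖ ^ 2 := sq_nonneg _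
  rw [h4]
  have h8 : ‖x‖^2 * ‖x‖^2 ≤ ⟪T u, u⟫_ℝ * (‖T‖ * ‖x‖ ^ 2) := by
    nlinarith [h1, h2, mul_le_mul_of_nonneg_left h3 h5]
  rcases eq_or_lt_of_le h7 with h0 | h0
  · nlinarith [h5, h6]
  · have h9 : ‖x‖^2 * ‖x‖^2 ≤ (⟪T u, u⟫_ℝ * ‖T‖) * ‖x‖^2 := by linarith [h8]
    have := le_of_mul_le_mul_right h9 h0
    nlinarith [h5]

/-- Extension characterization of maximal monotonicity. -/
lemma max_ext {A : H → Set H} (hA : IsMaxMonotone A) (x w : H)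
    (h : ∀ y v, v ∈ A y → (0:ℝ) ≤ ⟪x - y, w - v⟫_ℝ) : w ∈ A x := by
  classical
  set B : H → Set H := fun y => A y ∪ {w' | y = x ∧ w' = w} with hB
  have hBmono : IsMonotoneSet B := by
    intro p q u v hu hv
    rcases hu with hu | hu <;> rcases hv with hv | hv
    · exact hA.1 p q u v hu hv
    · obtain ⟨hq, hv'⟩ := hv
      rw [hq, hv']
      have := h p u hu
      have e : p - x = -(x - p) := by abel
      have e2 : u - w = -(w - u) := by abel
      rw [e, e2, inner_neg_neg]; exact this
    · obtain ⟨hp, hu'⟩ := hu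
      rw [hp, hu']
      exact h q v hv
    · obtain ⟨hp, hu'⟩ := hu
      obtain ⟨hq, hv'⟩ := hv
      rw [hp, hu', hq, hv']
      simp
  have hsub : ∀ y, A y ⊆ B y := fun y => Set.subset_union_left
  have := hA.2 B hBmono hsub x
  rw [← this]
  right; exact ⟨rfl, rfl⟩

/-- Along an ultrafilter, a bounded sequence has a weak limit (via Riesz representation). -/
lemma weak_lim_exists [CompleteSpace H] (𝒰 : Ultrafilter ℕ) (x : ℕ → H) (R : ℝ)
    (hR : ∀ n, ‖x n‖ ≤ R) :
    ∃ L : H, ∀ w : H, Tendsto (fun n => ⟪x n, w⟫_ℝ) 𝒰 (nhds ⟪L, w⟫_ℝ) := by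
  classical
  have hRnn : 0 ≤ R := le_trans (norm_nonneg _) (hR 0)
  -- for each w, the scalar sequence has a limit along 𝒰
  have key : ∀ w : H, ∃ a : ℝ, Tendsto (fun n => ⟪x n, w⟫_ℝ) 𝒰 (nhds a) := by
    intro w
    have hmem : ∀ n, ⟪x n, w⟫_ℝ ∈ Set.Icc (-(R * ‖w‖)) (R * ‖w‖) := by
      intro n
      have h1 : |⟪x n, w⟫_ℝ| ≤ ‖x n‖ * ‖w‖ := abs_real_inner_le_norm _ _
      have h2 : ‖x n‖ * ‖w‖ ≤ R * ‖w‖ := by gcongr; exact hR n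
      constructor <;> [linarith [neg_abs_le (⟪x n, w⟫_ℝ)]; linarith [le_abs_self (⟪x n, w⟫_ℝ)]]
    have hle : (𝒰.map (fun n => ⟪x n, w⟫_ℝ) : Filter ℝ) ≤ 𝓟 (Set.Icc (-(R * ‖w‖)) (R * ‖w‖)) := by
      rw [Filter.le_principal_iff]
      exact Filter.mem_map.mpr (Filter.Eventually.of_forall hmem)
    obtain ⟨a, _, ha⟩ := (isCompact_Icc).ultrafilter_le_nhds (𝒰.map (fun n => ⟪x n, w⟫_ℝ)) hle
    exact ⟨a, ha⟩
  choose ℓ hℓ using key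
  -- ℓ is linear and bounded
  have hadd : ∀ w w', ℓ (w + w') = ℓ w + ℓ w' := by
    intro w w'
    have t1 : Tendsto (fun n => ⟪x n, w + w'⟫_ℝ) 𝒰 (nhds (ℓ w + ℓ w')) := by
      have := (hℓ w).add (hℓ w')
      simpa [inner_add_right] using this
    exact tendsto_nhds_unique (hℓ (w + w')) t1
  have hsmul : ∀ (c : ℝ) w, ℓ (c • w) = c • ℓ w := by
    intro c w
    have t1 : Tendsto (fun n => ⟪x n, c • w⟫_ℝ) 𝒰 (nhds (c * ℓ w)) := by
      have := (hℓ w).const_mul c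
      simpa [real_inner_smul_right, mul_comm] using this
    simpa [smul_eq_mul] using tendsto_nhds_unique (hℓ (c • w)) t1
  have hbound : ∀ w, ‖ℓ w‖ ≤ R * ‖w‖ := by
    intro w
    have t1 : Tendsto (fun n => |⟪x n, w⟫_ℝ|) 𝒰 (nhds |ℓ w|) := (hℓ w).abs
    have hev : ∀ᶠ n in (𝒰 : Filter ℕ), |⟪x n, w⟫_ℝ| ≤ R * ‖w‖ := by
      apply Filter.Eventually.of_forall
      intro n
      calc |⟪x n, w⟫_ℝ| ≤ ‖x n‖ * ‖w‖ := abs_real_inner_le_norm _ _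
      _ ≤ R * ‖w‖ := by gcongr; exact hR n
    have := le_of_tendsto t1 hev
    simpa [Real.norm_eq_abs] using this
  let φ : H →L[ℝ] ℝ := LinearMap.mkContinuous
    { toFun := ℓ, map_add' := hadd, map_smul' := hsmul } R hbound
  refine ⟨(InnerProductSpace.toDual ℝ H).symm φ, fun w => ?_⟩
  have : ⟪(InnerProductSpace.toDual ℝ H).symm φ, w⟫_ℝ = φ w :=
    InnerProductSpace.toDual_symm_apply
  rw [this]
  exact hℓ w

set_option maxHeartbeats 1000000 in
lemma key_ineq [CompleteSpace H]
    (A : H → Set H) (hAmono : ∀ x y u v, u ∈ A x → v ∈ A y → (0:ℝ) ≤ ⟪x - y, u - v⟫_ℝ)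
    (M : H →L[ℝ] H) (hM : ∀ x, (0:ℝ) ≤ ⟪M x, x⟫_ℝ)
    (P : H →L[ℝ] H)
    (hPsym : ∀ x y, ⟪P x, y⟫_ℝ = ⟪x, P y⟫_ℝ)
    (hPpos : ∀ x, (0:ℝ) ≤ ⟪P x, x⟫_ℝ)
    (Pinv : H →L[ℝ] H) (hPinv₁ : ∀ x, P (Pinv x) = x)
    (C : H → H) (β : ℝ) (hβ : 1/4 < β)
    (hC : ∀ z z', β * ⟪C z - C z', Pinv (C z - C z')⟫_ℝ ≤ ⟪C z - C z', z - z'⟫_ℝ)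
    (K : H →L[ℝ] H) (hK : ∀ x y, ⟪K x, y⟫_ℝ = - ⟪x, K y⟫_ℝ)
    (zs us : H) (hzs : us ∈ A zs) (h0 : us + M zs + C zs = 0)
    (zn zbn : H)
    (hres : (P + K) zn - M zn - C zn - (P + K) zbn ∈ A zbn) :
    ⟪((P + K) + ContinuousLinearMap.adjoint M) (zbn - zn), zn - zs⟫_ℝ ≤
      -((1 - 1/(4*β)) * ⟪zbn - zn, P (zbn - zn)⟫_ℝ) := by
  obtain ⟨t, ht⟩ : ∃ t, t = zbn - zn := ⟨_, rfl⟩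
  obtain ⟨a, ha⟩ : ∃ a, a = zbn - zs := ⟨_, rfl⟩
  obtain ⟨b, hb⟩ : ∃ b, b = zn - zs := ⟨_, rfl⟩
  obtain ⟨c, hc⟩ : ∃ c, c = C zn - C zs := ⟨_, rfl⟩
  obtain ⟨un, hun⟩ : ∃ un, un = (P + K) zn - M zn - C zn - (P + K) zbn := ⟨_, rfl⟩
  rw [← hun] at hres
  rw [← ht]
  have h0' : us + (M zs + C zs) = 0 := by rw [← add_assoc]; exact h0
  have husdef : us = -(M zs + C zs) := eq_neg_of_add_eq_zero_left h0'
  have h_mono : (0:ℝ) ≤ ⟪a, un - us⟫_ℝ := by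
    rw [ha]; exact hAmono zbn zs un us hres hzs
  have hvec : un - us = -((P + K) t) - M b - c := by
    rw [husdef, hun, ht, hb, hc]
    simp only [map_sub]
    abel
  have habt : a = b + t := by rw [ha, hb, ht]; abel
  have hE1 : ⟪a, un - us⟫_ℝ = -⟪a, (P + K) t⟫_ℝ - ⟪a, M b⟫_ℝ - ⟪a, c⟫_ℝ := by
    rw [hvec]
    simp only [inner_sub_right, inner_neg_right]
  have hKtt : ⟪K t, t⟫_ℝ = 0 := by
    have h1 := hK t t
    have h2 : ⟪t, K t⟫_ℝ = ⟪K t, t⟫_ℝ := real_inner_comm _ _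
    rw [h2] at h1; linarith
  have hE2 : ⟪((P + K) + ContinuousLinearMap.adjoint M) t, zn - zs⟫_ℝ
      = ⟪a, (P + K) t⟫_ℝ + ⟪t, M b⟫_ℝ - ⟪P t, t⟫_ℝ := by
    rw [← hb]
    have e1 : ⟪((P + K) + ContinuousLinearMap.adjoint M) t, b⟫_ℝ
        = ⟪(P + K) t, b⟫_ℝ + ⟪t, M b⟫_ℝ := by
      rw [ContinuousLinearMap.add_apply, inner_add_left,
        ContinuousLinearMap.adjoint_inner_left]
    have e2 : b = a - t := by rw [habt]; abel
    have e3 : ⟪(P + K) t, b⟫_ℝ = ⟪(P + K) t, a⟫_ℝ - ⟪(P + K) t, t⟫_ℝ := by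
      conv_lhs => rw [e2]
      exact inner_sub_right _ _ _
    have e4 : ⟪(P + K) t, t⟫_ℝ = ⟪P t, t⟫_ℝ := by
      rw [ContinuousLinearMap.add_apply, inner_add_left, hKtt]; ring
    have e5 : ⟪(P + K) t, a⟫_ℝ = ⟪a, (P + K) t⟫_ℝ := real_inner_comm _ _
    rw [e1, e3, e4, e5]
    ring
  have hE3 : ⟪a, M b⟫_ℝ = ⟪b, M b⟫_ℝ + ⟪t, M b⟫_ℝ := by
    rw [habt, inner_add_left]
  have hMb : (0:ℝ) ≤ ⟪b, M b⟫_ℝ := by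
    have := hM b
    rwa [real_inner_comm] at this
  have hac : ⟪a, c⟫_ℝ = ⟪b, c⟫_ℝ + ⟪t, c⟫_ℝ := by rw [habt, inner_add_left]
  have hbc : β * ⟪c, Pinv c⟫_ℝ ≤ ⟪b, c⟫_ℝ := by
    have h := hC zn zs
    rw [← hc, ← hb] at h
    calc β * ⟪c, Pinv c⟫_ℝ ≤ ⟪c, b⟫_ℝ := h
    _ = ⟪b, c⟫_ℝ := real_inner_comm _ _
  obtain ⟨γ, hγ⟩ : ∃ γ, γ = ⟪c, Pinv c⟫_ℝ := ⟨_, rfl⟩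
  obtain ⟨p, hp⟩ : ∃ p, p = ⟪t, P t⟫_ℝ := ⟨_, rfl⟩
  obtain ⟨r, hr⟩ : ∃ r, r = ⟪t, c⟫_ℝ := ⟨_, rfl⟩
  rw [← hγ] at hbc
  rw [← hp]
  have hpt : ⟪t, P t⟫_ℝ = p := hp.symm
  have hp0 : ⟪P t, t⟫_ℝ = p := by rw [← hpt]; exact real_inner_comm _ _
  have hpnn : (0:ℝ) ≤ p := by rw [← hp0]; exact hPpos t
  have hγnn : (0:ℝ) ≤ γ := by
    have h := hPpos (Pinv c)
    rw [hPinv₁] at h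
    rw [hγ]
    exact h
  have hrsq : r ^ 2 ≤ p * γ := by
    have cs := psd_cs' P hPsym hPpos t (Pinv c)
    have e1 : ⟪P t, Pinv c⟫_ℝ = r := by rw [hPsym, hPinv₁]; exact hr.symm
    have e2 : ⟪P (Pinv c), Pinv c⟫_ℝ = γ := by
      rw [hPinv₁, hγ]
    rw [e1, e2, hp0] at cs
    exact cs
  have main : ⟪((P + K) + ContinuousLinearMap.adjoint M) t, zn - zs⟫_ℝ ≤ -p - β * γ - r := by
    have h1 : ⟪a, (P + K) t⟫_ℝ ≤ -⟪a, M b⟫_ℝ - ⟪a, c⟫_ℝ := by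
      rw [hE1] at h_mono; linarith
    rw [hE2, hp0]
    rw [← hr] at hac
    linarith [h1, hE3, hMb, hac, hbc]
  have goal2 : -p - β * γ - r ≤ -((1 - 1/(4*β)) * p) := by
    obtain ⟨s, hs⟩ : ∃ s : ℝ, s = 1/(4*β) := ⟨_, rfl⟩
    have h4β : (0:ℝ) < 4*β := by linarith
    have hs4 : s * (4*β) = 1 := by rw [hs]; field_simp
    have hβnn : (0:ℝ) ≤ β := by linarith
    have hsnn : (0:ℝ) ≤ s := by rw [hs]; positivity
    have hq : (0:ℝ) ≤ β*γ + s*p := by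
      have := mul_nonneg hβnn hγnn
      have := mul_nonneg hsnn hpnn
      linarith
    have expand : (β*γ + s*p)^2 - (β*γ - s*p)^2 - p*γ = (s * (4*β) - 1)*(p*γ) := by ring
    rw [hs4] at expand
    have h2 : r^2 ≤ (β*γ + s*p)^2 := by nlinarith [sq_nonneg (β*γ - s*p), hrsq, expand]
    have h3 : -r ≤ β*γ + s*p := by
      nlinarith [sq_nonneg (r + (β*γ + s*p)), h2, hq]
    rw [← hs]
    have e : -((1 - s) * p) = -p + s*p := by ring
    linarith [h3, e]
  linarith [main, goal2]

set_option maxHeartbeats 1000000 in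
lemma fejer_step [CompleteSpace H]
    (A : H → Set H) (hAmono : ∀ x y u v, u ∈ A x → v ∈ A y → (0:ℝ) ≤ ⟪x - y, u - v⟫_ℝ)
    (M : H →L[ℝ] H) (hM : ∀ x, (0:ℝ) ≤ ⟪M x, x⟫_ℝ)
    (P : H →L[ℝ] H) (ρ : ℝ) (hρ : 0 < ρ)
    (hPsym : ∀ x y, ⟪P x, y⟫_ℝ = ⟪x, P y⟫_ℝ)
    (hPpos : ∀ x, ρ * ‖x‖ ^ 2 ≤ ⟪P x, x⟫_ℝ)
    (Pinv : H →L[ℝ] H) (hPinv₁ : ∀ x, P (Pinv x) = x)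
    (C : H → H) (β : ℝ) (hβ : 1/4 < β)
    (hC : ∀ z z', β * ⟪C z - C z', Pinv (C z - C z')⟫_ℝ ≤ ⟪C z - C z', z - z'⟫_ℝ)
    (K : H →L[ℝ] H) (hK : ∀ x y, ⟪K x, y⟫_ℝ = - ⟪x, K y⟫_ℝ)
    (S : H →L[ℝ] H) (σ : ℝ) (hσ : 0 < σ)
    (hSsym : ∀ x y, ⟪S x, y⟫_ℝ = ⟪x, S y⟫_ℝ)
    (hSpos : ∀ x, σ * ‖x‖ ^ 2 ≤ ⟪S x, x⟫_ℝ)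
    (Sinv : H →L[ℝ] H) (hSinv₁ : ∀ x, S (Sinv x) = x)
    (z zbar : ℕ → H) (lam α : ℕ → ℝ) (δ : ℝ)
    (hδdef : δ = 2 - 1/(2*β))
    (hres : ∀ n, (P + K) (z n) - M (z n) - C (z n) - (P + K) (zbar n) ∈ A (zbar n))
    (hα : ∀ n, zbar n - z n ≠ 0 →
      α n = lam n * ⟪zbar n - z n, P (zbar n - z n)⟫_ℝ /
        ⟪((P + K) + ContinuousLinearMap.adjoint M) (zbar n - z n),
          Sinv (((P + K) + ContinuousLinearMap.adjoint M) (zbar n - z n))⟫_ℝ)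
    (hα0 : ∀ n, zbar n - z n = 0 → α n = 0)
    (hupd : ∀ n, z (n+1) = z n +
      α n • Sinv (((P + K) + ContinuousLinearMap.adjoint M) (zbar n - z n)))
    (hlam : ∀ n, lam n ∈ Set.Icc (0:ℝ) δ)
    (zs us : H) (hzs : us ∈ A zs) (h0 : us + M zs + C zs = 0) :
    ∃ φ : ℕ → ℝ, (∀ n, 0 ≤ φ n) ∧
      (∀ n, ⟪z (n+1) - zs, S (z (n+1) - zs)⟫_ℝ + φ n ≤ ⟪z n - zs, S (z n - zs)⟫_ℝ) ∧
      (∀ n, ρ^2 * (lam n * (δ - lam n)) * ‖zbar n - z n‖^2 ≤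
        (‖Sinv‖ * ‖(P + K) + ContinuousLinearMap.adjoint M‖^2 + 1) * φ n) := by
  classical
  set D := (P + K) + ContinuousLinearMap.adjoint M with hD
  set B := ‖Sinv‖ * ‖D‖^2 with hB
  have hPpos0 : ∀ x, (0:ℝ) ≤ ⟪P x, x⟫_ℝ := fun x =>
    le_trans (by positivity) (hPpos x)
  have hSpos0 : ∀ x, (0:ℝ) ≤ ⟪S x, x⟫_ℝ := fun x =>
    le_trans (by positivity) (hSpos x)
  refine ⟨fun n => if h : zbar n - z n = 0 then 0 else
      lam n * (δ - lam n) * ⟪zbar n - z n, P (zbar n - z n)⟫_ℝ^2 /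
        ⟪D (zbar n - z n), Sinv (D (zbar n - z n))⟫_ℝ, ?_, ?_, ?_⟩
  · intro n
    by_cases h : zbar n - z n = 0
    · simp [h]
    · simp only [h, dif_neg, not_false_iff]
      have hlamn := hlam n
      have hnum : (0:ℝ) ≤ lam n * (δ - lam n) * ⟪zbar n - z n, P (zbar n - z n)⟫_ℝ^2 := by
        have h1 : 0 ≤ lam n := hlamn.1
        have h2 : lam n ≤ δ := hlamn.2
        have h3 := sq_nonneg (⟪zbar n - z n, P (zbar n - z n)⟫_ℝ)
        have h4 : 0 ≤ δ - lam n := by linarith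
        exact mul_nonneg (mul_nonneg h1 h4) h3
      have hden : (0:ℝ) ≤ ⟪D (zbar n - z n), Sinv (D (zbar n - z n))⟫_ℝ := by
        have := hSpos0 (Sinv (D (zbar n - z n)))
        rwa [hSinv₁] at this
      exact div_nonneg hnum hden
  · intro n
    by_cases h : zbar n - z n = 0
    · have hz : z (n+1) = z n := by
        rw [hupd n, hα0 n h]
        simp
      simp [h, hz]
    · simp only [h, dif_neg, not_false_iff]
      obtain ⟨t, ht⟩ : ∃ t, t = zbar n - z n := ⟨_, rfl⟩
      rw [← ht]
      obtain ⟨w, hw⟩ : ∃ w, w = D t := ⟨_, rfl⟩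
      obtain ⟨p, hp⟩ : ∃ p, p = ⟪t, P t⟫_ℝ := ⟨_, rfl⟩
      obtain ⟨d, hd⟩ : ∃ d, d = ⟪w, Sinv w⟫_ℝ := ⟨_, rfl⟩
      rw [← hp, ← hw, ← hd]
      have htne : t ≠ 0 := by rw [ht]; exact h
      have htpos : (0:ℝ) < ‖t‖^2 := by
        have := norm_pos_iff.mpr htne
        positivity
      have hp_low : ρ * ‖t‖^2 ≤ p := by
        rw [hp, real_inner_comm]; exact hPpos t
      have hppos : (0:ℝ) < p := lt_of_lt_of_le (mul_pos hρ htpos) hp_low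
      have hwt : ρ * ‖t‖^2 ≤ ⟪w, t⟫_ℝ := by
        rw [hw, hD, ContinuousLinearMap.add_apply, inner_add_left,
          ContinuousLinearMap.adjoint_inner_left, ContinuousLinearMap.add_apply,
          inner_add_left]
        have hKtt : ⟪K t, t⟫_ℝ = 0 := by
          have h1 := hK t t
          have h2 : ⟪t, K t⟫_ℝ = ⟪K t, t⟫_ℝ := real_inner_comm _ _
          rw [h2] at h1; linarith
        have hMt : (0:ℝ) ≤ ⟪t, M t⟫_ℝ := by
          have := hM t; rwa [real_inner_comm] at this
        have := hPpos t
        linarith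
      have hwne : w ≠ 0 := by
        intro hw0
        rw [hw0, inner_zero_left] at hwt
        nlinarith
      have hwpos : (0:ℝ) < ‖w‖^2 := by
        have := norm_pos_iff.mpr hwne
        positivity
      have hdpos : (0:ℝ) < d := by
        have := inv_lower S hSsym hSpos0 Sinv hSinv₁ w
        have hS1 : (0:ℝ) < ‖S‖ + 1 := by positivity
        rw [← hd] at this
        nlinarith
      have hα' : α n = lam n * p / d := by
        rw [hα n h, ← ht, ← hp, ← hw, ← hd]
      -- expansion of the S-quadratic form
      obtain ⟨x, hx⟩ : ∃ x, x = z n - zs := ⟨_, rfl⟩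
      rw [← hx]
      have hexp : z (n+1) - zs = x + α n • Sinv w := by
        rw [hupd n, hx, ← ht, ← hw]; abel
      have hSv : S (Sinv w) = w := hSinv₁ w
      have e : ⟪z (n+1) - zs, S (z (n+1) - zs)⟫_ℝ
          = ⟪x, S x⟫_ℝ + 2*(α n)*⟪w, x⟫_ℝ + (α n)^2 * d := by
        rw [hexp]
        rw [map_add, map_smul, inner_add_left, inner_add_right, inner_add_right]
        rw [inner_smul_left, inner_smul_right, inner_smul_left, inner_smul_right]
        simp only [RCLike.conj_to_real, hSv]
        have c1 : ⟪Sinv w, S x⟫_ℝ = ⟪w, x⟫_ℝ := by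
          rw [← hSv, hSsym, hSv]
        have c2 : ⟪x, w⟫_ℝ = ⟪w, x⟫_ℝ := real_inner_comm _ _
        have c3 : ⟪Sinv w, w⟫_ℝ = d := by
          rw [hd]; exact real_inner_comm _ _
        rw [c1, c2, c3]
        ring
      have hkey : ⟪w, x⟫_ℝ ≤ -((δ/2) * p) := by
        have hk := key_ineq A hAmono M hM P hPsym hPpos0 Pinv hPinv₁ C β hβ hC K hK
          zs us hzs h0 (z n) (zbar n) (hres n)
        rw [← hD, ← ht, ← hp, ← hw, ← hx] at hk
        have hhalf : (1:ℝ) - 1/(4*β) = δ/2 := by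
          rw [hδdef]
          have hβ0 : β ≠ 0 := by intro hh; rw [hh] at hβ; norm_num at hβ
          field_simp
          ring
        rwa [hhalf] at hk
      rw [e, hα']
      have hlamn := hlam n
      have hαnn : (0:ℝ) ≤ 2 * (lam n * p / d) := by
        have : (0:ℝ) ≤ lam n * p / d := by
          apply div_nonneg (mul_nonneg hlamn.1 (le_of_lt hppos)) (le_of_lt hdpos)
        linarith
      have hb : 2 * (lam n * p / d) * ⟪w, x⟫_ℝ ≤ 2 * (lam n * p / d) * (-((δ/2) * p)) :=
        mul_le_mul_of_nonneg_left hkey hαnn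
      have hfrac : 2 * (lam n * p / d) * (-((δ/2) * p)) + (lam n * p / d)^2 * d
          + lam n * (δ - lam n) * p^2 / d = 0 := by
        field_simp
        ring
      linarith [hb, hfrac]
  · intro n
    by_cases h : zbar n - z n = 0
    · simp [h]
    · simp only [h, dif_neg, not_false_iff]
      obtain ⟨t, ht⟩ : ∃ t, t = zbar n - z n := ⟨_, rfl⟩
      rw [← ht]
      obtain ⟨w, hw⟩ : ∃ w, w = D t := ⟨_, rfl⟩
      obtain ⟨p, hp⟩ : ∃ p, p = ⟪t, P t⟫_ℝ := ⟨_, rfl⟩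
      obtain ⟨d, hd⟩ : ∃ d, d = ⟪w, Sinv w⟫_ℝ := ⟨_, rfl⟩
      rw [← hp, ← hw, ← hd]
      have htne : t ≠ 0 := by rw [ht]; exact h
      have htpos : (0:ℝ) < ‖t‖^2 := by
        have := norm_pos_iff.mpr htne
        positivity
      have hp_low : ρ * ‖t‖^2 ≤ p := by
        rw [hp, real_inner_comm]; exact hPpos t
      have hppos : (0:ℝ) < p := lt_of_lt_of_le (mul_pos hρ htpos) hp_low
      have hwt : ρ * ‖t‖^2 ≤ ⟪w, t⟫_ℝ := by
        rw [hw, hD, ContinuousLinearMap.add_apply, inner_add_left,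
          ContinuousLinearMap.adjoint_inner_left, ContinuousLinearMap.add_apply,
          inner_add_left]
        have hKtt : ⟪K t, t⟫_ℝ = 0 := by
          have h1 := hK t t
          have h2 : ⟪t, K t⟫_ℝ = ⟪K t, t⟫_ℝ := real_inner_comm _ _
          rw [h2] at h1; linarith
        have hMt : (0:ℝ) ≤ ⟪t, M t⟫_ℝ := by
          have := hM t; rwa [real_inner_comm] at this
        have := hPpos t
        linarith
      have hwne : w ≠ 0 := by
        intro hw0
        rw [hw0, inner_zero_left] at hwt
        nlinarith
      have hwpos : (0:ℝ) < ‖w‖^2 := by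
        have := norm_pos_iff.mpr hwne
        positivity
      have hdpos : (0:ℝ) < d := by
        have := inv_lower S hSsym hSpos0 Sinv hSinv₁ w
        have hS1 : (0:ℝ) < ‖S‖ + 1 := by positivity
        rw [← hd] at this
        nlinarith
      -- upper bound on d
      have hd_up : d ≤ (B + 1) * ‖t‖^2 := by
        have h1 : d ≤ ‖w‖ * ‖Sinv w‖ := by
          rw [hd]; exact real_inner_le_norm _ _
        have h2 : ‖Sinv w‖ ≤ ‖Sinv‖ * ‖w‖ := Sinv.le_opNorm w
        have h3 : ‖w‖ ≤ ‖D‖ * ‖t‖ := by rw [hw]; exact D.le_opNorm t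
        have h4 : d ≤ ‖Sinv‖ * ‖w‖^2 := by nlinarith [norm_nonneg w, norm_nonneg (Sinv w)]
        have h5 : ‖w‖^2 ≤ ‖D‖^2 * ‖t‖^2 := by nlinarith [norm_nonneg w, norm_nonneg t, norm_nonneg D]
        have h6 : (0:ℝ) ≤ ‖Sinv‖ := norm_nonneg _
        rw [hB]
        nlinarith [htpos]
      have hlamn := hlam n
      have hlamΔ : (0:ℝ) ≤ lam n * (δ - lam n) :=
        mul_nonneg hlamn.1 (by linarith [hlamn.2])
      have hB1 : (0:ℝ) < B + 1 := by rw [hB]; positivity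
      have goal' : ρ^2 * (lam n * (δ - lam n)) * ‖t‖^2 * d ≤ (B+1) * (lam n * (δ - lam n) * p^2) := by
        have hp2 : (ρ*‖t‖^2)^2 ≤ p^2 := by
          have := mul_nonneg (le_of_lt hρ) (le_of_lt htpos)
          nlinarith
        have c1 : ρ^2 * (lam n * (δ - lam n)) * ‖t‖^2 * d
            ≤ ρ^2 * (lam n * (δ - lam n)) * ‖t‖^2 * ((B+1) * ‖t‖^2) := by
          apply mul_le_mul_of_nonneg_left hd_up
          positivity
        have c2 : ρ^2 * (lam n * (δ - lam n)) * ‖t‖^2 * ((B+1) * ‖t‖^2)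
            = (B+1) * (lam n * (δ - lam n) * (ρ*‖t‖^2)^2) := by ring
        have c3 : (B+1) * (lam n * (δ - lam n) * (ρ*‖t‖^2)^2)
            ≤ (B+1) * (lam n * (δ - lam n) * p^2) := by
          apply mul_le_mul_of_nonneg_left _ (le_of_lt hB1)
          exact mul_le_mul_of_nonneg_left hp2 hlamΔ
        linarith
      calc ρ^2 * (lam n * (δ - lam n)) * ‖t‖^2
          = (ρ^2 * (lam n * (δ - lam n)) * ‖t‖^2 * d) / d := by
            field_simp
        _ ≤ ((B+1) * (lam n * (δ - lam n) * p^2)) / d := by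
            exact (div_le_div_iff_of_pos_right hdpos).mpr goal'
        _ = (B+1) * (lam n * (δ - lam n) * p^2 / d) := by
            rw [mul_div_assoc]

set_option maxHeartbeats 1000000 in
lemma cluster_zer [CompleteSpace H]
    (A : H → Set H) (hA : IsMaxMonotone A)
    (M : H →L[ℝ] H) (hM : ∀ x, (0:ℝ) ≤ ⟪M x, x⟫_ℝ)
    (P : H →L[ℝ] H)
    (hPsym : ∀ x y, ⟪P x, y⟫_ℝ = ⟪x, P y⟫_ℝ)
    (hPpos0 : ∀ x, (0:ℝ) ≤ ⟪P x, x⟫_ℝ)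
    (Pinv : H →L[ℝ] H) (hPinv₁ : ∀ x, P (Pinv x) = x)
    (C : H → H) (β : ℝ) (hβpos : 0 < β)
    (hC : ∀ z z', β * ⟪C z - C z', Pinv (C z - C z')⟫_ℝ ≤ ⟪C z - C z', z - z'⟫_ℝ)
    (zb : ℕ → H) (e : ℕ → H)
    (hmem : ∀ n, e n - M (zb n) - C (zb n) ∈ A (zb n))
    (he : Tendsto e atTop (𝓝 0))
    (R1 : ℝ) (hzb : ∀ n, ‖zb n‖ ≤ R1)
    (R2 : ℝ) (hCb : ∀ n, ‖C (zb n)‖ ≤ R2)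
    (𝒰 : Ultrafilter ℕ) (h𝒰 : (𝒰 : Filter ℕ) ≤ atTop) :
    ∃ zi : H, (-(M zi + C zi) ∈ A zi) ∧
      ∀ w, Tendsto (fun n => ⟪zb n, w⟫_ℝ) 𝒰 (𝓝 ⟪zi, w⟫_ℝ) := by
  obtain ⟨zi, hzi⟩ := weak_lim_exists 𝒰 zb R1 hzb
  obtain ⟨Ch, hCh⟩ := weak_lim_exists 𝒰 (fun n => C (zb n)) R2 hCb
  -- limit helpers
  have henorm : Tendsto (fun n => ‖e n‖) (𝒰 : Filter ℕ) (𝓝 0) := by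
    have h1 : Tendsto (fun n => ‖e n‖) atTop (𝓝 0) := by
      simpa using he.norm
    exact h1.mono_left h𝒰
  have T1 : ∀ c : H, Tendsto (fun n => ⟪zb n - zi, c⟫_ℝ) (𝒰 : Filter ℕ) (𝓝 0) := by
    intro c
    have := (hzi c).sub (tendsto_const_nhds (x := ⟪zi, c⟫_ℝ))
    simpa [inner_sub_left] using this
  have T2 : ∀ y : H, Tendsto (fun n => ⟪zb n - y, e n⟫_ℝ) (𝒰 : Filter ℕ) (𝓝 0) := by
    intro y
    apply squeeze_zero_norm (a := fun n => (R1 + ‖y‖) * ‖e n‖)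
    · intro n
      have h1 : |⟪zb n - y, e n⟫_ℝ| ≤ ‖zb n - y‖ * ‖e n‖ := abs_real_inner_le_norm _ _
      have h2 : ‖zb n - y‖ ≤ R1 + ‖y‖ := by
        calc ‖zb n - y‖ ≤ ‖zb n‖ + ‖y‖ := norm_sub_le _ _
        _ ≤ R1 + ‖y‖ := by linarith [hzb n]
      calc ‖⟪zb n - y, e n⟫_ℝ‖ = |⟪zb n - y, e n⟫_ℝ| := rfl
      _ ≤ ‖zb n - y‖ * ‖e n‖ := h1
      _ ≤ (R1 + ‖y‖) * ‖e n‖ := by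
          apply mul_le_mul_of_nonneg_right h2 (norm_nonneg _)
    · simpa using henorm.const_mul (R1 + ‖y‖)
  have TM : ∀ c : H, Tendsto (fun n => ⟪c, M (zb n)⟫_ℝ) (𝒰 : Filter ℕ) (𝓝 ⟪c, M zi⟫_ℝ) := by
    intro c
    have h1 := hzi (ContinuousLinearMap.adjoint M c)
    have h2 : ∀ x : H, ⟪x, ContinuousLinearMap.adjoint M c⟫_ℝ = ⟪c, M x⟫_ℝ := by
      intro x
      rw [real_inner_comm, ContinuousLinearMap.adjoint_inner_left]
    simpa [h2] using h1
  have TC : ∀ c : H, Tendsto (fun n => ⟪c, C (zb n)⟫_ℝ) (𝒰 : Filter ℕ) (𝓝 ⟪c, Ch⟫_ℝ) := by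
    intro c
    have h1 := hCh c
    have : (fun n => ⟪c, C (zb n)⟫_ℝ) = fun n => ⟪C (zb n), c⟫_ℝ := by
      funext n; exact real_inner_comm _ _
    rw [this, real_inner_comm]
    exact h1
  -- monotonicity of M and C as monotone maps
  have hMmono : ∀ x y : H, (0:ℝ) ≤ ⟪x - y, M x - M y⟫_ℝ := by
    intro x y
    have h1 := hM (x - y)
    rw [map_sub] at h1
    rwa [real_inner_comm] at h1
  have hCmono : ∀ x y : H, (0:ℝ) ≤ ⟪x - y, C x - C y⟫_ℝ := by
    intro x y
    have h1 := hC x y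
    have h2 : (0:ℝ) ≤ ⟪C x - C y, Pinv (C x - C y)⟫_ℝ := by
      have := hPpos0 (Pinv (C x - C y))
      rwa [hPinv₁] at this
    have h3 : (0:ℝ) ≤ ⟪C x - C y, x - y⟫_ℝ := le_trans (by nlinarith) h1
    rwa [real_inner_comm] at h3
  -- Step 1: -(M zi + Ch) ∈ A zi
  have step1 : -(M zi + Ch) ∈ A zi := by
    apply max_ext hA
    intro y v hv
    set Q : ℕ → ℝ := fun n => ⟪zb n - y, e n⟫_ℝ - ⟪zb n - y, v⟫_ℝ
      - ⟪zb n - zi, M zi + C zi⟫_ℝ - ⟪zi - y, M (zb n) + C (zb n)⟫_ℝ with hQ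
    have hQge : ∀ n, 0 ≤ Q n := by
      intro n
      have hmono := hA.1 (zb n) y (e n - M (zb n) - C (zb n)) v (hmem n) hv
      have hMn := hMmono (zb n) zi
      have hCn := hCmono (zb n) zi
      have expand : ⟪zb n - y, e n - M (zb n) - C (zb n) - v⟫_ℝ
          = ⟪zb n - y, e n⟫_ℝ - ⟪zb n - y, v⟫_ℝ - ⟪zb n - y, M (zb n) + C (zb n)⟫_ℝ := by
        simp only [inner_sub_right, inner_add_right]; ring
      have split : ⟪zb n - y, M (zb n) + C (zb n)⟫_ℝ
          = ⟪zb n - zi, M (zb n) + C (zb n)⟫_ℝ + ⟪zi - y, M (zb n) + C (zb n)⟫_ℝ := by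
        have : zb n - y = (zb n - zi) + (zi - y) := by abel
        rw [this, inner_add_left]
      have split2 : ⟪zb n - zi, M (zb n) + C (zb n)⟫_ℝ
          = ⟪zb n - zi, M (zb n) - M zi⟫_ℝ + ⟪zb n - zi, C (zb n) - C zi⟫_ℝ
            + ⟪zb n - zi, M zi + C zi⟫_ℝ := by
        simp only [inner_sub_right, inner_add_right]; ring
      rw [expand, split, split2] at hmono
      simp only [hQ]
      linarith [hmono, hMn, hCn]
    have hQlim : Tendsto Q (𝒰 : Filter ℕ) (𝓝 (0 - ⟪zi - y, v⟫_ℝ - 0 - ⟪zi - y, M zi + Ch⟫_ℝ)) := by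
      have l1 := T2 y
      have l2 : Tendsto (fun n => ⟪zb n - y, v⟫_ℝ) (𝒰 : Filter ℕ) (𝓝 ⟪zi - y, v⟫_ℝ) := by
        have := (hzi v).sub (tendsto_const_nhds (x := ⟪y, v⟫_ℝ))
        simpa [inner_sub_left] using this
      have l3 := T1 (M zi + C zi)
      have l4 : Tendsto (fun n => ⟪zi - y, M (zb n) + C (zb n)⟫_ℝ) (𝒰 : Filter ℕ)
          (𝓝 ⟪zi - y, M zi + Ch⟫_ℝ) := by
        have := (TM (zi - y)).add (TC (zi - y))
        simpa [inner_add_right] using this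
      exact ((l1.sub l2).sub l3).sub l4
    have hge := ge_of_tendsto hQlim (Filter.Eventually.of_forall hQge)
    have e1 : ⟪zi - y, -(M zi + Ch) - v⟫_ℝ = - ⟪zi - y, M zi + Ch⟫_ℝ - ⟪zi - y, v⟫_ℝ := by
      simp only [inner_sub_right, inner_neg_right]
    linarith [hge, e1.le, e1.ge]
  -- Step 2: C zi = Ch
  have step2 : C zi = Ch := by
    -- r n bounds ⟪dn, C zb n - C zi⟫ from above and tends to 0
    set r : ℕ → ℝ := fun n => ⟪zb n - zi, e n⟫_ℝ - ⟪zb n - zi, C zi - Ch⟫_ℝ with hr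
    have hrlim : Tendsto r (𝒰 : Filter ℕ) (𝓝 0) := by
      have := (T2 zi).sub (T1 (C zi - Ch))
      simpa using this
    have hbound : ∀ n, ⟪zb n - zi, C (zb n) - C zi⟫_ℝ ≤ r n := by
      intro n
      have hmono := hA.1 (zb n) zi (e n - M (zb n) - C (zb n)) (-(M zi + Ch))
        (hmem n) step1
      have hMn := hMmono (zb n) zi
      have expand : ⟪zb n - zi, e n - M (zb n) - C (zb n) - -(M zi + Ch)⟫_ℝ
          = ⟪zb n - zi, e n⟫_ℝ - ⟪zb n - zi, M (zb n) - M zi⟫_ℝ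
            - ⟪zb n - zi, C (zb n) - C zi⟫_ℝ - ⟪zb n - zi, C zi - Ch⟫_ℝ := by
        simp only [inner_sub_right, inner_add_right, inner_neg_right]; ring
      rw [expand] at hmono
      simp only [hr]
      linarith [hmono, hMn]
    have hsq : ∀ n, ‖C (zb n) - C zi‖^2 ≤ ((‖P‖ + 1)/β) * r n := by
      intro n
      have h1 := hC (zb n) zi
      have h2 := inv_lower P hPsym hPpos0 Pinv hPinv₁ (C (zb n) - C zi)
      have h3 : ⟪C (zb n) - C zi, zb n - zi⟫_ℝ = ⟪zb n - zi, C (zb n) - C zi⟫_ℝ :=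
        real_inner_comm _ _
      have h4 : β * ⟪C (zb n) - C zi, Pinv (C (zb n) - C zi)⟫_ℝ ≤ r n := by
        rw [h3] at h1
        linarith [hbound n]
      have hP1 : (0:ℝ) < ‖P‖ + 1 := by positivity
      calc ‖C (zb n) - C zi‖^2 ≤ (‖P‖ + 1) * ⟪C (zb n) - C zi, Pinv (C (zb n) - C zi)⟫_ℝ := h2
      _ ≤ (‖P‖ + 1) * (r n / β) := by
          apply mul_le_mul_of_nonneg_left _ (le_of_lt hP1)
          rw [le_div_iff₀ hβpos]
          linarith [h4]
      _ = ((‖P‖ + 1)/β) * r n := by ring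
    have hnormsq : Tendsto (fun n => ‖C (zb n) - C zi‖^2) (𝒰 : Filter ℕ) (𝓝 0) := by
      apply squeeze_zero (fun n => sq_nonneg _) hsq
      simpa using hrlim.const_mul ((‖P‖ + 1)/β)
    have hnorm0 : Tendsto (fun n => ‖C (zb n) - C zi‖) (𝒰 : Filter ℕ) (𝓝 0) := by
      have h1 : Tendsto (fun n => Real.sqrt (‖C (zb n) - C zi‖^2)) (𝒰 : Filter ℕ)
          (𝓝 (Real.sqrt 0)) := hnormsq.sqrt
      simpa [Real.sqrt_sq (norm_nonneg _)] using h1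
    -- weak limits agree, so C zi = Ch
    have hagree : ∀ w : H, ⟪C zi - Ch, w⟫_ℝ = 0 := by
      intro w
      have limit1 : Tendsto (fun n => ⟪C (zb n), w⟫_ℝ) (𝒰 : Filter ℕ) (𝓝 ⟪Ch, w⟫_ℝ) := hCh w
      have limdiff : Tendsto (fun n => ⟪C (zb n) - C zi, w⟫_ℝ) (𝒰 : Filter ℕ) (𝓝 0) := by
        apply squeeze_zero_norm (a := fun n => ‖C (zb n) - C zi‖ * ‖w‖)
        · intro n
          exact abs_real_inner_le_norm _ _
        · simpa using hnorm0.mul_const ‖w‖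
      have limit2 : Tendsto (fun n => ⟪C (zb n), w⟫_ℝ) (𝒰 : Filter ℕ) (𝓝 ⟪C zi, w⟫_ℝ) := by
        have := limdiff.add (tendsto_const_nhds (x := ⟪C zi, w⟫_ℝ))
        simp only [inner_sub_left, zero_add] at this
        convert this using 2 with n
        · ring
      have huniq : ⟪Ch, w⟫_ℝ = ⟪C zi, w⟫_ℝ := tendsto_nhds_unique limit1 limit2
      rw [inner_sub_left, huniq]
      ring
    have := hagree (C zi - Ch)
    rw [inner_self_eq_zero] at this
    exact sub_eq_zero.mp this
  refine ⟨zi, ?_, hzi⟩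
  rw [step2]
  exact step1

end AFBAHelpers

set_option maxHeartbeats 2000000 in
/-- Theorem 3.1(iii): `zₙ` converges weakly to a point in `zer T`. -/
theorem afba_weak_convergence
    {H : Type*} [NormedAddCommGroup H] [InnerProductSpace ℝ H] [CompleteSpace H]
    (A : H → Set H) (hA : IsMaxMonotone A)
    (M : H →L[ℝ] H) (hM : ∀ x, (0:ℝ) ≤ ⟪M x, x⟫_ℝ)
    (P : H →L[ℝ] H) (ρ : ℝ) (hρ : 0 < ρ)
    (hPsym : ∀ x y, ⟪P x, y⟫_ℝ = ⟪x, P y⟫_ℝ)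
    (hPpos : ∀ x, ρ * ‖x‖ ^ 2 ≤ ⟪P x, x⟫_ℝ)
    (Pinv : H →L[ℝ] H) (hPinv₁ : ∀ x, P (Pinv x) = x) (hPinv₂ : ∀ x, Pinv (P x) = x)
    (C : H → H) (β : ℝ) (hβ : 1/4 < β)
    (hC : ∀ z z', β * ⟪C z - C z', Pinv (C z - C z')⟫_ℝ ≤ ⟪C z - C z', z - z'⟫_ℝ)
    (K : H →L[ℝ] H) (hK : ∀ x y, ⟪K x, y⟫_ℝ = - ⟪x, K y⟫_ℝ)
    (S : H →L[ℝ] H) (σ : ℝ) (hσ : 0 < σ)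
    (hSsym : ∀ x y, ⟪S x, y⟫_ℝ = ⟪x, S y⟫_ℝ)
    (hSpos : ∀ x, σ * ‖x‖ ^ 2 ≤ ⟪S x, x⟫_ℝ)
    (Sinv : H →L[ℝ] H) (hSinv₁ : ∀ x, S (Sinv x) = x) (hSinv₂ : ∀ x, Sinv (S x) = x)
    (hzer : ∃ w, ∃ u ∈ A w, u + M w + C w = 0)
    (z zbar : ℕ → H) (lam α : ℕ → ℝ) (δ : ℝ)
    (hδdef : δ = 2 - 1/(2*β)) (hδ : 0 < δ)
    (hres : ∀ n, (P + K) (z n) - M (z n) - C (z n) - (P + K) (zbar n) ∈ A (zbar n))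
    (hα : ∀ n, zbar n - z n ≠ 0 →
      α n = lam n * ⟪zbar n - z n, P (zbar n - z n)⟫_ℝ /
        ⟪((P + K) + ContinuousLinearMap.adjoint M) (zbar n - z n),
          Sinv (((P + K) + ContinuousLinearMap.adjoint M) (zbar n - z n))⟫_ℝ)
    (hα0 : ∀ n, zbar n - z n = 0 → α n = 0)
    (hupd : ∀ n, z (n+1) = z n +
      α n • Sinv (((P + K) + ContinuousLinearMap.adjoint M) (zbar n - z n)))
    (hlam : ∀ n, lam n ∈ Set.Icc (0:ℝ) δ)
    (hliminf : 0 < Filter.liminf (fun n => lam n * (δ - lam n)) Filter.atTop) :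
    ∃ zstar : H, (∃ u ∈ A zstar, u + M zstar + C zstar = 0) ∧
      ∀ w : H, Filter.Tendsto (fun n => ⟪z n, w⟫_ℝ) Filter.atTop (nhds ⟪zstar, w⟫_ℝ) := by
  classical
  obtain ⟨zs, us, hzs, h0⟩ := hzer
  have hAmono := hA.1
  have hPpos0 : ∀ x, (0:ℝ) ≤ ⟪P x, x⟫_ℝ := fun x => le_trans (by positivity) (hPpos x)
  have hSpos0 : ∀ x, (0:ℝ) ≤ ⟪S x, x⟫_ℝ := fun x => le_trans (by positivity) (hSpos x)
  have hβpos : (0:ℝ) < β := by linarith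
  -- Lipschitz-type bound for C
  have hLip : ∀ x y, ‖C x - C y‖ ≤ ((‖P‖+1)/β) * ‖x - y‖ := by
    intro x y
    by_cases hcz : C x - C y = 0
    · rw [hcz, norm_zero]; positivity
    · have h1 := hC x y
      have h2 := inv_lower P hPsym hPpos0 Pinv hPinv₁ (C x - C y)
      have h3 : ⟪C x - C y, x - y⟫_ℝ ≤ ‖C x - C y‖ * ‖x - y‖ := real_inner_le_norm _ _
      have hcpos : 0 < ‖C x - C y‖ := norm_pos_iff.mpr hcz
      have hP1 : (0:ℝ) < ‖P‖ + 1 := by positivity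
      rw [div_mul_eq_mul_div, le_div_iff₀ hβpos]
      nlinarith [h1, h2, h3, hcpos, mul_le_mul_of_nonneg_left h2 (le_of_lt hβpos),
        mul_le_mul_of_nonneg_left h3 (le_of_lt hP1)]
  -- Fejér monotonicity for the zero point zs
  obtain ⟨φ, hφ0, hφdec, hφlow⟩ := fejer_step A hAmono M hM P ρ hρ hPsym hPpos Pinv hPinv₁
    C β hβ hC K hK S σ hσ hSsym hSpos Sinv hSinv₁ z zbar lam α δ hδdef hres hα hα0 hupd hlam
    zs us hzs h0
  -- for any zero point p, the S-distance converges
  have fejgen : ∀ p up, up ∈ A p → up + M p + C p = 0 →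
      ∃ L, Tendsto (fun n => ⟪z n - p, S (z n - p)⟫_ℝ) atTop (𝓝 L) := by
    intro p up hup h0p
    obtain ⟨ψ, hψ0, hψdec, _⟩ := fejer_step A hAmono M hM P ρ hρ hPsym hPpos Pinv hPinv₁
      C β hβ hC K hK S σ hσ hSsym hSpos Sinv hSinv₁ z zbar lam α δ hδdef hres hα hα0 hupd hlam
      p up hup h0p
    have hanti : Antitone (fun n => ⟪z n - p, S (z n - p)⟫_ℝ) := by
      apply antitone_nat_of_succ_le
      intro n
      have := hψdec n
      have := hψ0 n
      linarith
    have hbdd : BddBelow (Set.range (fun n => ⟪z n - p, S (z n - p)⟫_ℝ)) := by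
      refine ⟨0, ?_⟩
      rintro x ⟨n, rfl⟩
      have := hSpos0 (z n - p)
      rw [real_inner_comm] at this
      exact this
    exact ⟨_, tendsto_atTop_ciInf hanti hbdd⟩
  obtain ⟨L0, hL0⟩ := fejgen zs us hzs h0
  have ha0 : ∀ n, (0:ℝ) ≤ ⟪z n - zs, S (z n - zs)⟫_ℝ := fun n => by
    have := hSpos0 (z n - zs); rwa [real_inner_comm] at this
  have hφlim : Tendsto φ atTop (𝓝 0) := by
    have h1 : Tendsto (fun n => ⟪z (n+1) - zs, S (z (n+1) - zs)⟫_ℝ) atTop (𝓝 L0) :=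
      hL0.comp (tendsto_add_atTop_nat 1)
    have h2 : Tendsto (fun n => ⟪z n - zs, S (z n - zs)⟫_ℝ
        - ⟪z (n+1) - zs, S (z (n+1) - zs)⟫_ℝ) atTop (𝓝 (L0 - L0)) := hL0.sub h1
    rw [sub_self] at h2
    exact squeeze_zero (fun n => hφ0 n) (fun n => by linarith [hφdec n]) h2
  -- eventual lower bound on lam (δ - lam)
  have hεev : ∀ᶠ n in atTop,
      (liminf (fun n => lam n * (δ - lam n)) atTop)/2 < lam n * (δ - lam n) := by
    apply eventually_lt_of_lt_liminf
    · linarith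
    · exact Filter.isBoundedUnder_of
        ⟨0, fun n => mul_nonneg (hlam n).1 (by linarith [(hlam n).2])⟩
  have hc0pos : (0:ℝ) < (liminf (fun n => lam n * (δ - lam n)) atTop)/2 := by linarith
  -- z̃ → 0
  have hnsq : Tendsto (fun n => ‖zbar n - z n‖^2) atTop (𝓝 0) := by
    have B1pos : (0:ℝ) < ‖Sinv‖ * ‖(P + K) + ContinuousLinearMap.adjoint M‖^2 + 1 := by positivity
    have hub : ∀ᶠ n in atTop, ‖zbar n - z n‖^2 ≤
        ((‖Sinv‖ * ‖(P + K) + ContinuousLinearMap.adjoint M‖^2 + 1)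
          /(ρ^2 * ((liminf (fun n => lam n * (δ - lam n)) atTop)/2))) * φ n := by
      filter_upwards [hεev] with n hlt
      have hlow := hφlow n
      rw [div_mul_eq_mul_div, le_div_iff₀ (by positivity)]
      nlinarith [hlow, mul_nonneg (mul_nonneg (sq_nonneg ρ) (le_of_lt hc0pos)) (sq_nonneg ‖zbar n - z n‖),
        mul_nonneg (sq_nonneg ρ) (sq_nonneg ‖zbar n - z n‖), hlt]
    have hcm : Tendsto (fun n => ((‖Sinv‖ * ‖(P + K) + ContinuousLinearMap.adjoint M‖^2 + 1)
          /(ρ^2 * ((liminf (fun n => lam n * (δ - lam n)) atTop)/2))) * φ n) atTop (𝓝 0) := by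
      simpa using hφlim.const_mul ((‖Sinv‖ * ‖(P + K) + ContinuousLinearMap.adjoint M‖^2 + 1)
          /(ρ^2 * ((liminf (fun n => lam n * (δ - lam n)) atTop)/2)))
    exact tendsto_of_tendsto_of_tendsto_of_le_of_le' tendsto_const_nhds hcm
      (Filter.Eventually.of_forall (fun n => sq_nonneg _)) hub
  have hn1 : Tendsto (fun n => ‖zbar n - z n‖) atTop (𝓝 0) := by
    have h1 : Tendsto (fun n => Real.sqrt (‖zbar n - z n‖^2)) atTop (𝓝 (Real.sqrt 0)) :=
      hnsq.sqrt
    simpa [Real.sqrt_sq (norm_nonneg _)] using h1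
  have hztil : Tendsto (fun n => zbar n - z n) atTop (𝓝 0) :=
    squeeze_zero_norm (fun n => le_refl _) hn1
  -- boundedness
  have hanti0 : Antitone (fun n => ⟪z n - zs, S (z n - zs)⟫_ℝ) := by
    apply antitone_nat_of_succ_le
    intro n
    have := hφdec n
    have := hφ0 n
    linarith
  have hzb2 : ∀ n, ‖z n - zs‖^2 ≤ ⟪z 0 - zs, S (z 0 - zs)⟫_ℝ/σ := by
    intro n
    have h1 : σ * ‖z n - zs‖^2 ≤ ⟪z n - zs, S (z n - zs)⟫_ℝ := by
      have := hSpos (z n - zs); rwa [real_inner_comm] at this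
    have h2 : ⟪z n - zs, S (z n - zs)⟫_ℝ ≤ ⟪z 0 - zs, S (z 0 - zs)⟫_ℝ :=
      hanti0 (Nat.zero_le n)
    rw [le_div_iff₀ hσ]
    linarith
  have hzRn : ∀ n, ‖z n‖ ≤ ‖zs‖ + Real.sqrt (⟪z 0 - zs, S (z 0 - zs)⟫_ℝ/σ) := by
    intro n
    have h1 : ‖z n‖ ≤ ‖zs‖ + ‖z n - zs‖ := by
      have : z n = zs + (z n - zs) := by abel
      calc ‖z n‖ = ‖zs + (z n - zs)‖ := by rw [← this]
      _ ≤ ‖zs‖ + ‖z n - zs‖ := norm_add_le _ _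
    have h2 : ‖z n - zs‖ ≤ Real.sqrt (⟪z 0 - zs, S (z 0 - zs)⟫_ℝ/σ) := by
      have := Real.sqrt_le_sqrt (hzb2 n)
      rwa [Real.sqrt_sq (norm_nonneg _)] at this
    linarith
  obtain ⟨Rt, hRt⟩ : ∃ Rt, ∀ n, ‖zbar n - z n‖ ≤ Rt := by
    obtain ⟨Rt, hRt⟩ := hn1.bddAbove_range
    exact ⟨Rt, fun n => hRt (Set.mem_range_self n)⟩
  have hzbarb : ∀ n, ‖zbar n‖ ≤ (‖zs‖ + Real.sqrt (⟪z 0 - zs, S (z 0 - zs)⟫_ℝ/σ)) + Rt := by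
    intro n
    have : zbar n = z n + (zbar n - z n) := by abel
    calc ‖zbar n‖ = ‖z n + (zbar n - z n)‖ := by rw [← this]
    _ ≤ ‖z n‖ + ‖zbar n - z n‖ := norm_add_le _ _
    _ ≤ _ := by
        have := hzRn n
        have := hRt n
        linarith
  have hCb : ∀ n, ‖C (zbar n)‖ ≤ ‖C zs‖ + ((‖P‖+1)/β) *
      ((‖zs‖ + Real.sqrt (⟪z 0 - zs, S (z 0 - zs)⟫_ℝ/σ)) + Rt + ‖zs‖) := by
    intro n
    have h1 : ‖C (zbar n)‖ ≤ ‖C (zbar n) - C zs‖ + ‖C zs‖ := by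
      have : C (zbar n) = (C (zbar n) - C zs) + C zs := by abel
      calc ‖C (zbar n)‖ = ‖(C (zbar n) - C zs) + C zs‖ := by rw [← this]
      _ ≤ ‖C (zbar n) - C zs‖ + ‖C zs‖ := norm_add_le _ _
    have h2 := hLip (zbar n) zs
    have h3 : ‖zbar n - zs‖ ≤ (‖zs‖ + Real.sqrt (⟪z 0 - zs, S (z 0 - zs)⟫_ℝ/σ)) + Rt + ‖zs‖ := by
      calc ‖zbar n - zs‖ ≤ ‖zbar n‖ + ‖zs‖ := norm_sub_le _ _
      _ ≤ _ := by linarith [hzbarb n]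
    have hLc : (0:ℝ) ≤ (‖P‖+1)/β := by positivity
    have h4 : ((‖P‖+1)/β) * ‖zbar n - zs‖ ≤ ((‖P‖+1)/β) *
        ((‖zs‖ + Real.sqrt (⟪z 0 - zs, S (z 0 - zs)⟫_ℝ/σ)) + Rt + ‖zs‖) :=
      mul_le_mul_of_nonneg_left h3 hLc
    linarith
  -- the error sequence
  set e : ℕ → H := fun n => -((P + K) (zbar n - z n)) + M (zbar n - z n)
    + (C (zbar n) - C (z n)) with he_def
  have hmem : ∀ n, e n - M (zbar n) - C (zbar n) ∈ A (zbar n) := by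
    intro n
    have heq : e n - M (zbar n) - C (zbar n)
        = (P + K) (z n) - M (z n) - C (z n) - (P + K) (zbar n) := by
      simp only [he_def, map_sub]
      abel
    rw [heq]
    exact hres n
  have he : Tendsto e atTop (𝓝 0) := by
    have h1 : Tendsto (fun n => (P + K) (zbar n - z n)) atTop (𝓝 0) := by
      simpa only [Function.comp_def, map_zero] using ((P + K).continuous.tendsto 0).comp hztil
    have h2 : Tendsto (fun n => M (zbar n - z n)) atTop (𝓝 0) := by
      simpa only [Function.comp_def, map_zero] using (M.continuous.tendsto 0).comp hztil
    have h3 : Tendsto (fun n => C (zbar n) - C (z n)) atTop (𝓝 0) := by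
      apply squeeze_zero_norm (a := fun n => ((‖P‖+1)/β) * ‖zbar n - z n‖)
      · intro n
        have := hLip (zbar n) (z n)
        simpa using this
      · simpa using hn1.const_mul ((‖P‖+1)/β)
    have := (h1.neg.add h2).add h3
    simpa [he_def] using this
  -- transfer of weak limits from zbar to z
  have htransfer : ∀ (V : Filter ℕ), V ≤ atTop → ∀ (pt : H) (w : H),
      Tendsto (fun n => ⟪zbar n, w⟫_ℝ) V (𝓝 ⟪pt, w⟫_ℝ) →
      Tendsto (fun n => ⟪z n, w⟫_ℝ) V (𝓝 ⟪pt, w⟫_ℝ) := by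
    intro V hV pt w hzbw
    have hd0 : Tendsto (fun n => ⟪zbar n - z n, w⟫_ℝ) atTop (𝓝 0) := by
      apply squeeze_zero_norm (a := fun n => ‖zbar n - z n‖ * ‖w‖)
      · intro n; exact abs_real_inner_le_norm _ _
      · simpa using hn1.mul_const ‖w‖
    have hd : Tendsto (fun n => ⟪zbar n - z n, w⟫_ℝ) V (𝓝 0) := hd0.mono_left hV
    have := hzbw.sub hd
    rw [sub_zero] at this
    have hfun : (fun n => ⟪zbar n, w⟫_ℝ - ⟪zbar n - z n, w⟫_ℝ) = fun n => ⟪z n, w⟫_ℝ := by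
      funext n
      rw [inner_sub_left]
      ring
    rwa [hfun] at this
  -- cluster along the canonical ultrafilter
  have hatne : (atTop : Filter ℕ).NeBot := atTop_neBot
  have h𝒰 : ((Ultrafilter.of (atTop : Filter ℕ)) : Filter ℕ) ≤ atTop := Ultrafilter.of_le _
  obtain ⟨z1, hz1A, hz1w⟩ := cluster_zer A hA M hM P hPsym hPpos0 Pinv hPinv₁ C β hβpos hC
    zbar e hmem he _ hzbarb _ hCb (Ultrafilter.of (atTop : Filter ℕ)) h𝒰
  have hz1wz : ∀ c : H, Tendsto (fun n => ⟪z n, c⟫_ℝ)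
      ((Ultrafilter.of (atTop : Filter ℕ)) : Filter ℕ) (𝓝 ⟪z1, c⟫_ℝ) :=
    fun c => htransfer _ h𝒰 z1 c (hz1w c)
  refine ⟨z1, ⟨-(M z1 + C z1), hz1A, by abel⟩, ?_⟩
  intro w
  by_contra hcon
  rw [Metric.tendsto_atTop] at hcon
  push_neg at hcon
  obtain ⟨ε, hεpos, hfreq'⟩ := hcon
  have hfreq : ∃ᶠ n in atTop, ε ≤ dist (⟪z n, w⟫_ℝ) (⟪z1, w⟫_ℝ) :=
    frequently_atTop.mpr hfreq'
  have hneB : (atTop ⊓ 𝓟 {n | ε ≤ dist (⟪z n, w⟫_ℝ) (⟪z1, w⟫_ℝ)}).NeBot :=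
    frequently_iff_neBot.mp hfreq
  have hVle := Ultrafilter.of_le (atTop ⊓ 𝓟 {n | ε ≤ dist (⟪z n, w⟫_ℝ) (⟪z1, w⟫_ℝ)})
  have hV : ((Ultrafilter.of (atTop ⊓ 𝓟 {n | ε ≤ dist (⟪z n, w⟫_ℝ) (⟪z1, w⟫_ℝ)})) : Filter ℕ)
      ≤ atTop := hVle.trans inf_le_left
  have hEV : {n | ε ≤ dist (⟪z n, w⟫_ℝ) (⟪z1, w⟫_ℝ)} ∈
      ((Ultrafilter.of (atTop ⊓ 𝓟 {n | ε ≤ dist (⟪z n, w⟫_ℝ) (⟪z1, w⟫_ℝ)})) : Filter ℕ) :=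
    hVle (Filter.mem_inf_of_right (Filter.mem_principal_self _))
  obtain ⟨z2, hz2A, hz2w⟩ := cluster_zer A hA M hM P hPsym hPpos0 Pinv hPinv₁ C β hβpos hC
    zbar e hmem he _ hzbarb _ hCb
    (Ultrafilter.of (atTop ⊓ 𝓟 {n | ε ≤ dist (⟪z n, w⟫_ℝ) (⟪z1, w⟫_ℝ)})) hV
  have hz2wz : ∀ c : H, Tendsto (fun n => ⟪z n, c⟫_ℝ)
      ((Ultrafilter.of (atTop ⊓ 𝓟 {n | ε ≤ dist (⟪z n, w⟫_ℝ) (⟪z1, w⟫_ℝ)})) : Filter ℕ)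
      (𝓝 ⟪z2, c⟫_ℝ) :=
    fun c => htransfer _ hV z2 c (hz2w c)
  -- Opial argument: z1 = z2
  obtain ⟨L1, hL1⟩ := fejgen z1 (-(M z1 + C z1)) hz1A (by abel)
  obtain ⟨L2, hL2⟩ := fejgen z2 (-(M z2 + C z2)) hz2A (by abel)
  have hiden : ∀ (p : H) (n : ℕ), ⟪z n - p, S (z n - p)⟫_ℝ
      = ⟪z n, S (z n)⟫_ℝ - 2*⟪z n, S p⟫_ℝ + ⟪p, S p⟫_ℝ := by
    intro p n
    rw [map_sub, inner_sub_left, inner_sub_right, inner_sub_right]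
    have c1 : ⟪p, S (z n)⟫_ℝ = ⟪z n, S p⟫_ℝ := by
      rw [← hSsym p (z n)]
      exact real_inner_comm _ _
    rw [c1]
    ring
  have hT : Tendsto (fun n => ⟪z n, S z1⟫_ℝ - ⟪z n, S z2⟫_ℝ) atTop
      (𝓝 (((⟪z1, S z1⟫_ℝ - ⟪z2, S z2⟫_ℝ) - (L1 - L2))/2)) := by
    have hdiff : Tendsto (fun n => ⟪z n - z1, S (z n - z1)⟫_ℝ - ⟪z n - z2, S (z n - z2)⟫_ℝ)
        atTop (𝓝 (L1 - L2)) := hL1.sub hL2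
    have hcomb : Tendsto (fun n => ((⟪z1, S z1⟫_ℝ - ⟪z2, S z2⟫_ℝ)
        - (⟪z n - z1, S (z n - z1)⟫_ℝ - ⟪z n - z2, S (z n - z2)⟫_ℝ))/2) atTop
        (𝓝 (((⟪z1, S z1⟫_ℝ - ⟪z2, S z2⟫_ℝ) - (L1 - L2))/2)) :=
      ((tendsto_const_nhds (x := ⟪z1, S z1⟫_ℝ - ⟪z2, S z2⟫_ℝ)).sub hdiff).div_const 2
    have hfun : (fun n => ⟪z n, S z1⟫_ℝ - ⟪z n, S z2⟫_ℝ)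
        = fun n => ((⟪z1, S z1⟫_ℝ - ⟪z2, S z2⟫_ℝ)
          - (⟪z n - z1, S (z n - z1)⟫_ℝ - ⟪z n - z2, S (z n - z2)⟫_ℝ))/2 := by
      funext n
      rw [hiden z1 n, hiden z2 n]
      ring
    rwa [hfun]
  have huniq1 : ⟪z1, S z1⟫_ℝ - ⟪z1, S z2⟫_ℝ
      = ((⟪z1, S z1⟫_ℝ - ⟪z2, S z2⟫_ℝ) - (L1 - L2))/2 := by
    have l1 : Tendsto (fun n => ⟪z n, S z1⟫_ℝ - ⟪z n, S z2⟫_ℝ)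
        ((Ultrafilter.of (atTop : Filter ℕ)) : Filter ℕ)
        (𝓝 (⟪z1, S z1⟫_ℝ - ⟪z1, S z2⟫_ℝ)) := (hz1wz (S z1)).sub (hz1wz (S z2))
    exact tendsto_nhds_unique l1 (hT.mono_left h𝒰)
  have huniq2 : ⟪z2, S z1⟫_ℝ - ⟪z2, S z2⟫_ℝ
      = ((⟪z1, S z1⟫_ℝ - ⟪z2, S z2⟫_ℝ) - (L1 - L2))/2 := by
    have l1 : Tendsto (fun n => ⟪z n, S z1⟫_ℝ - ⟪z n, S z2⟫_ℝ)
        ((Ultrafilter.of (atTop ⊓ 𝓟 {n | ε ≤ dist (⟪z n, w⟫_ℝ) (⟪z1, w⟫_ℝ)})) : Filter ℕ)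
        (𝓝 (⟪z2, S z1⟫_ℝ - ⟪z2, S z2⟫_ℝ)) := (hz2wz (S z1)).sub (hz2wz (S z2))
    exact tendsto_nhds_unique l1 (hT.mono_left hV)
  have hq0 : ⟪z1 - z2, S (z1 - z2)⟫_ℝ = 0 := by
    have c2 : ⟪z2, S z1⟫_ℝ = ⟪z1, S z2⟫_ℝ := by
      rw [← hSsym z2 z1]
      exact real_inner_comm _ _
    rw [map_sub, inner_sub_left, inner_sub_right, inner_sub_right, c2]
    linarith [huniq1, huniq2]
  have hz12 : z1 = z2 := by
    have h1 := hSpos (z1 - z2)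
    rw [real_inner_comm] at h1
    rw [hq0] at h1
    have h2 : ‖z1 - z2‖^2 ≤ 0 := by nlinarith
    have h3 : ‖z1 - z2‖ = 0 := by nlinarith [sq_nonneg ‖z1 - z2‖, norm_nonneg (z1 - z2)]
    have := norm_eq_zero.mp h3
    exact sub_eq_zero.mp this
  -- contradiction
  have hz2wzw := hz2wz w
  rw [← hz12] at hz2wzw
  have hdist : Tendsto (fun n => dist (⟪z n, w⟫_ℝ) (⟪z1, w⟫_ℝ))
      ((Ultrafilter.of (atTop ⊓ 𝓟 {n | ε ≤ dist (⟪z n, w⟫_ℝ) (⟪z1, w⟫_ℝ)})) : Filter ℕ)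
      (𝓝 0) := by
    have := hz2wzw.dist (tendsto_const_nhds (x := ⟪z1, w⟫_ℝ))
    simpa using this
  have hfin : ε ≤ 0 := ge_of_tendsto hdist (Filter.eventually_iff.mpr hEV)
  linarith
end

section
/- (Theorem 3.2(i), monotone decrease of the residual). Under the AFBA setup and stepsize condition, let D = (H₀ + M*)* S⁻¹ (H₀ + M*) and let c₁, c₂ > 0 satisfy c₁⟨x, P x⟩ ≤ ⟨x, D x⟩ ≤ c₂⟨x, P x⟩ for all x ∈ H. If in addition λ_n ∈ [0, c₁δ/c₂] for all n, then the sequence (‖z̃_n‖_D²) is monotonically nonincreasing: ‖z̃_{n+1}‖_D² ≤ ‖z̃_n‖_D² for all n. -/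
open scoped InnerProductSpace
open Filter Topology

/-- The operator `D = (H₀ + M*)* S⁻¹ (H₀ + M*)` where `H₀ = P + K`. -/
noncomputable def Dop {H : Type*} [NormedAddCommGroup H] [InnerProductSpace ℝ H]
    [CompleteSpace H] (P K M Sinv : H →L[ℝ] H) : H →L[ℝ] H :=
  (ContinuousLinearMap.adjoint ((P + K) + ContinuousLinearMap.adjoint M)).comp
    (Sinv.comp ((P + K) + ContinuousLinearMap.adjoint M))

lemma afba_arith (a δ β c₂ AP Q11 Q12 Q22 QΔ : ℝ) (hβ0 : 0 < β) (hapos : 0 < a)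
    (step2 : (4*β-1)*AP + 4*β*(a*(Q12-Q11)) ≤ 0)
    (hquad : QΔ = Q22 - 2*Q12 + Q11) (hDΔ : QΔ ≤ c₂*AP) (hAPnn : 0 ≤ AP)
    (hac : a*c₂ ≤ δ) (hδβ : δ*(2*β) = 4*β-1) : Q22 ≤ Q11 := by
  have h2β : (0:ℝ) < 2*β := by linarith
  have k1 : δ * AP + 2*(a*Q12) - 2*(a*Q11) ≤ 0 := by
    by_contra hcon
    push_neg at hcon
    nlinarith [mul_pos h2β hcon]
  have e2 : (a * c₂) * AP ≤ δ * AP := mul_le_mul_of_nonneg_right hac hAPnn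
  have e1 : a * QΔ ≤ a * (c₂ * AP) := mul_le_mul_of_nonneg_left hDΔ hapos.le
  have k2 : a*Q22 - a*Q11 ≤ 0 := by nlinarith [e1, e2, k1]
  by_contra hcon
  push_neg at hcon
  nlinarith [mul_pos hapos (sub_pos.mpr hcon)]

lemma afba_step {H : Type*} [NormedAddCommGroup H] [InnerProductSpace ℝ H] [CompleteSpace H]
    (P K M Sinv Pinv : H →L[ℝ] H)
    (hPsym : ∀ x y, ⟪P x, y⟫_ℝ = ⟪x, P y⟫_ℝ)
    (hK : ∀ x y, ⟪K x, y⟫_ℝ = - ⟪x, K y⟫_ℝ)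
    (hSinvsym : ∀ x y : H, ⟪Sinv x, y⟫_ℝ = ⟪x, Sinv y⟫_ℝ)
    (hPinv₁ : ∀ x, P (Pinv x) = x)
    (β : ℝ) (hβ : 1/4 < β)
    (ρ : ℝ) (hρ : 0 < ρ)
    (hPpos : ∀ x, ρ * ‖x‖ ^ 2 ≤ ⟪P x, x⟫_ℝ)
    (t1 t2 w d : H) (a : ℝ)
    (hd : d = a • Sinv (((P + K) + ContinuousLinearMap.adjoint M) t1))
    (hmono : 0 ≤ ⟪(t2 - t1) + d, -((P + K) (t2 - t1) + M d + w)⟫_ℝ)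
    (hMd : (0:ℝ) ≤ ⟪M d, d⟫_ℝ)
    (hwd : β * ⟪w, Pinv w⟫_ℝ ≤ ⟪w, d⟫_ℝ)
    (δ c₁ c₂ lam : ℝ) (hδdef : δ = 2 - 1/(2*β))
    (hc₁ : 0 < c₁) (hc₂ : 0 < c₂)
    (hD₁ : ∀ x : H, c₁ * ⟪x, P x⟫_ℝ ≤ ⟪x, Dop P K M Sinv x⟫_ℝ)
    (hD₂ : ∀ x : H, ⟪x, Dop P K M Sinv x⟫_ℝ ≤ c₂ * ⟪x, P x⟫_ℝ)
    (ha : t1 ≠ 0 → a = lam * ⟪t1, P t1⟫_ℝ /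
      ⟪((P + K) + ContinuousLinearMap.adjoint M) t1,
        Sinv (((P + K) + ContinuousLinearMap.adjoint M) t1)⟫_ℝ)
    (ha0 : t1 = 0 → a = 0)
    (hlam0 : 0 ≤ lam) (hlam : lam ≤ c₁ * δ / c₂) :
    ⟪t2, Dop P K M Sinv t2⟫_ℝ ≤ ⟪t1, Dop P K M Sinv t1⟫_ℝ := by
  have hβ0 : (0:ℝ) < β := by linarith
  set L : H →L[ℝ] H := (P + K) + ContinuousLinearMap.adjoint M with hLdef
  have hDQ : ∀ x y : H, ⟪x, Dop P K M Sinv y⟫_ℝ = ⟪L x, Sinv (L y)⟫_ℝ := by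
    intro x y
    simp only [Dop, ContinuousLinearMap.comp_apply, hLdef]
    exact ContinuousLinearMap.adjoint_inner_right _ _ _
  set Δ : H := t2 - t1 with hΔ
  have hKzero : ∀ x : H, ⟪x, K x⟫_ℝ = 0 := by
    intro x
    have h1 := hK x x
    have h2 := real_inner_comm (K x) x
    linarith
  -- expand monotonicity inequality
  have hAexp : ⟪Δ, P Δ⟫_ℝ + ⟪d, L Δ⟫_ℝ + ⟪M d, d⟫_ℝ + ⟪Δ, w⟫_ℝ + ⟪w, d⟫_ℝ ≤ 0 := by
    have h1 : ⟪Δ + d, (P + K) Δ + M d + w⟫_ℝ ≤ 0 := by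
      rw [inner_neg_right] at hmono; linarith
    have h2 : ⟪Δ + d, (P + K) Δ + M d + w⟫_ℝ
        = ⟪Δ, P Δ⟫_ℝ + ⟪d, L Δ⟫_ℝ + ⟪M d, d⟫_ℝ + ⟪Δ, w⟫_ℝ + ⟪w, d⟫_ℝ := by
      simp only [hLdef, ContinuousLinearMap.add_apply, inner_add_left, inner_add_right,
        ContinuousLinearMap.adjoint_inner_right, hKzero]
      linear_combination (- real_inner_comm Δ (M d)) - (real_inner_comm d (M d)) - (real_inner_comm d w)
    linarith [h2 ▸ h1]
  -- Young's inequality via positivity of P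
  have hPpos' : ∀ x : H, (0:ℝ) ≤ ⟪x, P x⟫_ℝ := by
    intro x
    rw [real_inner_comm]
    exact le_trans (by positivity) (hPpos x)
  have hYoung : -(⟪Δ, P Δ⟫_ℝ) - (4*β^2) * ⟪w, Pinv w⟫_ℝ ≤ (4*β) * ⟪Δ, w⟫_ℝ := by
    have hv := hPpos' (Δ + (2*β) • Pinv w)
    have hexp : ⟪Δ + (2*β) • Pinv w, P (Δ + (2*β) • Pinv w)⟫_ℝ
        = ⟪Δ, P Δ⟫_ℝ + (4*β) * ⟪Δ, w⟫_ℝ + (4*β^2) * ⟪w, Pinv w⟫_ℝ := by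
      have hcross : ⟪Pinv w, P Δ⟫_ℝ = ⟪Δ, w⟫_ℝ := by
        rw [← hPsym, hPinv₁, real_inner_comm]
      simp only [map_add, map_smul, inner_add_left, inner_add_right,
        real_inner_smul_left, real_inner_smul_right, hPinv₁, hcross]
      rw [real_inner_comm (Pinv w) w]
      ring
    rw [hexp] at hv
    linarith
  -- combined: (4β-1)⟪Δ,PΔ⟫ + 4β⟪d,LΔ⟫ ≤ 0
  have step2 : (4*β - 1) * ⟪Δ, P Δ⟫_ℝ + (4*β) * ⟪d, L Δ⟫_ℝ ≤ 0 := by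
    nlinarith [mul_le_mul_of_nonneg_left hAexp hβ0.le,
      mul_nonneg hβ0.le hMd, mul_le_mul_of_nonneg_left hwd hβ0.le, hYoung]
  have h4β1 : (0:ℝ) < 4*β - 1 := by linarith
  by_cases ha' : a = 0
  · -- trivial step: d = 0, hence Δ = 0
    have hd0 : d = 0 := by rw [hd, ha', zero_smul]
    have hdL0 : ⟪d, L Δ⟫_ℝ = 0 := by rw [hd0, inner_zero_left]
    have hΔP : ⟪Δ, P Δ⟫_ℝ ≤ 0 := by nlinarith [step2]
    have hρΔ : ρ * ‖Δ‖^2 ≤ 0 := le_trans (le_trans (hPpos Δ) (le_of_eq (real_inner_comm _ _))) hΔP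
    have hΔ0 : Δ = 0 := by
      by_contra hne
      have h3 : 0 < ‖Δ‖ := norm_pos_iff.mpr hne
      nlinarith [mul_pos hρ (pow_pos h3 2)]
    have ht : t2 = t1 := by
      have := hΔ ▸ hΔ0
      exact sub_eq_zero.mp this
    rw [ht]
  · -- nontrivial step
    have ht1 : t1 ≠ 0 := fun h => ha' (ha0 h)
    have hform := ha ht1
    have hp : (0:ℝ) < ⟪t1, P t1⟫_ℝ := by
      have h1 := hPpos t1
      have h3 : 0 < ‖t1‖ := norm_pos_iff.mpr ht1
      have h2 : (0:ℝ) < ρ * ‖t1‖^2 := by positivity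
      rw [real_inner_comm]
      linarith
    have hq1 : c₁ * ⟪t1, P t1⟫_ℝ ≤ ⟪L t1, Sinv (L t1)⟫_ℝ := by
      rw [← hDQ]; exact hD₁ t1
    have hq : (0:ℝ) < ⟪L t1, Sinv (L t1)⟫_ℝ := lt_of_lt_of_le (mul_pos hc₁ hp) hq1
    have hlampos : 0 < lam := by
      rcases lt_or_eq_of_le hlam0 with h | h
      · exact h
      · exfalso; apply ha'; rw [hform, ← h, zero_mul, zero_div]
    have hapos : 0 < a := by
      rw [hform]; exact div_pos (mul_pos hlampos hp) hq
    have hac₂ : a * c₂ ≤ δ := by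
      have h1 : a ≤ lam / c₁ := by
        rw [hform, div_le_div_iff₀ hq hc₁]
        nlinarith [mul_le_mul_of_nonneg_left hq1 hlam0]
      have h2 : lam * c₂ ≤ c₁ * δ := by
        rw [le_div_iff₀ hc₂] at hlam
        linarith
      have h3 : a * c₂ ≤ (lam / c₁) * c₂ := mul_le_mul_of_nonneg_right h1 hc₂.le
      have h4 : (lam / c₁) * c₂ ≤ δ := by
        rw [div_mul_eq_mul_div, div_le_iff₀ hc₁]
        linarith [h2]
      linarith
    -- inner product bookkeeping
    have hLΔ : L Δ = L t2 - L t1 := by rw [hΔ, map_sub]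
    have hdLval : ⟪d, L Δ⟫_ℝ = a * (⟪L t1, Sinv (L t2)⟫_ℝ - ⟪L t1, Sinv (L t1)⟫_ℝ) := by
      rw [hd, real_inner_smul_left, hLΔ, inner_sub_right, hSinvsym, hSinvsym]
    have hsym12 : ⟪L t2, Sinv (L t1)⟫_ℝ = ⟪L t1, Sinv (L t2)⟫_ℝ := by
      rw [← hSinvsym, real_inner_comm]
    have hquad : ⟪L Δ, Sinv (L Δ)⟫_ℝ
        = ⟪L t2, Sinv (L t2)⟫_ℝ - 2 * ⟪L t1, Sinv (L t2)⟫_ℝ + ⟪L t1, Sinv (L t1)⟫_ℝ := by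
      rw [hLΔ, inner_sub_left, map_sub, inner_sub_right, inner_sub_right, hsym12]
      ring
    have hDΔ : ⟪L Δ, Sinv (L Δ)⟫_ℝ ≤ c₂ * ⟪Δ, P Δ⟫_ℝ := by
      rw [← hDQ]; exact hD₂ Δ
    have hΔPnn : (0:ℝ) ≤ ⟪Δ, P Δ⟫_ℝ := hPpos' Δ
    rw [hDQ, hDQ]
    have hδβ : δ * (2*β) = 4*β - 1 := by rw [hδdef]; field_simp; ring
    rw [hdLval] at step2
    exact afba_arith a δ β c₂ ⟪Δ, P Δ⟫_ℝ ⟪L t1, Sinv (L t1)⟫_ℝ ⟪L t1, Sinv (L t2)⟫_ℝ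
      ⟪L t2, Sinv (L t2)⟫_ℝ ⟪L Δ, Sinv (L Δ)⟫_ℝ hβ0 hapos step2 hquad hDΔ hΔPnn hac₂ hδβ

/-- Theorem 3.2(i): the sequence `‖z̃ₙ‖_D²` is monotonically nonincreasing. -/
theorem afba_Dnorm_monotone
    {H : Type*} [NormedAddCommGroup H] [InnerProductSpace ℝ H] [CompleteSpace H]
    (A : H → Set H) (hA : IsMaxMonotone A)
    (M : H →L[ℝ] H) (hM : ∀ x, (0:ℝ) ≤ ⟪M x, x⟫_ℝ)
    (P : H →L[ℝ] H) (ρ : ℝ) (hρ : 0 < ρ)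
    (hPsym : ∀ x y, ⟪P x, y⟫_ℝ = ⟪x, P y⟫_ℝ)
    (hPpos : ∀ x, ρ * ‖x‖ ^ 2 ≤ ⟪P x, x⟫_ℝ)
    (Pinv : H →L[ℝ] H) (hPinv₁ : ∀ x, P (Pinv x) = x) (hPinv₂ : ∀ x, Pinv (P x) = x)
    (C : H → H) (β : ℝ) (hβ : 1/4 < β)
    (hC : ∀ z z', β * ⟪C z - C z', Pinv (C z - C z')⟫_ℝ ≤ ⟪C z - C z', z - z'⟫_ℝ)
    (K : H →L[ℝ] H) (hK : ∀ x y, ⟪K x, y⟫_ℝ = - ⟪x, K y⟫_ℝ)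
    (S : H →L[ℝ] H) (σ : ℝ) (hσ : 0 < σ)
    (hSsym : ∀ x y, ⟪S x, y⟫_ℝ = ⟪x, S y⟫_ℝ)
    (hSpos : ∀ x, σ * ‖x‖ ^ 2 ≤ ⟪S x, x⟫_ℝ)
    (Sinv : H →L[ℝ] H) (hSinv₁ : ∀ x, S (Sinv x) = x) (hSinv₂ : ∀ x, Sinv (S x) = x)
    (hzer : ∃ w, ∃ u ∈ A w, u + M w + C w = 0)
    (z zbar : ℕ → H) (lam α : ℕ → ℝ) (δ : ℝ)
    (hδdef : δ = 2 - 1/(2*β)) (hδ : 0 < δ)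
    (hres : ∀ n, (P + K) (z n) - M (z n) - C (z n) - (P + K) (zbar n) ∈ A (zbar n))
    (hα : ∀ n, zbar n - z n ≠ 0 →
      α n = lam n * ⟪zbar n - z n, P (zbar n - z n)⟫_ℝ /
        ⟪((P + K) + ContinuousLinearMap.adjoint M) (zbar n - z n),
          Sinv (((P + K) + ContinuousLinearMap.adjoint M) (zbar n - z n))⟫_ℝ)
    (hα0 : ∀ n, zbar n - z n = 0 → α n = 0)
    (hupd : ∀ n, z (n+1) = z n +
      α n • Sinv (((P + K) + ContinuousLinearMap.adjoint M) (zbar n - z n)))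
    (hlam : ∀ n, lam n ∈ Set.Icc (0:ℝ) δ)
    (hliminf : 0 < Filter.liminf (fun n => lam n * (δ - lam n)) Filter.atTop)
    (c₁ c₂ : ℝ) (hc₁ : 0 < c₁) (hc₂ : 0 < c₂)
    (hD₁ : ∀ x : H, c₁ * ⟪x, P x⟫_ℝ ≤ ⟪x, Dop P K M Sinv x⟫_ℝ)
    (hD₂ : ∀ x : H, ⟪x, Dop P K M Sinv x⟫_ℝ ≤ c₂ * ⟪x, P x⟫_ℝ)
    (hlam' : ∀ n, lam n ∈ Set.Icc (0:ℝ) (c₁ * δ / c₂)) :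
    ∀ n, ⟪zbar (n+1) - z (n+1), Dop P K M Sinv (zbar (n+1) - z (n+1))⟫_ℝ ≤
      ⟪zbar n - z n, Dop P K M Sinv (zbar n - z n)⟫_ℝ := by
  intro n
  have hSinvsym : ∀ x y : H, ⟪Sinv x, y⟫_ℝ = ⟪x, Sinv y⟫_ℝ := by
    intro x y
    conv_lhs => rw [← hSinv₁ y]
    rw [← hSsym, hSinv₁]
  have hmono0 := hA.1 (zbar (n+1)) (zbar n) _ _ (hres (n+1)) (hres n)
  have e1 : zbar (n+1) - zbar n
      = ((zbar (n+1) - z (n+1)) - (zbar n - z n)) + (z (n+1) - z n) := by abel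
  have e2 : ((P + K) (z (n+1)) - M (z (n+1)) - C (z (n+1)) - (P + K) (zbar (n+1)))
        - ((P + K) (z n) - M (z n) - C (z n) - (P + K) (zbar n))
      = -((P + K) ((zbar (n+1) - z (n+1)) - (zbar n - z n)) + M (z (n+1) - z n)
          + (C (z (n+1)) - C (z n))) := by
    simp only [map_sub]
    abel
  rw [e1, e2] at hmono0
  have hd : z (n+1) - z n
      = α n • Sinv (((P + K) + ContinuousLinearMap.adjoint M) (zbar n - z n)) := by
    rw [hupd n]; abel
  exact afba_step P K M Sinv Pinv hPsym hK hSinvsym hPinv₁ β hβ ρ hρ hPpos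
    (zbar n - z n) (zbar (n+1) - z (n+1)) (C (z (n+1)) - C (z n)) (z (n+1) - z n) (α n)
    hd hmono0 (hM (z (n+1) - z n)) (hC (z (n+1)) (z n)) δ c₁ c₂ (lam n) hδdef hc₁ hc₂
    hD₁ hD₂ (hα n) (hα0 n) (hlam' n).1 (hlam' n).2
end

section
/- (Theorem 3.2(ii), O(1/(n+1)) and o(1/(n+1)) rates). Under the AFBA setup and stepsize condition, let D = (H₀ + M*)* S⁻¹ (H₀ + M*) and let c₁, c₂ > 0 satisfy c₁⟨x, P x⟩ ≤ ⟨x, D x⟩ ≤ c₂⟨x, P x⟩ for all x ∈ H. If λ_n ∈ [0, c₁δ/c₂] for all n and there exists τ > 0 with λ_n(δ − λ_n) ≥ τ for all n, then for every z⋆ ∈ zer T and every n, ‖z̃_n‖_D² ≤ (c₂²/(τ(n+1)))‖z₀ − z⋆‖_S², and moreover (n+1)·‖z̃_n‖_D² → 0 as n → ∞. -/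
open scoped InnerProductSpace
open Filter Topology

set_option maxHeartbeats 1000000

private lemma quad_expand {H : Type*} [NormedAddCommGroup H] [InnerProductSpace ℝ H]
    (S : H →L[ℝ] H) (hS : ∀ x y, ⟪S x, y⟫_ℝ = ⟪x, S y⟫_ℝ) (a b : H) :
    ⟪a + b, S (a + b)⟫_ℝ = ⟪a, S a⟫_ℝ + 2 * ⟪a, S b⟫_ℝ + ⟪b, S b⟫_ℝ := by
  have hba : ⟪b, S a⟫_ℝ = ⟪a, S b⟫_ℝ := by
    rw [← hS a b, real_inner_comm]
  simp only [map_add, inner_add_left, inner_add_right, hba]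
  ring


private lemma o_rate (a : ℕ → ℝ) (ha : ∀ n, 0 ≤ a n) (hmono : ∀ n, a (n + 1) ≤ a n)
    (hsum : Summable a) :
    Filter.Tendsto (fun n : ℕ => ((n : ℝ) + 1) * a n) Filter.atTop (nhds 0) := by
  have hanti : ∀ m n, m ≤ n → a n ≤ a m := by
    intro m n h
    induction h with
    | refl => exact le_refl _
    | step _ ih => exact le_trans (hmono _) ih
  rw [Metric.tendsto_atTop]
  intro ε hε
  set s : ℝ := ∑' n, a n with hs
  have hS : Filter.Tendsto (fun n => ∑ i ∈ Finset.range n, a i) Filter.atTop (nhds s) :=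
    hsum.hasSum.tendsto_sum_nat
  have : ∀ᶠ m in Filter.atTop, s - ε / 2 < ∑ i ∈ Finset.range m, a i := by
    apply hS.eventually
    exact eventually_gt_nhds (by linarith)
  obtain ⟨m, hm⟩ := this.exists
  refine ⟨2 * m + 1, fun n hn => ?_⟩
  have hmn : m ≤ n + 1 := by omega
  have htail : ∑ k ∈ Finset.Ico m (n + 1), a k ≤ s - ∑ i ∈ Finset.range m, a i := by
    have h1 : ∑ i ∈ Finset.range (n + 1), a i ≤ s :=
      Summable.sum_le_tsum _ (fun i _ => ha i) hsum
    have h2 : ∑ i ∈ Finset.range m, a i + ∑ k ∈ Finset.Ico m (n + 1), a k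
        = ∑ i ∈ Finset.range (n + 1), a i := by
      simp only [Finset.range_eq_Ico]
      exact Finset.sum_Ico_consecutive _ (by omega) (by omega)
    linarith
  have hcard : ((n + 1 - m : ℕ) : ℝ) * a n ≤ ∑ k ∈ Finset.Ico m (n + 1), a k := by
    calc ((n + 1 - m : ℕ) : ℝ) * a n = ∑ _k ∈ Finset.Ico m (n + 1), a n := by
          rw [Finset.sum_const, Nat.card_Ico, nsmul_eq_mul]
      _ ≤ ∑ k ∈ Finset.Ico m (n + 1), a k :=
          Finset.sum_le_sum (fun k hk => hanti k n (by
            have := (Finset.mem_Ico.mp hk).2; omega))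
  have hfac : ((n : ℝ) + 1) ≤ 2 * ((n + 1 - m : ℕ) : ℝ) := by
    rw [Nat.cast_sub hmn]
    push_cast
    have : 2 * m + 1 ≤ n := hn
    have : (2 * m + 1 : ℝ) ≤ n := by exact_mod_cast this
    linarith
  have hval : ((n : ℝ) + 1) * a n < ε := by
    have h3 : ((n : ℝ) + 1) * a n ≤ 2 * (((n + 1 - m : ℕ) : ℝ) * a n) :=
      by nlinarith [ha n]
    linarith
  rw [Real.dist_eq, sub_zero, abs_of_nonneg (mul_nonneg (by positivity) (ha n))]
  exact hval

/-- Theorem 3.2(ii): big-O(1/(n+1)) and little-o(1/(n+1)) convergence rates for `‖z̃ₙ‖_D²`. -/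
theorem afba_convergence_rates
    {H : Type*} [NormedAddCommGroup H] [InnerProductSpace ℝ H] [CompleteSpace H]
    (A : H → Set H) (hA : IsMaxMonotone A)
    (M : H →L[ℝ] H) (hM : ∀ x, (0:ℝ) ≤ ⟪M x, x⟫_ℝ)
    (P : H →L[ℝ] H) (ρ : ℝ) (hρ : 0 < ρ)
    (hPsym : ∀ x y, ⟪P x, y⟫_ℝ = ⟪x, P y⟫_ℝ)
    (hPpos : ∀ x, ρ * ‖x‖ ^ 2 ≤ ⟪P x, x⟫_ℝ)
    (Pinv : H →L[ℝ] H) (hPinv₁ : ∀ x, P (Pinv x) = x) (hPinv₂ : ∀ x, Pinv (P x) = x)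
    (C : H → H) (β : ℝ) (hβ : 1/4 < β)
    (hC : ∀ z z', β * ⟪C z - C z', Pinv (C z - C z')⟫_ℝ ≤ ⟪C z - C z', z - z'⟫_ℝ)
    (K : H →L[ℝ] H) (hK : ∀ x y, ⟪K x, y⟫_ℝ = - ⟪x, K y⟫_ℝ)
    (S : H →L[ℝ] H) (σ : ℝ) (hσ : 0 < σ)
    (hSsym : ∀ x y, ⟪S x, y⟫_ℝ = ⟪x, S y⟫_ℝ)
    (hSpos : ∀ x, σ * ‖x‖ ^ 2 ≤ ⟪S x, x⟫_ℝ)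
    (Sinv : H →L[ℝ] H) (hSinv₁ : ∀ x, S (Sinv x) = x) (hSinv₂ : ∀ x, Sinv (S x) = x)
    (hzer : ∃ w, ∃ u ∈ A w, u + M w + C w = 0)
    (z zbar : ℕ → H) (lam α : ℕ → ℝ) (δ : ℝ)
    (hδdef : δ = 2 - 1/(2*β)) (hδ : 0 < δ)
    (hres : ∀ n, (P + K) (z n) - M (z n) - C (z n) - (P + K) (zbar n) ∈ A (zbar n))
    (hα : ∀ n, zbar n - z n ≠ 0 →
      α n = lam n * ⟪zbar n - z n, P (zbar n - z n)⟫_ℝ /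
        ⟪((P + K) + ContinuousLinearMap.adjoint M) (zbar n - z n),
          Sinv (((P + K) + ContinuousLinearMap.adjoint M) (zbar n - z n))⟫_ℝ)
    (hα0 : ∀ n, zbar n - z n = 0 → α n = 0)
    (hupd : ∀ n, z (n+1) = z n +
      α n • Sinv (((P + K) + ContinuousLinearMap.adjoint M) (zbar n - z n)))
    (hlam : ∀ n, lam n ∈ Set.Icc (0:ℝ) δ)
    (hliminf : 0 < Filter.liminf (fun n => lam n * (δ - lam n)) Filter.atTop)
    (c₁ c₂ : ℝ) (hc₁ : 0 < c₁) (hc₂ : 0 < c₂)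
    (hD₁ : ∀ x : H, c₁ * ⟪x, P x⟫_ℝ ≤ ⟪x, Dop P K M Sinv x⟫_ℝ)
    (hD₂ : ∀ x : H, ⟪x, Dop P K M Sinv x⟫_ℝ ≤ c₂ * ⟪x, P x⟫_ℝ)
    (hlam' : ∀ n, lam n ∈ Set.Icc (0:ℝ) (c₁ * δ / c₂))
    (τ : ℝ) (hτ : 0 < τ) (hτlam : ∀ n, τ ≤ lam n * (δ - lam n)) :
    (∀ zstar : H, (∃ u ∈ A zstar, u + M zstar + C zstar = 0) → ∀ n,
      ⟪zbar n - z n, Dop P K M Sinv (zbar n - z n)⟫_ℝ ≤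
        c₂ ^ 2 / (τ * ((n : ℝ) + 1)) * ⟪z 0 - zstar, S (z 0 - zstar)⟫_ℝ) ∧
    Filter.Tendsto
      (fun n : ℕ => ((n : ℝ) + 1) * ⟪zbar n - z n, Dop P K M Sinv (zbar n - z n)⟫_ℝ)
      Filter.atTop (nhds 0) := by
  obtain ⟨hAm, -⟩ := hA
  have hβ0 : (0:ℝ) < β := by linarith
  set L : H →L[ℝ] H := (P + K) + ContinuousLinearMap.adjoint M with hLdef
  -- basic forms
  have hDform : ∀ x y : H, ⟪x, Dop P K M Sinv y⟫_ℝ = ⟪L x, Sinv (L y)⟫_ℝ := by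
    intro x y
    rw [hLdef]
    simp only [Dop, ContinuousLinearMap.comp_apply, ContinuousLinearMap.adjoint_inner_right]
  have hSinvsym : ∀ x y : H, ⟪Sinv x, y⟫_ℝ = ⟪x, Sinv y⟫_ℝ := by
    intro x y
    calc ⟪Sinv x, y⟫_ℝ = ⟪Sinv x, S (Sinv y)⟫_ℝ := by rw [hSinv₁]
      _ = ⟪S (Sinv x), Sinv y⟫_ℝ := (hSsym _ _).symm
      _ = ⟪x, Sinv y⟫_ℝ := by rw [hSinv₁]
  have hSinvpos : ∀ w : H, 0 ≤ ⟪w, Sinv w⟫_ℝ := by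
    intro w
    have h1 := hSpos (Sinv w)
    have h2 : ⟪w, Sinv w⟫_ℝ = ⟪S (Sinv w), Sinv w⟫_ℝ := by rw [hSinv₁]
    nlinarith [sq_nonneg ‖Sinv w‖]
  have hDsym : ∀ x y : H, ⟪Dop P K M Sinv x, y⟫_ℝ = ⟪x, Dop P K M Sinv y⟫_ℝ := by
    intro x y
    rw [real_inner_comm, hDform y x, hDform x y, ← hSinvsym, real_inner_comm]
  have hQnn : ∀ x : H, 0 ≤ ⟪x, Dop P K M Sinv x⟫_ℝ := by
    intro x; rw [hDform]; exact hSinvpos _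
  have hPx : ∀ x : H, 0 ≤ ⟪x, P x⟫_ℝ := by
    intro x
    have h1 := hPpos x
    have h2 := real_inner_comm (P x) x
    nlinarith [sq_nonneg ‖x‖]
  have hPx' : ∀ x : H, x ≠ 0 → 0 < ⟪x, P x⟫_ℝ := by
    intro x hx
    have h1 := hPpos x
    have h2 := real_inner_comm (P x) x
    have h3 : 0 < ‖x‖ := norm_pos_iff.mpr hx
    nlinarith [mul_pos hρ (pow_pos h3 2)]
  -- Young's inequality with respect to P
  have hYoung : ∀ e w : H,
      0 ≤ β * ⟪w, Pinv w⟫_ℝ + ⟪e, w⟫_ℝ + 1/(4*β) * ⟪e, P e⟫_ℝ := by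
    intro e w
    have hv : 0 ≤ ⟪Pinv w + (1/(2*β)) • e, P (Pinv w + (1/(2*β)) • e)⟫_ℝ := hPx _
    have hPv : P (Pinv w + (1/(2*β)) • e) = w + (1/(2*β)) • P e := by
      rw [map_add, map_smul, hPinv₁]
    rw [hPv] at hv
    have hexp : ⟪Pinv w + (1/(2*β)) • e, w + (1/(2*β)) • P e⟫_ℝ
        = ⟪Pinv w, w⟫_ℝ + (1/(2*β)) * ⟪Pinv w, P e⟫_ℝ + (1/(2*β)) * ⟪e, w⟫_ℝ
          + (1/(2*β))^2 * ⟪e, P e⟫_ℝ := by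
      simp only [inner_add_left, inner_add_right, real_inner_smul_left, real_inner_smul_right]
      ring
    have hc1 : ⟪Pinv w, P e⟫_ℝ = ⟪e, w⟫_ℝ := by
      rw [← hPsym, hPinv₁, real_inner_comm]
    have hc2 : ⟪Pinv w, w⟫_ℝ = ⟪w, Pinv w⟫_ℝ := real_inner_comm _ _
    rw [hexp, hc1, hc2] at hv
    have hβne : β ≠ 0 := ne_of_gt hβ0
    have hfin : β * (⟪w, Pinv w⟫_ℝ + (1/(2*β)) * ⟪e, w⟫_ℝ + (1/(2*β)) * ⟪e, w⟫_ℝ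
        + (1/(2*β))^2 * ⟪e, P e⟫_ℝ)
        = β * ⟪w, Pinv w⟫_ℝ + ⟪e, w⟫_ℝ + 1/(4*β) * ⟪e, P e⟫_ℝ := by
      field_simp
      ring
    nlinarith
  -- the core monotonicity inequality
  have hδ2 : δ/2 = 1 - 1/(4*β) := by rw [hδdef]; field_simp; ring
  have core : ∀ x y xb yb : H,
      (P + K) x - M x - C x - (P + K) xb ∈ A xb →
      (P + K) y - M y - C y - (P + K) yb ∈ A yb →
      ⟪x - y, L ((xb - x) - (yb - y))⟫_ℝ
        ≤ -(δ/2) * ⟪(xb - x) - (yb - y), P ((xb - x) - (yb - y))⟫_ℝ := by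
    intro x y xb yb hx hy
    have hmono := hAm xb yb _ _ hx hy
    have hdiff : ((P + K) x - M x - C x - (P + K) xb) - ((P + K) y - M y - C y - (P + K) yb)
        = -((P + K) ((xb - x) - (yb - y))) - M (x - y) - (C x - C y) := by
      simp only [map_sub]; abel
    have hxbyb : xb - yb = ((xb - x) - (yb - y)) + (x - y) := by abel
    rw [hdiff, hxbyb] at hmono
    set e := (xb - x) - (yb - y) with he
    set d := x - y with hd
    set w := C x - C y with hw
    have hexp : ⟪e + d, -((P + K) e) - M d - w⟫_ℝ
        = -(⟪e, (P + K) e⟫_ℝ) - ⟪e, M d⟫_ℝ - ⟪e, w⟫_ℝ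
          - ⟪d, (P + K) e⟫_ℝ - ⟪d, M d⟫_ℝ - ⟪d, w⟫_ℝ := by
      simp only [inner_add_left, inner_sub_right, inner_neg_right]
      ring
    rw [hexp] at hmono
    have hKe : ⟪e, K e⟫_ℝ = 0 := by
      have h1 := hK e e
      have h2 := real_inner_comm (K e) e
      linarith
    have hPKe : ⟪e, (P + K) e⟫_ℝ = ⟪e, P e⟫_ℝ := by
      simp only [ContinuousLinearMap.add_apply, inner_add_right, hKe, add_zero]
    have hMd : 0 ≤ ⟪d, M d⟫_ℝ := by
      have h1 := hM d
      have h2 := real_inner_comm (M d) d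
      linarith
    have hCd : β * ⟪w, Pinv w⟫_ℝ ≤ ⟪d, w⟫_ℝ := by
      have h1 := hC x y
      have h2 := real_inner_comm (C x - C y) (x - y)
      rw [hw, hd]
      linarith
    have hY := hYoung e w
    have hgoal1 : ⟪d, L e⟫_ℝ = ⟪d, (P + K) e⟫_ℝ + ⟪e, M d⟫_ℝ := by
      rw [hLdef]
      simp only [ContinuousLinearMap.add_apply, inner_add_right,
        ContinuousLinearMap.adjoint_inner_right]
      rw [real_inner_comm (M d) e]
    have hδpe : -(δ/2) * ⟪e, P e⟫_ℝ = -(⟪e, P e⟫_ℝ) + 1/(4*β) * ⟪e, P e⟫_ℝ := by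
      rw [hδ2]; ring
    rw [hgoal1, hδpe]
    rw [hPKe] at hmono
    linarith [hmono, hMd, hCd, hY]
    -- positivity of lambda
  have hlampos : ∀ n, 0 < lam n := by
    intro n
    by_contra h
    push_neg at h
    have h1 := (hlam n).1
    have h2 : lam n = 0 := le_antisymm h h1
    have h3 := hτlam n
    rw [h2] at h3
    simp at h3
    linarith
  have hSnn : ∀ x : H, 0 ≤ ⟪x, S x⟫_ℝ := by
    intro x
    have h1 := hSpos x
    have h2 := real_inner_comm (S x) x
    nlinarith [sq_nonneg ‖x‖]
  -- facts about the stepsize α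
  have hαfact : ∀ n, zbar n - z n ≠ 0 →
      0 < α n ∧ α n * ⟪zbar n - z n, Dop P K M Sinv (zbar n - z n)⟫_ℝ
          = lam n * ⟪zbar n - z n, P (zbar n - z n)⟫_ℝ ∧ α n ≤ δ / c₂ := by
    intro n h0
    have hp := hPx' _ h0
    have hq : 0 < ⟪zbar n - z n, Dop P K M Sinv (zbar n - z n)⟫_ℝ :=
      lt_of_lt_of_le (mul_pos hc₁ hp) (hD₁ _)
    have hαn : α n = lam n * ⟪zbar n - z n, P (zbar n - z n)⟫_ℝ
        / ⟪zbar n - z n, Dop P K M Sinv (zbar n - z n)⟫_ℝ := by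
      rw [hα n h0, hDform]
    have hαq : α n * ⟪zbar n - z n, Dop P K M Sinv (zbar n - z n)⟫_ℝ
        = lam n * ⟪zbar n - z n, P (zbar n - z n)⟫_ℝ := by
      rw [hαn, div_mul_cancel₀ _ (ne_of_gt hq)]
    refine ⟨?_, hαq, ?_⟩
    · rw [hαn]
      exact div_pos (mul_pos (hlampos n) hp) hq
    · set pn := ⟪zbar n - z n, P (zbar n - z n)⟫_ℝ with hpn
      set qn := ⟪zbar n - z n, Dop P K M Sinv (zbar n - z n)⟫_ℝ with hqn
      rw [hαn, div_le_div_iff₀ hq hc₂]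
      have h1 : lam n * pn ≤ c₁ * δ / c₂ * pn :=
        mul_le_mul_of_nonneg_right (hlam' n).2 (le_of_lt hp)
      have h2 : c₁ * pn ≤ qn := hD₁ _
      have h3 : c₁ * δ / c₂ * pn * c₂ = δ * (c₁ * pn) := by
        field_simp
      have h4 : δ * (c₁ * pn) ≤ δ * qn := mul_le_mul_of_nonneg_left h2 (le_of_lt hδ)
      nlinarith [mul_le_mul_of_nonneg_right h1 (le_of_lt hc₂)]
  -- monotonicity of the residual
  have qmono : ∀ n, ⟪zbar (n+1) - z (n+1), Dop P K M Sinv (zbar (n+1) - z (n+1))⟫_ℝ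
      ≤ ⟪zbar n - z n, Dop P K M Sinv (zbar n - z n)⟫_ℝ := by
    intro n
    have keyB := core (z (n+1)) (z n) (zbar (n+1)) (zbar n) (hres (n+1)) (hres n)
    set e := (zbar (n+1) - z (n+1)) - (zbar n - z n) with he
    have hd : z (n+1) - z n = α n • Sinv (L (zbar n - z n)) := by rw [hupd n]; abel
    rw [hd] at keyB
    have hBform : ⟪α n • Sinv (L (zbar n - z n)), L e⟫_ℝ
        = α n * ⟪zbar n - z n, Dop P K M Sinv e⟫_ℝ := by
      rw [real_inner_smul_left, hDform, hSinvsym]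
    rw [hBform] at keyB
    have hsplit : zbar (n+1) - z (n+1) = (zbar n - z n) + e := by rw [he]; abel
    have hquad := quad_expand (Dop P K M Sinv) hDsym (zbar n - z n) e
    rw [← hsplit] at hquad
    by_cases h0 : zbar n - z n = 0
    · rw [hα0 n h0, zero_mul] at keyB
      have hPe0 : ⟪e, P e⟫_ℝ = 0 := le_antisymm (by nlinarith [hδ]) (hPx e)
      have he0 : e = 0 := by
        by_contra hne
        exact absurd hPe0 (ne_of_gt (hPx' e hne))
      rw [hquad, he0]
      simp
    · obtain ⟨hαpos, hαq, hαle⟩ := hαfact n h0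
      have hE := hQnn e
      have hD2e := hD₂ e
      have hPe := hPx e
      have h1 : α n * (2 * ⟪zbar n - z n, Dop P K M Sinv e⟫_ℝ
          + ⟪e, Dop P K M Sinv e⟫_ℝ) ≤ 0 := by
        have h2 : α n * ⟪e, Dop P K M Sinv e⟫_ℝ ≤ δ/c₂ * ⟪e, Dop P K M Sinv e⟫_ℝ :=
          mul_le_mul_of_nonneg_right hαle hE
        have h3 : δ/c₂ * ⟪e, Dop P K M Sinv e⟫_ℝ ≤ δ/c₂ * (c₂ * ⟪e, P e⟫_ℝ) :=
          mul_le_mul_of_nonneg_left hD2e (by positivity)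
        have h4 : δ/c₂ * (c₂ * ⟪e, P e⟫_ℝ) = δ * ⟪e, P e⟫_ℝ := by
          field_simp
        nlinarith [keyB]
      have h5 : 2 * ⟪zbar n - z n, Dop P K M Sinv e⟫_ℝ + ⟪e, Dop P K M Sinv e⟫_ℝ ≤ 0 := by
        by_contra hcon
        push_neg at hcon
        nlinarith [mul_pos hαpos hcon]
      rw [hquad]
      linarith
  -- Fejér-type descent inequality
  have step : ∀ zstar : H, (∃ u ∈ A zstar, u + M zstar + C zstar = 0) → ∀ n,
      ⟪z (n+1) - zstar, S (z (n+1) - zstar)⟫_ℝ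
        + τ/c₂^2 * ⟪zbar n - z n, Dop P K M Sinv (zbar n - z n)⟫_ℝ
      ≤ ⟪z n - zstar, S (z n - zstar)⟫_ℝ := by
    intro zstar hz n
    obtain ⟨u, huA, hueq⟩ := hz
    have hstar : (P + K) zstar - M zstar - C zstar - (P + K) zstar ∈ A zstar := by
      have hu : (P + K) zstar - M zstar - C zstar - (P + K) zstar = u := by
        have hu2 : u = -(M zstar + C zstar) := by
          rw [add_assoc] at hueq
          exact eq_neg_of_add_eq_zero_left hueq
        rw [hu2]; abel
      rw [hu]; exact huA
    have keyA := core (z n) zstar (zbar n) zstar (hres n) hstar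
    have hzz : (zbar n - z n) - (zstar - zstar) = zbar n - z n := by abel
    rw [hzz] at keyA
    have hzn : z (n+1) - zstar = (z n - zstar) + α n • Sinv (L (zbar n - z n)) := by
      rw [hupd n]; abel
    have hquad := quad_expand S hSsym (z n - zstar) (α n • Sinv (L (zbar n - z n)))
    rw [← hzn] at hquad
    have hb1 : ⟪z n - zstar, S (α n • Sinv (L (zbar n - z n)))⟫_ℝ
        = α n * ⟪z n - zstar, L (zbar n - z n)⟫_ℝ := by
      rw [map_smul, real_inner_smul_right, hSinv₁]
    have hb2 : ⟪α n • Sinv (L (zbar n - z n)), S (α n • Sinv (L (zbar n - z n)))⟫_ℝ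
        = α n^2 * ⟪zbar n - z n, Dop P K M Sinv (zbar n - z n)⟫_ℝ := by
      rw [hDform, map_smul, real_inner_smul_left, real_inner_smul_right, hSinv₁,
        real_inner_comm (L (zbar n - z n)) (Sinv (L (zbar n - z n)))]
      ring
    by_cases h0 : zbar n - z n = 0
    · rw [hupd n, hα0 n h0, h0]
      simp
    · obtain ⟨hαpos, hαq, hαle⟩ := hαfact n h0
      have hp := hPx' _ h0
      have hq : 0 < ⟪zbar n - z n, Dop P K M Sinv (zbar n - z n)⟫_ℝ :=
        lt_of_lt_of_le (mul_pos hc₁ hp) (hD₁ _)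
      set pn := ⟪zbar n - z n, P (zbar n - z n)⟫_ℝ with hpn
      set qn := ⟪zbar n - z n, Dop P K M Sinv (zbar n - z n)⟫_ℝ with hqn
      have hq2 : τ/c₂^2 * qn * qn ≤ (α n * (δ - lam n) * pn) * qn := by
        have hr : (α n * (δ - lam n) * pn) * qn = lam n * (δ - lam n) * pn^2 := by
          calc (α n * (δ - lam n) * pn) * qn = (α n * qn) * ((δ - lam n) * pn) := by ring
            _ = lam n * pn * ((δ - lam n) * pn) := by rw [hαq]
            _ = lam n * (δ - lam n) * pn^2 := by ring
        rw [hr]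
        have h6 : qn ≤ c₂ * pn := hD₂ _
        have h7 : τ ≤ lam n * (δ - lam n) := hτlam n
        have h8 : qn^2 ≤ c₂^2 * pn^2 := by nlinarith
        have h9 : τ * qn^2 ≤ lam n * (δ - lam n) * (c₂^2 * pn^2) :=
          mul_le_mul h7 h8 (by positivity) (le_trans (le_of_lt hτ) h7)
        have hdiv : τ/c₂^2 * c₂^2 = τ := div_mul_cancel₀ τ (by positivity)
        refine le_of_mul_le_mul_right ?_ (show (0:ℝ) < c₂^2 by positivity)
        calc τ/c₂^2 * qn * qn * c₂^2 = (τ/c₂^2 * c₂^2) * qn^2 := by ring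
          _ = τ * qn^2 := by rw [hdiv]
          _ ≤ lam n * (δ - lam n) * (c₂^2 * pn^2) := h9
          _ = lam n * (δ - lam n) * pn^2 * c₂^2 := by ring
      have hfin : τ/c₂^2 * qn ≤ α n * (δ - lam n) * pn :=
        le_of_mul_le_mul_right hq2 hq
      have h2a : α n * ⟪z n - zstar, L (zbar n - z n)⟫_ℝ ≤ α n * (-(δ/2) * pn) :=
        mul_le_mul_of_nonneg_left keyA (le_of_lt hαpos)
      have hsq : α n^2 * qn = α n * (lam n * pn) := by
        calc α n^2 * qn = α n * (α n * qn) := by ring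
          _ = α n * (lam n * pn) := by rw [hαq]
      rw [hquad, hb1, hb2]
      nlinarith [h2a, hsq, hfin]
  -- summed inequality
  have hsum : ∀ zstar : H, (∃ u ∈ A zstar, u + M zstar + C zstar = 0) → ∀ n,
      ∑ k ∈ Finset.range (n+1), ⟪zbar k - z k, Dop P K M Sinv (zbar k - z k)⟫_ℝ
        ≤ c₂^2/τ * ⟪z 0 - zstar, S (z 0 - zstar)⟫_ℝ := by
    intro zstar hz n
    have key : ∀ m : ℕ, ⟪z (m+1) - zstar, S (z (m+1) - zstar)⟫_ℝ
        + τ/c₂^2 * ∑ k ∈ Finset.range (m+1),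
            ⟪zbar k - z k, Dop P K M Sinv (zbar k - z k)⟫_ℝ
        ≤ ⟪z 0 - zstar, S (z 0 - zstar)⟫_ℝ := by
      intro m
      induction m with
      | zero => simpa using step zstar hz 0
      | succ m ih =>
        have h1 := step zstar hz (m+1)
        rw [Finset.sum_range_succ]
        nlinarith [h1, ih]
    have h2 := key n
    have h3 := hSnn (z (n+1) - zstar)
    have hpos : (0:ℝ) < τ/c₂^2 := by positivity
    refine le_of_mul_le_mul_right ?_ hpos
    have hone : c₂^2/τ * ⟪z 0 - zstar, S (z 0 - zstar)⟫_ℝ * (τ/c₂^2)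
        = ⟪z 0 - zstar, S (z 0 - zstar)⟫_ℝ := by
      field_simp
    rw [hone]
    nlinarith [h2, h3]
  -- antitonicity across indices
  have hanti : ∀ k n : ℕ, k ≤ n →
      ⟪zbar n - z n, Dop P K M Sinv (zbar n - z n)⟫_ℝ
        ≤ ⟪zbar k - z k, Dop P K M Sinv (zbar k - z k)⟫_ℝ := by
    intro k n h
    induction h with
    | refl => exact le_refl _
    | step _ ih => exact le_trans (qmono _) ih
  constructor
  · -- part (i)
    intro zstar hz n
    have h1 : ((n:ℝ)+1) * ⟪zbar n - z n, Dop P K M Sinv (zbar n - z n)⟫_ℝ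
        ≤ ∑ k ∈ Finset.range (n+1), ⟪zbar k - z k, Dop P K M Sinv (zbar k - z k)⟫_ℝ := by
      calc ((n:ℝ)+1) * ⟪zbar n - z n, Dop P K M Sinv (zbar n - z n)⟫_ℝ
          = ∑ _k ∈ Finset.range (n+1),
              ⟪zbar n - z n, Dop P K M Sinv (zbar n - z n)⟫_ℝ := by
            rw [Finset.sum_const, Finset.card_range, nsmul_eq_mul]
            push_cast
            ring
        _ ≤ _ := Finset.sum_le_sum (fun k hk =>
            hanti k n (by exact Nat.lt_succ_iff.mp (Finset.mem_range.mp hk)))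
    have h2 := hsum zstar hz n
    have h3 : ((n:ℝ)+1) * ⟪zbar n - z n, Dop P K M Sinv (zbar n - z n)⟫_ℝ
        ≤ c₂^2/τ * ⟪z 0 - zstar, S (z 0 - zstar)⟫_ℝ := le_trans h1 h2
    have hn1 : (0:ℝ) < τ * ((n:ℝ)+1) := by positivity
    rw [div_mul_eq_mul_div, le_div_iff₀ hn1]
    have h4 : τ * (c₂^2/τ * ⟪z 0 - zstar, S (z 0 - zstar)⟫_ℝ)
        = c₂^2 * ⟪z 0 - zstar, S (z 0 - zstar)⟫_ℝ := by
      field_simp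
    nlinarith [mul_le_mul_of_nonneg_left h3 (le_of_lt hτ), h4]
  · -- part (ii)
    obtain ⟨w0, hw0⟩ := hzer
    have hQs : Summable (fun n => ⟪zbar n - z n, Dop P K M Sinv (zbar n - z n)⟫_ℝ) := by
      apply summable_of_sum_range_le
        (c := c₂^2/τ * ⟪z 0 - w0, S (z 0 - w0)⟫_ℝ) (fun n => hQnn _)
      intro n
      cases n with
      | zero =>
        simp only [Finset.range_zero, Finset.sum_empty]
        exact mul_nonneg (by positivity) (hSnn _)
      | succ m => exact hsum w0 hw0 m
    exact o_rate _ (fun n => hQnn _) qmono hQs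
end

section
/- (Theorem 3.7(i), convergence with merely positive P). Let H be a finite-dimensional real inner product space, let P be a self-adjoint bounded linear operator with ⟨P x, x⟩ ≥ 0 for all x (positive but not necessarily strongly positive), let M be a bounded linear operator with M* = −M, and set H₀ = P + M. Let A : H → Set H be maximally monotone, T z = {u + M z : u ∈ A z}, and assume zer T = {z : 0 ∈ T z} ≠ ∅. Suppose G : H → H is a continuous map such that for every z ∈ H, P z − P(G z) − M(G z) ∈ A(G z), and it is the unique such point (i.e. G = (H₀ + A)⁻¹ P is single-valued, full-domain, and continuous). Given z₀ and scalars λ_n with ε ≤ λ_n ≤ 2 − ε for all n and some ε > 0, define z̄_n = G(z_n) and z_{n+1} = z_n + λ_n(z̄_n − z_n). Then (z_n) converges to a point in zer T. -/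
/-!
Write `‖v‖²_P = ⟪P v, v⟫`. Monotonicity of `A` and skewness of `M` make the iteration Fejér
monotone in this seminorm with respect to every zero `w` of `T`:
`‖z (n+1) - w‖²_P + ε (2 - ε) ‖G (z n) - z n‖²_P ≤ ‖z n - w‖²_P`.
As `P` is merely positive, this controls `P z n` only. In finite dimension, however, `‖v‖_P → 0`
iff `P v → 0` (Cauchy–Schwarz for `P`, and the open mapping theorem for `P` onto its range), and
`G` factors continuously through `P`. So `P z n` has a cluster point `P x`, the point `G x` is a
zero of `T`, Fejér monotonicity with respect to `G x` gives `P z n → P (G x)`, hence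
`G (z n) → G x`, and `z (n+1) - G x = (1 - λₙ) (z n - G x) + λₙ (G (z n) - G x)` with
`|1 - λₙ| ≤ 1 - ε` forces `z n → G x`.
-/

open scoped InnerProductSpace
open Filter Topology

theorem tendsto_zero_of_add_mul_le {r d : ℕ → ℝ} {κ : ℝ} (hκ : 0 < κ) (hr : ∀ n, 0 ≤ r n)
    (hd : ∀ n, 0 ≤ d n) (h : ∀ n, r (n + 1) + κ * d n ≤ r n) : Tendsto d atTop (𝓝 0) := by
  have hanti : Antitone r := antitone_nat_of_succ_le fun n => by nlinarith [h n, hd n]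
  have hlim := tendsto_atTop_ciInf hanti ⟨0, Set.forall_mem_range.2 hr⟩
  have hdiff : Tendsto (fun n => (r n - r (n + 1)) / κ) atTop (𝓝 0) := by
    simpa using (hlim.sub (hlim.comp (tendsto_add_atTop_nat 1))).div_const κ
  exact squeeze_zero hd (fun n => (le_div_iff₀ hκ).2 (by linarith [h n])) hdiff

theorem tendsto_zero_of_le_mul_add {b c : ℕ → ℝ} {q : ℝ} (hq0 : 0 ≤ q) (hq1 : q < 1)
    (hb : ∀ n, 0 ≤ b n) (hc : Tendsto c atTop (𝓝 0)) (h : ∀ n, b (n + 1) ≤ q * b n + c n) :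
    Tendsto b atTop (𝓝 0) := by
  refine tendsto_order.2 ⟨fun a ha => .of_forall fun n => ha.trans_le (hb n), fun δ hδ => ?_⟩
  have hη : 0 < (1 - q) * (δ / 2) := by nlinarith
  obtain ⟨N, hN⟩ := eventually_atTop.1 (hc.eventually (ge_mem_nhds hη))
  have hle : ∀ m, b (N + m) ≤ arithGeom q ((1 - q) * (δ / 2)) (b N) m := by
    intro m
    induction m with
    | zero => exact le_rfl
    | succ m ih =>
      calc b (N + m + 1) ≤ q * b (N + m) + c (N + m) := h _
        _ ≤ q * arithGeom q ((1 - q) * (δ / 2)) (b N) m + (1 - q) * (δ / 2) := by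
          gcongr; exact hN _ (Nat.le_add_right N m)
  have hlim : Tendsto (arithGeom q ((1 - q) * (δ / 2)) (b N)) atTop (𝓝 (δ / 2)) := by
    convert tendsto_arithGeom_nhds_of_lt_one hq0 hq1 using 2
    field_simp [(sub_pos.2 hq1).ne']
  obtain ⟨K, hK⟩ := eventually_atTop.1 (hlim.eventually (gt_mem_nhds (half_lt_self hδ)))
  refine eventually_atTop.2 ⟨N + K, fun n hn => ?_⟩
  obtain ⟨m, rfl⟩ := Nat.exists_eq_add_of_le (le_of_add_le_left hn)
  exact (hle m).trans_lt (hK m (by omega))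

theorem tendsto_of_relaxed_step {E : Type*} [NormedAddCommGroup E] [NormedSpace ℝ E]
    {z g : ℕ → E} {lam : ℕ → ℝ} {ε : ℝ} (hε : 0 < ε) (hlam : ∀ n, ε ≤ lam n ∧ lam n ≤ 2 - ε)
    (hupd : ∀ n, z (n + 1) = z n + lam n • (g n - z n)) {y : E} (hg : Tendsto g atTop (𝓝 y)) :
    Tendsto z atTop (𝓝 y) := by
  have hε1 : ε ≤ 1 := by linarith [hlam 0]
  have hstep : ∀ n, ‖z (n + 1) - y‖ ≤ (1 - ε) * ‖z n - y‖ + 2 * ‖g n - y‖ := fun n => by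
    obtain ⟨hl, hu⟩ := hlam n
    have hsplit : z (n + 1) - y = (1 - lam n) • (z n - y) + lam n • (g n - y) := by
      rw [hupd n]; module
    calc ‖z (n + 1) - y‖ ≤ |1 - lam n| * ‖z n - y‖ + |lam n| * ‖g n - y‖ := by
          rw [hsplit, ← Real.norm_eq_abs, ← Real.norm_eq_abs, ← norm_smul, ← norm_smul]
          exact norm_add_le _ _
      _ ≤ (1 - ε) * ‖z n - y‖ + 2 * ‖g n - y‖ := by
          gcongr
          · exact abs_le.2 ⟨by linarith, by linarith⟩
          · exact abs_le.2 ⟨by linarith, by linarith⟩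
  rw [tendsto_iff_norm_sub_tendsto_zero] at hg ⊢
  exact tendsto_zero_of_le_mul_add (by linarith) (by linarith) (fun n => norm_nonneg _)
    (by simpa using hg.const_mul 2) hstep

namespace ContinuousLinearMap

section FiniteDimensional

variable {E F : Type*} [NormedAddCommGroup E] [NormedSpace ℝ E] [FiniteDimensional ℝ E]
  [NormedAddCommGroup F] [NormedSpace ℝ F]

theorem exists_preimage_norm_le_of_finiteDimensional (f : E →L[ℝ] F) :
    ∃ C > 0, ∀ x, ∃ x', f x' = f x ∧ ‖x'‖ ≤ C * ‖f x‖ := by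
  have := FiniteDimensional.complete ℝ E
  have := FiniteDimensional.complete ℝ (LinearMap.range (f : E →ₗ[ℝ] F))
  obtain ⟨C, hC, hpre⟩ :=
    f.rangeRestrict.exists_preimage_norm_le (LinearMap.surjective_rangeRestrict (f : E →ₗ[ℝ] F))
  refine ⟨C, hC, fun x => ?_⟩
  obtain ⟨x', hx', hnorm⟩ := hpre (f.rangeRestrict x)
  exact ⟨x', congrArg Subtype.val hx', hnorm⟩

theorem tendsto_comp_of_tendsto_apply (f : E →L[ℝ] F) {X : Type*} [TopologicalSpace X]
    {g : E → X} (hg : Continuous g) (hgf : ∀ a b, f a = f b → g a = g b)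
    {ι : Type*} {l : Filter ι} {u : ι → E} {x : E}
    (hu : Tendsto (fun i => f (u i)) l (𝓝 (f x))) : Tendsto (fun i => g (u i)) l (𝓝 (g x)) := by
  obtain ⟨C, -, hpre⟩ := f.exists_preimage_norm_le_of_finiteDimensional
  choose s hs hsnorm using fun i => hpre (u i - x)
  have hs0 : Tendsto s l (𝓝 0) := by
    refine squeeze_zero_norm hsnorm ?_
    simpa [map_sub] using ((tendsto_iff_norm_sub_tendsto_zero.1 hu).const_mul C)
  have hgs : ∀ i, g (u i) = g (x + s i) := fun i => hgf _ _ (by simp [hs i])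
  simpa [hgs, Function.comp_def] using (hg.tendsto x).comp (by simpa using hs0.const_add x)

theorem exists_subseq_tendsto_apply (f : E →L[ℝ] F) {u : ℕ → E}
    (hu : Bornology.IsBounded (Set.range fun n => f (u n))) :
    ∃ x, ∃ φ : ℕ → ℕ, StrictMono φ ∧ Tendsto (fun k => f (u (φ k))) atTop (𝓝 (f x)) := by
  obtain ⟨C, hC, hpre⟩ := f.exists_preimage_norm_le_of_finiteDimensional
  obtain ⟨R, hR⟩ := isBounded_iff_forall_norm_le.1 hu
  choose s hs hsnorm using fun n => hpre (u n)
  have hsR : ∀ n, s n ∈ Metric.closedBall 0 (C * R) := fun n => by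
    rw [mem_closedBall_zero_iff]
    exact (hsnorm n).trans (by gcongr; exact hR _ ⟨n, rfl⟩)
  obtain ⟨x, -, φ, hφ, hx⟩ := tendsto_subseq_of_bounded Metric.isBounded_closedBall hsR
  exact ⟨x, φ, hφ, by simpa [Function.comp_def, hs] using (f.continuous.tendsto x).comp hx⟩

end FiniteDimensional

variable {E : Type*} [NormedAddCommGroup E] [InnerProductSpace ℝ E] {P : E →L[ℝ] E}

theorem IsPositive.inner_apply_sq_le (hP : P.IsPositive) (u v : E) :
    ⟪P u, v⟫_ℝ ^ 2 ≤ ⟪P u, u⟫_ℝ * ⟪P v, v⟫_ℝ := by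
  have hsymm : ⟪P v, u⟫_ℝ = ⟪P u, v⟫_ℝ := by
    rw [hP.inner_left_eq_inner_right, real_inner_comm]
  have hquad : ∀ t : ℝ, 0 ≤ ⟪P v, v⟫_ℝ * (t * t) + 2 * ⟪P u, v⟫_ℝ * t + ⟪P u, u⟫_ℝ := fun t => by
    have := hP.inner_nonneg_left (u + t • v)
    simp only [map_add, map_smul, inner_add_left, inner_add_right, real_inner_smul_left,
      real_inner_smul_right, hsymm] at this
    linarith
  have := discrim_le_zero hquad
  rw [discrim] at this
  nlinarith

theorem IsPositive.norm_apply_sq_le (hP : P.IsPositive) (v : E) :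
    ‖P v‖ ^ 2 ≤ ‖P‖ * ⟪P v, v⟫_ℝ := by
  rcases (norm_nonneg (P v)).eq_or_lt with h | h
  · rw [← h]
    simpa using mul_nonneg (norm_nonneg P) (hP.inner_nonneg_left v)
  have hcs := hP.inner_apply_sq_le v (P v)
  rw [real_inner_self_eq_norm_sq] at hcs
  have hPP : ⟪P (P v), P v⟫_ℝ ≤ ‖P‖ * ‖P v‖ ^ 2 :=
    calc ⟪P (P v), P v⟫_ℝ ≤ ‖P (P v)‖ * ‖P v‖ := real_inner_le_norm _ _
      _ ≤ ‖P‖ * ‖P v‖ * ‖P v‖ := by gcongr; exact P.le_opNorm _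
      _ = ‖P‖ * ‖P v‖ ^ 2 := by ring
  have : ‖P v‖ ^ 2 * ‖P v‖ ^ 2 ≤ ‖P‖ * ⟪P v, v⟫_ℝ * ‖P v‖ ^ 2 := by
    nlinarith [hP.inner_nonneg_left v]
  exact le_of_mul_le_mul_right this (by positivity)

theorem IsPositive.tendsto_inner_apply_self_zero_iff [FiniteDimensional ℝ E] (hP : P.IsPositive)
    {ι : Type*} {l : Filter ι} {v : ι → E} :
    Tendsto (fun i => ⟪P (v i), v i⟫_ℝ) l (𝓝 0) ↔ Tendsto (fun i => P (v i)) l (𝓝 0) := by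
  constructor
  · intro h
    refine squeeze_zero_norm (a := fun i => √(‖P‖ * ⟪P (v i), v i⟫_ℝ)) (fun i => ?_) ?_
    · exact (Real.le_sqrt (norm_nonneg _)
        (mul_nonneg (norm_nonneg P) (hP.inner_nonneg_left _))).2 (hP.norm_apply_sq_le _)
    · simpa using (h.const_mul ‖P‖).sqrt
  · intro h
    obtain ⟨C, -, hpre⟩ := P.exists_preimage_norm_le_of_finiteDimensional
    -- `⟪P v, v⟫` only depends on `P v`, so it may be evaluated at a preimage of small norm
    have hbound : ∀ w, ⟪P w, w⟫_ℝ ≤ C * ‖P w‖ ^ 2 := fun w => by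
      obtain ⟨w', hw', hnorm⟩ := hpre w
      calc ⟪P w, w⟫_ℝ = ⟪w, P w'⟫_ℝ := by rw [hw', hP.inner_left_eq_inner_right]
        _ = ⟪P w, w'⟫_ℝ := by rw [← hP.inner_left_eq_inner_right]
        _ ≤ ‖P w‖ * (C * ‖P w‖) := (real_inner_le_norm _ _).trans (by gcongr)
        _ = C * ‖P w‖ ^ 2 := by ring
    refine squeeze_zero (fun i => hP.inner_nonneg_left _) (fun i => hbound _) ?_
    simpa using ((tendsto_zero_iff_norm_tendsto_zero.1 h).pow 2).const_mul C

theorem IsPositive.isBounded_range_apply (hP : P.IsPositive) {v : ℕ → E} {y : E} {R : ℝ}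
    (hR : ∀ n, ⟪P (v n - y), v n - y⟫_ℝ ≤ R) :
    Bornology.IsBounded (Set.range fun n => P (v n)) := by
  refine (Metric.isBounded_closedBall (x := P y) (r := √(‖P‖ * R))).subset
    (Set.range_subset_iff.2 fun n => ?_)
  rw [Metric.mem_closedBall, dist_eq_norm, ← map_sub]
  have hR0 : 0 ≤ R := (hP.inner_nonneg_left _).trans (hR 0)
  exact (Real.le_sqrt (norm_nonneg _) (mul_nonneg (norm_nonneg P) hR0)).2
    ((hP.norm_apply_sq_le _).trans (by gcongr; exact hR n))

theorem IsPositive.inner_relax_sub_add_le (hP : P.IsPositive) {x g w : E} {t : ℝ}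
    (ht : 0 ≤ t) (h : ⟪g - w, P (g - x)⟫_ℝ ≤ 0) :
    ⟪P (x + t • (g - x) - w), x + t • (g - x) - w⟫_ℝ + t * (2 - t) * ⟪P (g - x), g - x⟫_ℝ
      ≤ ⟪P (x - w), x - w⟫_ℝ := by
  have hx : x + t • (g - x) - w = (x - w) + t • (g - x) := by abel
  have hg : g - w = (x - w) + (g - x) := by abel
  rw [hg, inner_add_left] at h
  have hsymm : ⟪P (x - w), g - x⟫_ℝ = ⟪x - w, P (g - x)⟫_ℝ := hP.inner_left_eq_inner_right _ _
  rw [hx, map_add, map_smul, inner_add_left, inner_add_right, inner_add_right,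
    real_inner_smul_left, real_inner_smul_right, real_inner_smul_left, real_inner_smul_right,
    real_inner_comm (x - w) (P (g - x)), hsymm]
  rw [real_inner_comm (P (g - x)) (g - x)] at h
  nlinarith [hP.inner_nonneg_left (g - x)]

theorem IsPositive.tendsto_apply_of_antitone_of_subseq [FiniteDimensional ℝ E]
    (hP : P.IsPositive) {z : ℕ → E} {y : E} (hanti : Antitone fun n => ⟪P (z n - y), z n - y⟫_ℝ)
    {φ : ℕ → ℕ} (hφ : StrictMono φ) (hsub : Tendsto (fun k => P (z (φ k))) atTop (𝓝 (P y))) :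
    Tendsto (fun n => P (z n)) atTop (𝓝 (P y)) := by
  have hsub' : Tendsto (fun k => P (z (φ k) - y)) atTop (𝓝 0) := by
    simpa [map_sub] using hsub.sub_const (P y)
  have hlim := (tendsto_iff_tendsto_subseq_of_antitone hanti hφ.tendsto_atTop).2
    (hP.tendsto_inner_apply_self_zero_iff.2 hsub')
  simpa [map_sub] using (hP.tendsto_inner_apply_self_zero_iff.1 hlim).add_const (P y)

end ContinuousLinearMap

section Resolvent

variable {H : Type*} [NormedAddCommGroup H] [InnerProductSpace ℝ H] {P M : H →L[ℝ] H}
  {A : H → Set H} {G : H → H}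

theorem inner_sub_apply_sub_nonpos (hA : IsMonotoneSet A) (hM : ∀ x y, ⟪M x, y⟫_ℝ = -⟪x, M y⟫_ℝ)
    {a g w : H} (hg : P a - P g - M g ∈ A g) (hw : -M w ∈ A w) : ⟪g - w, P (g - a)⟫_ℝ ≤ 0 := by
  have hmono := hA g w _ _ hg hw
  have hskew : ⟪g - w, M (g - w)⟫_ℝ = 0 := by
    have := hM (g - w) (g - w)
    rw [real_inner_comm] at this
    linarith
  have hsplit : P a - P g - M g - -M w = -P (g - a) - M (g - w) := by
    simp only [map_sub]; abel
  rw [hsplit, inner_sub_right, inner_neg_right, hskew] at hmono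
  linarith

theorem resolvent_eq_of_apply_eq (hGres : ∀ z, P z - P (G z) - M (G z) ∈ A (G z))
    (hGuniq : ∀ z w, P z - P w - M w ∈ A w → w = G z) {a b : H} (hab : P a = P b) :
    G a = G b :=
  hGuniq b (G a) (hab ▸ hGres a)

theorem inner_iterate_add_le (hP : P.IsPositive) (hM : ∀ x y, ⟪M x, y⟫_ℝ = -⟪x, M y⟫_ℝ)
    (hA : IsMonotoneSet A) (hGres : ∀ z, P z - P (G z) - M (G z) ∈ A (G z))
    {z : ℕ → H} {lam : ℕ → ℝ} {ε : ℝ} (hε : 0 ≤ ε) (hlam : ∀ n, ε ≤ lam n ∧ lam n ≤ 2 - ε)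
    (hupd : ∀ n, z (n + 1) = z n + lam n • (G (z n) - z n)) {w : H} (hw : -M w ∈ A w) (n : ℕ) :
    ⟪P (z (n + 1) - w), z (n + 1) - w⟫_ℝ + ε * (2 - ε) * ⟪P (G (z n) - z n), G (z n) - z n⟫_ℝ
      ≤ ⟪P (z n - w), z n - w⟫_ℝ := by
  obtain ⟨hl, hu⟩ := hlam n
  have hfejer := hP.inner_relax_sub_add_le (hε.trans hl)
    (inner_sub_apply_sub_nonpos hA hM (hGres (z n)) hw)
  rw [← hupd n] at hfejer
  -- `lam (2 - lam) - ε (2 - ε) = (lam - ε) (2 - ε - lam) ≥ 0`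
  nlinarith [mul_nonneg (mul_nonneg (sub_nonneg.2 hl) (sub_nonneg.2 hu))
    (hP.inner_nonneg_left (G (z n) - z n))]

end Resolvent

/-- Theorem 3.7(i): convergence of the relaxed preconditioned proximal iteration with a
merely positive (not necessarily strongly positive) self-adjoint `P` and skew-adjoint `M`. -/
theorem positive_P_convergence
    {H : Type*} [NormedAddCommGroup H] [InnerProductSpace ℝ H] [FiniteDimensional ℝ H]
    (P : H →L[ℝ] H)
    (hPsym : ∀ x y, ⟪P x, y⟫_ℝ = ⟪x, P y⟫_ℝ)
    (hPpos : ∀ x, (0:ℝ) ≤ ⟪P x, x⟫_ℝ)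
    (M : H →L[ℝ] H) (hMskew : ∀ x y, ⟪M x, y⟫_ℝ = - ⟪x, M y⟫_ℝ)
    (A : H → Set H) (hA : IsMaxMonotone A)
    (hzer : ∃ w, ∃ u ∈ A w, u + M w = 0)
    (G : H → H) (hGcont : Continuous G)
    (hGres : ∀ z, P z - P (G z) - M (G z) ∈ A (G z))
    (hGuniq : ∀ z w, P z - P w - M w ∈ A w → w = G z)
    (z : ℕ → H) (lam : ℕ → ℝ) (ε : ℝ) (hε : 0 < ε)
    (hlam : ∀ n, ε ≤ lam n ∧ lam n ≤ 2 - ε)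
    (hupd : ∀ n, z (n+1) = z n + lam n • (G (z n) - z n)) :
    ∃ zstar : H, (∃ u ∈ A zstar, u + M zstar = 0) ∧
      Filter.Tendsto z Filter.atTop (nhds zstar) := by
  have hP : P.IsPositive := (P.isPositive_iff).2 ⟨hPsym, hPpos⟩
  have hκ : 0 < ε * (2 - ε) := mul_pos hε (by linarith [hlam 0])
  have hfejer {w : H} (hw : -M w ∈ A w) :=
    inner_iterate_add_le hP hMskew hA.1 hGres hε.le hlam hupd hw
  have hanti : ∀ {w}, -M w ∈ A w → Antitone fun n => ⟪P (z n - w), z n - w⟫_ℝ :=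
    fun hw => antitone_nat_of_succ_le fun n =>
      (le_add_of_nonneg_right (mul_nonneg hκ.le (hP.inner_nonneg_left _))).trans (hfejer hw n)
  have hGP : ∀ {a b}, P a = P b → G a = G b := resolvent_eq_of_apply_eq hGres hGuniq
  obtain ⟨w, u, hu, huw⟩ := hzer
  have hw : -M w ∈ A w := by rwa [← eq_neg_of_add_eq_zero_left huw]
  have hres : Tendsto (fun n => P (G (z n) - z n)) atTop (𝓝 0) :=
    hP.tendsto_inner_apply_self_zero_iff.1 <| tendsto_zero_of_add_mul_le hκ
      (r := fun n => ⟪P (z n - w), z n - w⟫_ℝ) (fun _ => hP.inner_nonneg_left _)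
      (fun _ => hP.inner_nonneg_left _) (hfejer hw)
  obtain ⟨x, φ, hφ, hx⟩ := P.exists_subseq_tendsto_apply
    (hP.isBounded_range_apply fun n => hanti hw (Nat.zero_le n))
  have hGφ : Tendsto (fun k => G (z (φ k))) atTop (𝓝 (G x)) :=
    P.tendsto_comp_of_tendsto_apply hGcont (fun _ _ => hGP) hx
  have hPGx : P (G x) = P x := by
    refine tendsto_nhds_unique ((P.continuous.tendsto _).comp hGφ) ?_
    simpa [map_sub, Function.comp_def] using hx.add (hres.comp hφ.tendsto_atTop)
  have hzero : -M (G x) ∈ A (G x) := by simpa [hPGx] using hGres x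
  have hPz : Tendsto (fun n => P (z n)) atTop (𝓝 (P (G x))) :=
    hP.tendsto_apply_of_antitone_of_subseq (hanti hzero) hφ (hPGx ▸ hx)
  have hGz : Tendsto (fun n => G (z n)) atTop (𝓝 (G x)) := by
    simpa [hGP hPGx] using P.tendsto_comp_of_tendsto_apply hGcont (fun _ _ => hGP) hPz
  exact ⟨G x, ⟨_, hzero, neg_add_cancel _⟩, tendsto_of_relaxed_step hε hlam hupd hGz⟩
end

section
/- (Theorem 3.7(ii), rates with merely positive P). In the setting of Theorem 3.7(i) (finite-dimensional H; P self-adjoint positive; M skew-adjoint; H₀ = P + M; A maximally monotone; T = A + M with zer T ≠ ∅; z̄_n = G(z_n) as the unique point with P z_n − P z̄_n − M z̄_n ∈ A z̄_n; z_{n+1} = z_n + λ_n(z̄_n − z_n); ε ≤ λ_n ≤ 2 − ε), let Q be the orthogonal projection onto the range of P and R = P + Id − Q. Then there exists τ > 0 such that for every z⋆ ∈ zer T and every n, ‖P z_{n+1} − P z_n‖² ≤ (‖P‖/(τ(n+1)))·‖Q z₀ − Q z⋆‖_R², and moreover (n+1)·‖P z_{n+1} − P z_n‖² → 0 as n → ∞.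 -/
open scoped InnerProductSpace
open Filter Topology

set_option maxHeartbeats 1000000

section Aux
variable {H : Type*} [NormedAddCommGroup H] [InnerProductSpace ℝ H]

lemma quad_cs (p q c : ℝ) (hp : 0 ≤ p) (hq : 0 ≤ q)
    (key : ∀ t : ℝ, 0 ≤ p + 2*t*c + t^2*q) : c^2 ≤ p*q := by
  rcases hq.lt_or_eq with hq' | hq'
  · have h := key (-c / q)
    have h5 : p + 2*(-c/q)*c + (-c/q)^2*q = p - c^2/q := by
      field_simp; ring
    rw [h5] at h
    have : c^2/q ≤ p := by linarith
    calc c^2 = c^2/q * q := by field_simp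
      _ ≤ p * q := mul_le_mul_of_nonneg_right this hq'.le
  · have hc : c = 0 := by
      by_contra hc
      have h1 := key (-(p+1)/(2*c))
      have h2 : 2 * (-(p+1)/(2*c)) * c = -(p+1) := by field_simp
      rw [← hq'] at h1
      nlinarith [h1, h2]
    rw [hc]
    nlinarith

lemma cs_aux (P : H →L[ℝ] H) (hPsym : ∀ x y, ⟪P x, y⟫_ℝ = ⟪x, P y⟫_ℝ)
    (hPpos : ∀ x, (0:ℝ) ≤ ⟪P x, x⟫_ℝ) (x y : H) :
    ⟪x, P y⟫_ℝ ^ 2 ≤ ⟪x, P x⟫_ℝ * ⟪y, P y⟫_ℝ := by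
  have hp : ∀ w : H, 0 ≤ ⟪w, P w⟫_ℝ := fun w => by
    have := hPpos w; rwa [real_inner_comm] at this
  have hsym : ⟪y, P x⟫_ℝ = ⟪x, P y⟫_ℝ := by rw [real_inner_comm, hPsym]
  refine quad_cs _ _ _ (hp x) (hp y) (fun t => ?_)
  have h := hp (x + t • y)
  simp only [inner_add_left, inner_add_right, map_add, map_smul,
    real_inner_smul_left, real_inner_smul_right] at h
  rw [hsym] at h
  nlinarith [h]

lemma opnorm_aux (P : H →L[ℝ] H) (hPsym : ∀ x y, ⟪P x, y⟫_ℝ = ⟪x, P y⟫_ℝ)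
    (hPpos : ∀ x, (0:ℝ) ≤ ⟪P x, x⟫_ℝ) (x : H) :
    ‖P x‖ ^ 2 ≤ ‖P‖ * ⟪x, P x⟫_ℝ := by
  have hp : ∀ w : H, 0 ≤ ⟪w, P w⟫_ℝ := fun w => by
    have := hPpos w; rwa [real_inner_comm] at this
  rcases eq_or_ne (P x) 0 with h | h
  · rw [h, norm_zero]
    simpa using mul_nonneg (norm_nonneg P) (hp x)
  · have h1 : ⟪x, P (P x)⟫_ℝ = ‖P x‖ ^ 2 := by
      rw [← hPsym, real_inner_self_eq_norm_sq]
    have h2 := cs_aux P hPsym hPpos x (P x)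
    have h3 : ⟪P x, P (P x)⟫_ℝ ≤ ‖P x‖ * (‖P‖ * ‖P x‖) := by
      calc ⟪P x, P (P x)⟫_ℝ ≤ ‖P x‖ * ‖P (P x)‖ := real_inner_le_norm _ _
        _ ≤ ‖P x‖ * (‖P‖ * ‖P x‖) :=
          mul_le_mul_of_nonneg_left (P.le_opNorm _) (norm_nonneg _)
    have hpx : 0 < ‖P x‖ ^ 2 := pow_pos (norm_pos_iff.2 h) 2
    rw [h1] at h2
    have h4 : ‖P x‖^2 * ‖P x‖^2 ≤ (‖P‖ * ⟪x, P x⟫_ℝ) * ‖P x‖^2 := by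
      nlinarith [mul_le_mul_of_nonneg_left h3 (hp x), h2]
    exact le_of_mul_le_mul_right h4 hpx

lemma expand1_aux (P : H →L[ℝ] H) (hPsym : ∀ x y, ⟪P x, y⟫_ℝ = ⟪x, P y⟫_ℝ)
    (w u : H) (t : ℝ) :
    ⟪w - t • u, P (w - t • u)⟫_ℝ
      = ⟪w, P w⟫_ℝ - 2*t*⟪w, P u⟫_ℝ + t^2*⟪u, P u⟫_ℝ := by
  have hsym : ⟪u, P w⟫_ℝ = ⟪w, P u⟫_ℝ := by rw [real_inner_comm, hPsym]
  simp only [inner_sub_left, inner_sub_right, map_sub, map_smul,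
    real_inner_smul_left, real_inner_smul_right, hsym]
  ring

lemma expand2_aux (P : H →L[ℝ] H) (hPsym : ∀ x y, ⟪P x, y⟫_ℝ = ⟪x, P y⟫_ℝ)
    (u v : H) (t : ℝ) :
    ⟪t • u - u + v, P (u - v)⟫_ℝ
      = (t-1)*⟪u, P u⟫_ℝ + (2-t)*⟪u, P v⟫_ℝ - t*⟪u, P v⟫_ℝ
        - ⟪v, P v⟫_ℝ + t*⟪u, P v⟫_ℝ := by
  have hsym : ⟪v, P u⟫_ℝ = ⟪u, P v⟫_ℝ := by rw [real_inner_comm, hPsym]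
  simp only [inner_add_left, inner_sub_left, inner_sub_right, map_sub,
    real_inner_smul_left, hsym]
  ring

end Aux


/-- Theorem 3.7(ii): convergence rates for the iteration with merely positive `P`.
Here `Q` is the orthogonal projection onto the range of `P` (characterized by
`Q x ∈ ran P` and `x - Q x ⟂ ran P`) and `R = P + Id - Q`, with `‖w‖_R² = ⟪w, R w⟫`. -/
theorem positive_P_rates
    {H : Type*} [NormedAddCommGroup H] [InnerProductSpace ℝ H] [FiniteDimensional ℝ H]
    (P : H →L[ℝ] H)
    (hPsym : ∀ x y, ⟪P x, y⟫_ℝ = ⟪x, P y⟫_ℝ)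
    (hPpos : ∀ x, (0:ℝ) ≤ ⟪P x, x⟫_ℝ)
    (M : H →L[ℝ] H) (hMskew : ∀ x y, ⟪M x, y⟫_ℝ = - ⟪x, M y⟫_ℝ)
    (A : H → Set H) (hA : IsMaxMonotone A)
    (hzer : ∃ w, ∃ u ∈ A w, u + M w = 0)
    (G : H → H) (hGcont : Continuous G)
    (hGres : ∀ z, P z - P (G z) - M (G z) ∈ A (G z))
    (hGuniq : ∀ z w, P z - P w - M w ∈ A w → w = G z)
    (z : ℕ → H) (lam : ℕ → ℝ) (ε : ℝ) (hε : 0 < ε)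
    (hlam : ∀ n, ε ≤ lam n ∧ lam n ≤ 2 - ε)
    (hupd : ∀ n, z (n+1) = z n + lam n • (G (z n) - z n))
    (Q : H → H)
    (hQmem : ∀ x, ∃ v, P v = Q x)
    (hQorth : ∀ x u, ⟪x - Q x, P u⟫_ℝ = 0) :
    ∃ τ > (0:ℝ),
      (∀ zstar : H, (∃ u ∈ A zstar, u + M zstar = 0) → ∀ n : ℕ,
        ‖P (z (n+1)) - P (z n)‖ ^ 2 ≤ ‖P‖ / (τ * ((n : ℝ) + 1)) *
          ⟪Q (z 0) - Q zstar,
            P (Q (z 0) - Q zstar) + (Q (z 0) - Q zstar) - Q (Q (z 0) - Q zstar)⟫_ℝ) ∧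
      Filter.Tendsto (fun n : ℕ => ((n : ℝ) + 1) * ‖P (z (n+1)) - P (z n)‖ ^ 2)
        Filter.atTop (nhds 0) := by
  have hp : ∀ w : H, 0 ≤ ⟪w, P w⟫_ℝ := fun w => by
    have := hPpos w; rwa [real_inner_comm] at this
  have skew0 : ∀ x : H, ⟪x, M x⟫_ℝ = 0 := fun x => by
    have h1 := hMskew x x
    rw [real_inner_comm] at h1
    linarith
  -- the residual sequence
  obtain ⟨a, ha_def⟩ : ∃ a : ℕ → ℝ, ∀ n, a n = ⟪z n - G (z n), P (z n - G (z n))⟫_ℝ :=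
    ⟨_, fun _ => rfl⟩
  have ha_nonneg : ∀ n, 0 ≤ a n := fun n => by rw [ha_def]; exact hp _
  -- z (n+1) - x = (z n - x) - lam n • (z n - G (z n))
  have hstep : ∀ n (x : H), z (n+1) - x = (z n - x) - lam n • (z n - G (z n)) := by
    intro n x
    rw [hupd n]
    module
  -- Fejér monotonicity
  have fejer : ∀ zstar ustar, ustar ∈ A zstar → ustar + M zstar = 0 → ∀ n,
      ⟪z (n+1) - zstar, P (z (n+1) - zstar)⟫_ℝ + ε^2 * a n
        ≤ ⟪z n - zstar, P (z n - zstar)⟫_ℝ := by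
    intro zstar ustar hu hs n
    have hmono := hA.1 (G (z n)) zstar _ ustar (hGres (z n)) hu
    have hustar : ustar = -M zstar := eq_neg_of_add_eq_zero_left hs
    have key1 : 0 ≤ ⟪G (z n) - zstar, P (z n - G (z n))⟫_ℝ := by
      have h2 : (P (z n) - P (G (z n)) - M (G (z n))) - ustar
          = P (z n - G (z n)) - M (G (z n) - zstar) := by
        rw [hustar]; simp only [map_sub]; abel
      rw [h2, inner_sub_right, skew0] at hmono
      linarith
    have key2 : a n ≤ ⟪z n - zstar, P (z n - G (z n))⟫_ℝ := by
      have he : G (z n) - zstar = (z n - zstar) - (z n - G (z n)) := by abel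
      rw [he, inner_sub_left] at key1
      simp only [ha_def]
      linarith
    have hz1 : z (n+1) - zstar = (z n - zstar) - lam n • (z n - G (z n)) := hstep n zstar
    rw [hz1, expand1_aux P hPsym]
    have hl1 := (hlam n).1
    have hl2 := (hlam n).2
    have h8 : ε * ε ≤ lam n * (2 - lam n) := by nlinarith
    have ha := ha_nonneg n
    simp only [ha_def] at ha key2 ⊢
    nlinarith [mul_le_mul_of_nonneg_left key2 (le_trans hε.le hl1),
      mul_nonneg ha (sub_nonneg.2 h8)]
  -- the residuals decrease
  have amono : ∀ n, a (n+1) ≤ a n := by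
    intro n
    have hmono := hA.1 (G (z n)) (G (z (n+1))) _ _ (hGres (z n)) (hGres (z (n+1)))
    set u := z n - G (z n) with hu_def
    set v := z (n+1) - G (z (n+1)) with hv_def
    have he1 : G (z n) - G (z (n+1)) = lam n • u - u + v := by
      have h := hstep n (0:H)
      simp only [sub_zero] at h
      rw [hu_def, hv_def, h]
      abel
    have he2 : (P (z n) - P (G (z n)) - M (G (z n)))
        - (P (z (n+1)) - P (G (z (n+1))) - M (G (z (n+1))))
        = P (u - v) - M (G (z n) - G (z (n+1))) := by
      simp only [hu_def, hv_def, map_sub]; abel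
    rw [he2, inner_sub_right, he1, skew0, expand2_aux P hPsym] at hmono
    have hcs := cs_aux P hPsym hPpos u v
    have hl1 := (hlam n).1
    have hl2 := (hlam n).2
    have hau : 0 ≤ ⟪u, P u⟫_ℝ := hp u
    have hav : 0 ≤ ⟪v, P v⟫_ℝ := hp v
    have hgoal : ⟪v, P v⟫_ℝ ≤ ⟪u, P u⟫_ℝ := by
      rcases le_or_gt ⟪v, P v⟫_ℝ ⟪u, P u⟫_ℝ with h | h
      · exact h
      · exfalso
        set pa := ⟪u, P u⟫_ℝ
        set pb := ⟪v, P v⟫_ℝ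
        set c := ⟪u, P v⟫_ℝ
        have hmono' : pb ≤ (lam n - 1) * pa + (2 - lam n) * c := by linarith
        rcases le_or_gt (pb + (1 - lam n) * pa) 0 with hcase | hcase
        · nlinarith
        · have hsq : (pb + (1 - lam n) * pa)^2 ≤ ((2 - lam n) * c)^2 := by
            nlinarith
          have hsq2 : ((2 - lam n)*c)^2 ≤ (2 - lam n)^2 * (pa * pb) := by
            nlinarith [mul_le_mul_of_nonneg_left hcs (sq_nonneg (2 - lam n))]
          have h1l : (0:ℝ) ≤ 1 - (1 - lam n)^2 := by nlinarith
          nlinarith [hsq, hsq2, mul_pos (sub_pos.2 h) (sub_pos.2 h),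
            mul_nonneg (mul_nonneg hau (sub_pos.2 h).le) h1l]
    simpa only [ha_def, hu_def, hv_def] using hgoal
  have aanti : Antitone a := antitone_nat_of_succ_le amono
  -- summation bound
  have sumbd : ∀ zstar ustar, ustar ∈ A zstar → ustar + M zstar = 0 → ∀ n,
      ε^2 * ∑ k ∈ Finset.range n, a k ≤ ⟪z 0 - zstar, P (z 0 - zstar)⟫_ℝ := by
    intro zstar ustar hu hs n
    have key : ∀ m, ⟪z m - zstar, P (z m - zstar)⟫_ℝ + ε^2 * ∑ k ∈ Finset.range m, a k
        ≤ ⟪z 0 - zstar, P (z 0 - zstar)⟫_ℝ := by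
      intro m
      induction m with
      | zero => simp
      | succ m ih =>
        have hf := fejer zstar ustar hu hs m
        rw [Finset.sum_range_succ]
        linarith
    have := key n
    linarith [hp (z n - zstar)]
  -- P ∘ Q = P
  have hPQ : ∀ x : H, P (Q x) = P x := by
    intro x
    have h : ∀ v : H, ⟪P x - P (Q x), v⟫_ℝ = 0 := by
      intro v
      rw [inner_sub_left, hPsym, hPsym, ← inner_sub_left]
      exact hQorth x v
    have h2 := h (P x - P (Q x))
    rw [inner_self_eq_zero, sub_eq_zero] at h2
    exact h2.symm
  -- the R-norm identity
  have hV0 : ∀ zstar : H, ⟪z 0 - zstar, P (z 0 - zstar)⟫_ℝ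
      = ⟪Q (z 0) - Q zstar,
          P (Q (z 0) - Q zstar) + (Q (z 0) - Q zstar) - Q (Q (z 0) - Q zstar)⟫_ℝ := by
    intro zstar
    obtain ⟨v0, hv0⟩ := hQmem (z 0)
    obtain ⟨v1, hv1⟩ := hQmem zstar
    set d := Q (z 0) - Q zstar with hd_def
    have hdP : P (v0 - v1) = d := by rw [map_sub, hv0, hv1]
    have h1 := hQorth d (v0 - v1)
    rw [hdP, real_inner_comm, inner_sub_right] at h1
    have h2 : P (z 0 - zstar) = P d := by
      rw [hd_def, map_sub, map_sub, hPQ, hPQ]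
    have h3 : ⟪z 0 - zstar, P (z 0 - zstar)⟫_ℝ = ⟪d, P d⟫_ℝ := by
      rw [h2, ← hPsym, h2, hPsym]
    rw [h3, inner_sub_right, inner_add_right]
    linarith
  -- key norm bound
  have keybd : ∀ n, ‖P (z (n+1)) - P (z n)‖^2 ≤ 4 * (‖P‖ * a n) := by
    intro n
    have h0 : z (n+1) - z n = (-(lam n)) • (z n - G (z n)) := by
      rw [hstep n (z n)]; module
    have h1 : P (z (n+1)) - P (z n) = (-(lam n)) • P (z n - G (z n)) := by
      rw [← map_sub, h0, map_smul]
    have hl1 := (hlam n).1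
    have hl2 := (hlam n).2
    have hlpos : 0 < lam n := lt_of_lt_of_le hε hl1
    rw [h1, norm_smul, Real.norm_eq_abs, abs_neg, abs_of_pos hlpos, mul_pow]
    have hop := opnorm_aux P hPsym hPpos (z n - G (z n))
    have hnp : (0:ℝ) ≤ ‖P‖ * a n := mul_nonneg (norm_nonneg _) (ha_nonneg n)
    have hl4 : lam n ^ 2 ≤ 4 := by nlinarith
    have t1 := mul_le_mul_of_nonneg_left hop (sq_nonneg (lam n))
    have t2 := mul_le_mul_of_nonneg_right hl4 hnp
    simp only [ha_def] at t1 t2 ⊢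
    linarith
  refine ⟨ε^2/4, by positivity, ?_, ?_⟩
  · -- the rate bound
    rintro zstar ⟨ustar, hu, hs⟩ n
    have hsum' : ε^2 * ∑ k ∈ Finset.range (n+1), a k
        ≤ ⟪Q (z 0) - Q zstar,
            P (Q (z 0) - Q zstar) + (Q (z 0) - Q zstar) - Q (Q (z 0) - Q zstar)⟫_ℝ := by
      rw [← hV0 zstar]
      exact sumbd zstar ustar hu hs (n+1)
    set E := ⟪Q (z 0) - Q zstar,
        P (Q (z 0) - Q zstar) + (Q (z 0) - Q zstar) - Q (Q (z 0) - Q zstar)⟫_ℝ with hE_def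
    have hmin : ((n:ℝ)+1) * a n ≤ ∑ k ∈ Finset.range (n+1), a k := by
      have h := Finset.card_nsmul_le_sum (Finset.range (n+1)) a (a n)
        (fun k hk => aanti (Nat.le_of_lt_succ (Finset.mem_range.1 hk)))
      simp only [Finset.card_range, nsmul_eq_mul] at h
      push_cast at h ⊢
      linarith
    have hτpos : (0:ℝ) < ε^2/4 * ((n:ℝ)+1) := by positivity
    rw [div_mul_eq_mul_div, le_div_iff₀ hτpos]
    have t1 : ε^2 * (((n:ℝ)+1) * a n) ≤ ε^2 * ∑ k ∈ Finset.range (n+1), a k :=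
      mul_le_mul_of_nonneg_left hmin (by positivity)
    have t2 : ε^2 * (((n:ℝ)+1) * a n) ≤ E := t1.trans hsum'
    have t3 : ‖P‖ * (ε^2 * (((n:ℝ)+1) * a n)) ≤ ‖P‖ * E :=
      mul_le_mul_of_nonneg_left t2 (norm_nonneg _)
    have t4 : ‖P (z (n+1)) - P (z n)‖^2 * (ε^2/4 * ((n:ℝ)+1))
        ≤ (4*(‖P‖ * a n)) * (ε^2/4 * ((n:ℝ)+1)) :=
      mul_le_mul_of_nonneg_right (keybd n) hτpos.le
    have t5 : (4*(‖P‖ * a n)) * (ε^2/4 * ((n:ℝ)+1))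
        = ‖P‖ * (ε^2 * (((n:ℝ)+1) * a n)) := by ring
    linarith
  · -- the o(1/n) statement
    obtain ⟨zstar0, ustar0, hu0, hs0⟩ := hzer
    have hsummable : Summable a := by
      refine summable_of_sum_range_le (c := ⟪z 0 - zstar0, P (z 0 - zstar0)⟫_ℝ / ε^2) ha_nonneg (fun n => ?_)
      have h := sumbd zstar0 ustar0 hu0 hs0 n
      rw [← le_div_iff₀' (by positivity : (0:ℝ) < ε^2)] at h
      exact h
    have hT := tendsto_sum_nat_add a
    have hdiv : Tendsto (fun n : ℕ => n / 2) atTop atTop :=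
      tendsto_atTop_atTop.2 fun b => ⟨2*b, fun n hn => by omega⟩
    have bound : ∀ n : ℕ, ((n:ℝ)+1) * a n ≤ 2 * ∑' k, a (k + n/2) := by
      intro n
      have hsum2 : Summable (fun k => a (k + n/2)) := (summable_nat_add_iff _).2 hsummable
      have h1 : ∑ k ∈ Finset.range (n - n/2 + 1), a (k + n/2) ≤ ∑' k, a (k + n/2) :=
        Summable.sum_le_tsum _ (fun k _ => ha_nonneg _) hsum2
      have h2 : ((n - n/2 + 1 : ℕ):ℝ) * a n
          ≤ ∑ k ∈ Finset.range (n - n/2 + 1), a (k + n/2) := by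
        have h := Finset.card_nsmul_le_sum (Finset.range (n - n/2 + 1))
          (fun k => a (k + n/2)) (a n)
          (fun k hk => aanti (by have := Finset.mem_range.1 hk; omega))
        simpa only [Finset.card_range, nsmul_eq_mul] using h
      have h3 : ((n:ℝ)+1) ≤ 2*((n - n/2 + 1 : ℕ):ℝ) := by
        have h4 : (n + 1 : ℕ) ≤ 2*(n - n/2 + 1) := by omega
        push_cast
        exact_mod_cast h4
      nlinarith [ha_nonneg n, h1, h2, h3]
    refine squeeze_zero (fun n => by positivity)
      (g := fun n => (8*‖P‖) * ∑' k, a (k + n/2)) (fun n => ?_) ?_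
    · have b1 := mul_le_mul_of_nonneg_left (keybd n)
        (show (0:ℝ) ≤ (n:ℝ)+1 by positivity)
      have b2 := mul_le_mul_of_nonneg_left (bound n)
        (show (0:ℝ) ≤ 4*‖P‖ by positivity)
      nlinarith [b1, b2]
    · have := (hT.comp hdiv).const_mul (8*‖P‖)
      simpa using this
end
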